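/- arXiv:1608.01254 — 8 statements merged into one kernel-verified Lean document; each statement's English description precedes it below -/
import Mathlib

section
/- A countable injection structure (α, f) is weakly ultrahomogeneous if and only if it has only finitely many ω-orbits, i.e., the set of elements of α not in the range of f is finite. -/
/-- The closure of a set `s` under the function `f`: all iterated images of elements of `s`. -/
def clInj {α : Type*} (f : α → α) (s : Set α) : Set α :=
  {y | ∃ x ∈ s, ∃ n : ℕ, f^[n] x = y}

/-- `S` is an exceptional set for the injection structure `(α, f)`: `S` is finite, and for all
finite sets `s, t ⊆ α` whose closures contain `S`, every bijection `φ : cl(s) → cl(t)` commuting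
with `f` and fixing each element of `S` extends to an automorphism of `(α, f)`. -/
def IsExceptionalInj {α : Type*} (f : α → α) (S : Set α) : Prop :=
  S.Finite ∧
    ∀ s t : Set α, s.Finite → t.Finite → S ⊆ clInj f s → S ⊆ clInj f t →
      ∀ φ : ↥(clInj f s) ≃ ↥(clInj f t),
        (∀ x y : ↥(clInj f s), (y : α) = f x → ((φ y : ↥(clInj f t)) : α) = f (φ x)) →
        (∀ x : ↥(clInj f s), (x : α) ∈ S → ((φ x : ↥(clInj f t)) : α) = x) →
        ∃ g : α ≃ α, (∀ a : α, g (f a) = f (g a)) ∧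
          ∀ x : ↥(clInj f s), g (x : α) = ((φ x : ↥(clInj f t)) : α)

/-- An injection structure is weakly ultrahomogeneous if it has an exceptional set. -/
def WeaklyUltrahomogeneousInj {α : Type*} (f : α → α) : Prop :=
  ∃ S : Set α, IsExceptionalInj f S

namespace InjStructAux

open Function

variable {α : Type*}

lemma subset_clInj (f : α → α) (s : Set α) : s ⊆ clInj f s :=
  fun x hx => ⟨x, hx, 0, rfl⟩

lemma clInj_mono (f : α → α) {s t : Set α} (h : s ⊆ t) : clInj f s ⊆ clInj f t := by
  rintro y ⟨x, hx, n, rfl⟩; exact ⟨x, h hx, n, rfl⟩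

lemma iterate_mem_clInj {f : α → α} {s : Set α} {x : α} (hx : x ∈ clInj f s) (n : ℕ) :
    f^[n] x ∈ clInj f s := by
  obtain ⟨x₀, hx₀, m, rfl⟩ := hx
  exact ⟨x₀, hx₀, n + m, (Function.iterate_add_apply f n m x₀)⟩

lemma mem_clInj_self {f : α → α} {s : Set α} {x : α} (hx : x ∈ s) : x ∈ clInj f s :=
  subset_clInj f s hx

lemma f_mem_clInj {f : α → α} {s : Set α} {x : α} (hx : x ∈ clInj f s) : f x ∈ clInj f s := by
  have := iterate_mem_clInj hx 1
  simpa using this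

/-- the orbit relation -/
def OrbRel (f : α → α) (x y : α) : Prop := ∃ m n : ℕ, f^[m] x = f^[n] y

lemma OrbRel.refl (f : α → α) (x : α) : OrbRel f x x := ⟨0, 0, rfl⟩

lemma OrbRel.symm {f : α → α} {x y : α} (h : OrbRel f x y) : OrbRel f y x := by
  obtain ⟨m, n, h⟩ := h; exact ⟨n, m, h.symm⟩

lemma OrbRel.trans {f : α → α} {x y z : α} (h₁ : OrbRel f x y) (h₂ : OrbRel f y z) :
    OrbRel f x z := by
  obtain ⟨m, n, e₁⟩ := h₁
  obtain ⟨p, q, e₂⟩ := h₂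
  refine ⟨p + m, n + q, ?_⟩
  rw [Function.iterate_add_apply, e₁, ← Function.iterate_add_apply, Nat.add_comm p n,
    Function.iterate_add_apply, e₂, ← Function.iterate_add_apply]

def orbSetoid (f : α → α) : Setoid α :=
  ⟨OrbRel f, ⟨OrbRel.refl f, OrbRel.symm, OrbRel.trans⟩⟩

/-- periodicity transfers along the orbit relation -/
lemma isPeriodicPt_of_orbRel {f : α → α} (hf : Function.Injective f) {x y : α} {k : ℕ}
    (h : OrbRel f x y) (hk : IsPeriodicPt f k y) : IsPeriodicPt f k x := by
  obtain ⟨m, n, e⟩ := h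
  have h1 : f^[m] (f^[k] x) = f^[m] x := by
    calc f^[m] (f^[k] x) = f^[k] (f^[m] x) := by
          rw [← Function.iterate_add_apply, Nat.add_comm m k, Function.iterate_add_apply]
      _ = f^[k] (f^[n] y) := by rw [e]
      _ = f^[n] (f^[k] y) := by
          rw [← Function.iterate_add_apply, Nat.add_comm k n, Function.iterate_add_apply]
      _ = f^[n] y := by rw [hk.eq]
      _ = f^[m] x := e.symm
  exact (hf.iterate m) h1

lemma minimalPeriod_eq_of_orbRel {f : α → α} (hf : Function.Injective f) {x y : α}
    (h : OrbRel f x y) : minimalPeriod f x = minimalPeriod f y := by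
  apply Nat.dvd_antisymm
  · exact (isPeriodicPt_of_orbRel hf h (isPeriodicPt_minimalPeriod f y)).minimalPeriod_dvd
  · exact (isPeriodicPt_of_orbRel hf h.symm (isPeriodicPt_minimalPeriod f x)).minimalPeriod_dvd

lemma out_orbRel (f : α → α) (x : α) : OrbRel f ((Quotient.mk (orbSetoid f) x).out) x := by
  have h : Quotient.mk (orbSetoid f) ((Quotient.mk (orbSetoid f) x).out)
      = Quotient.mk (orbSetoid f) x := Quotient.out_eq _
  exact Quotient.exact h

lemma isPeriodicPt_of_iterate_eq {f : α → α} (hf : Function.Injective f) {z : α} {a b : ℕ}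
    (hab : a ≤ b) (h : f^[a] z = f^[b] z) : IsPeriodicPt f (b - a) z := by
  have h2 : f^[a] (f^[b - a] z) = f^[a] z := by
    rw [← Function.iterate_add_apply, Nat.add_sub_cancel' hab, ← h]
  exact hf.iterate a h2

lemma iterate_add_of_dvd {f : α → α} {y : α} {k c : ℕ} (hk : IsPeriodicPt f k y)
    (hc : k ∣ c) (a : ℕ) : f^[a + c] y = f^[a] y := by
  rw [Function.iterate_add_apply]
  obtain ⟨t, rfl⟩ := hc
  rw [(hk.mul_const t).eq]

lemma iter_closed {f : α → α} {A : Set α} (hA : ∀ x ∈ A, f x ∈ A) {x : α} (hx : x ∈ A)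
    (n : ℕ) : f^[n] x ∈ A := by
  induction n with
  | zero => simpa
  | succ n ih => rw [Function.iterate_succ_apply']; exact hA _ ih

lemma iter_comm (f : α → α) (m n : ℕ) (z : α) : f^[m] (f^[n] z) = f^[n] (f^[m] z) := by
  rw [← Function.iterate_add_apply, Nat.add_comm, Function.iterate_add_apply]

/-- The one-sided extension lemma. -/
lemma half {f : α → α} (hf : Function.Injective f) {A : Set α}
    (hA : ∀ x ∈ A, f x ∈ A)
    (hNA : ∀ x : α, x ∉ Set.range f → x ∈ A)
    (Φ : ∀ x : α, x ∈ A → α)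
    (hΦf : ∀ x (hx : x ∈ A), Φ (f x) (hA x hx) = f (Φ x hx))
    (hΦinj : ∀ x hx y hy, Φ x hx = Φ y hy → x = y)
    (hΦN : ∀ x hx, x ∉ Set.range f → Φ x hx = x) :
    ∃ G : α → α, ∀ x n (h : f^[n] x ∈ A), f^[n] (G x) = Φ (f^[n] x) h := by
  classical
  have Φcongr : ∀ (x : α) hx (y : α) hy, x = y → Φ x hx = Φ y hy := by
    rintro x hx y hy rfl; rfl
  have hΦiter : ∀ (x : α) (hx : x ∈ A) (n : ℕ),
      Φ (f^[n] x) (iter_closed hA hx n) = f^[n] (Φ x hx) := by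
    intro x hx n
    induction n with
    | zero => rfl
    | succ n ih =>
      calc Φ (f^[n + 1] x) (iter_closed hA hx (n + 1))
          = Φ (f (f^[n] x)) (hA _ (iter_closed hA hx n)) :=
            Φcongr _ _ _ _ (Function.iterate_succ_apply' f n x)
        _ = f (Φ (f^[n] x) (iter_closed hA hx n)) := hΦf _ _
        _ = f (f^[n] (Φ x hx)) := by rw [ih]
        _ = f^[n + 1] (Φ x hx) := (Function.iterate_succ_apply' f n (Φ x hx)).symm
  have E : ∀ (n : ℕ) (x : α), f^[n] x ∈ A →
      ∃ y, ∃ m, ∃ (h : f^[m] x ∈ A), f^[m] y = Φ (f^[m] x) h := by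
    intro n
    induction n with
    | zero => intro x hx; exact ⟨Φ x hx, 0, hx, rfl⟩
    | succ n ih =>
      intro x hx
      have hx' : f^[n] (f x) ∈ A := by
        rw [← Function.iterate_succ_apply]; exact hx
      obtain ⟨y', m, hm, hy'⟩ := ih (f x) hx'
      by_cases hr : y' ∈ Set.range f
      · obtain ⟨y, rfl⟩ := hr
        have hmem : f^[m + 1] x ∈ A := by
          rw [Function.iterate_succ_apply]; exact hm
        refine ⟨y, m + 1, hmem, ?_⟩
        calc f^[m + 1] y = f^[m] (f y) := Function.iterate_succ_apply f m y
          _ = Φ (f^[m] (f x)) hm := hy'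
          _ = Φ (f^[m + 1] x) hmem := Φcongr _ _ _ _ (Function.iterate_succ_apply f m x).symm
      · exfalso
        have hy'A : y' ∈ A := hNA y' hr
        have e1 : Φ (f^[m] y') (iter_closed hA hy'A m) = f^[m] (Φ y' hy'A) := hΦiter y' hy'A m
        have e2 : Φ y' hy'A = y' := hΦN y' hy'A hr
        have e3 : Φ (f^[m] y') (iter_closed hA hy'A m) = Φ (f^[m] (f x)) hm := by
          rw [e1, e2, hy']
        have e4 : f^[m] y' = f^[m] (f x) := hΦinj _ _ _ _ e3
        exact hr ⟨x, (hf.iterate m e4).symm⟩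
  have E' : ∀ x : α, (∃ n, f^[n] x ∈ A) →
      ∃ y, ∃ m, ∃ (h : f^[m] x ∈ A), f^[m] y = Φ (f^[m] x) h := by
    rintro x ⟨n, hn⟩; exact E n x hn
  choose G₀ hG₀ using E'
  refine ⟨fun x => if hx : ∃ n, f^[n] x ∈ A then G₀ x hx else x, ?_⟩
  intro x n h
  have hx : ∃ n, f^[n] x ∈ A := ⟨n, h⟩
  simp only [dif_pos hx]
  obtain ⟨m, hm, e⟩ := hG₀ x hx
  apply hf.iterate m
  calc f^[m] (f^[n] (G₀ x hx)) = f^[n] (f^[m] (G₀ x hx)) := iter_comm f m n _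
    _ = f^[n] (Φ (f^[m] x) hm) := by rw [e]
    _ = Φ (f^[n] (f^[m] x)) (iter_closed hA hm n) := (hΦiter (f^[m] x) hm n).symm
    _ = Φ (f^[m] (f^[n] x)) (iter_closed hA h m) := Φcongr _ _ _ _ (iter_comm f n m x)
    _ = f^[m] (Φ (f^[n] x) h) := hΦiter (f^[n] x) h m

/-- matching two orbits with the same minimal period -/
lemma orb_match {f : α → α} (hf : Function.Injective f) {x₀ y₀ : α}
    (hfull : ∀ m, ∃ z, f^[m] z = y₀)
    (hmp : Function.minimalPeriod f x₀ = Function.minimalPeriod f y₀) :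
    ∀ x, OrbRel f x x₀ → ∃! w, ∃ m n : ℕ, f^[m] x = f^[n] x₀ ∧ f^[m] w = f^[n] y₀ := by
  intro x hx
  obtain ⟨m, n, e⟩ := hx
  have hex : ∃ w, f^[m] w = f^[n] y₀ := by
    rcases le_total m n with h | h
    · exact ⟨f^[n - m] y₀, by rw [← Function.iterate_add_apply, Nat.add_sub_cancel' h]⟩
    · obtain ⟨z, hz⟩ := hfull (m - n)
      refine ⟨z, ?_⟩
      rw [show m = n + (m - n) from (Nat.add_sub_cancel' h).symm,
        Function.iterate_add_apply, hz]
  obtain ⟨w, hw⟩ := hex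
  refine ⟨w, ⟨m, n, e, hw⟩, ?_⟩
  rintro w' ⟨m', n', e', hw'⟩
  have l1 : f^[m' + m] x = f^[m' + n] x₀ := by
    rw [Function.iterate_add_apply, e, ← Function.iterate_add_apply]
  have l2 : f^[m + m'] x = f^[m + n'] x₀ := by
    rw [Function.iterate_add_apply, e', ← Function.iterate_add_apply]
  have E1 : f^[m' + n] x₀ = f^[m + n'] x₀ := by
    rw [← l1, Nat.add_comm m' m, l2]
  have E2 : f^[m' + n] y₀ = f^[m + n'] y₀ := by
    rcases le_total (m' + n) (m + n') with h | h
    · have hper := isPeriodicPt_of_iterate_eq hf h E1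
      have hd : Function.minimalPeriod f y₀ ∣ (m + n' - (m' + n)) :=
        hmp ▸ hper.minimalPeriod_dvd
      have h3 := iterate_add_of_dvd (Function.isPeriodicPt_minimalPeriod f y₀) hd (m' + n)
      rw [Nat.add_sub_cancel' h] at h3
      exact h3.symm
    · have hper := isPeriodicPt_of_iterate_eq hf h E1.symm
      have hd : Function.minimalPeriod f y₀ ∣ (m' + n - (m + n')) :=
        hmp ▸ hper.minimalPeriod_dvd
      have h3 := iterate_add_of_dvd (Function.isPeriodicPt_minimalPeriod f y₀) hd (m + n')
      rw [Nat.add_sub_cancel' h] at h3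
      exact h3
  apply hf.iterate (m + m')
  calc f^[m + m'] w' = f^[m] (f^[m'] w') := Function.iterate_add_apply f m m' w'
    _ = f^[m] (f^[n'] y₀) := by rw [hw']
    _ = f^[m + n'] y₀ := (Function.iterate_add_apply f m n' y₀).symm
    _ = f^[m' + n] y₀ := E2.symm
    _ = f^[m'] (f^[n] y₀) := Function.iterate_add_apply f m' n y₀
    _ = f^[m'] (f^[m] w) := by rw [hw]
    _ = f^[m' + m] w := (Function.iterate_add_apply f m' m w).symm
    _ = f^[m + m'] w := by rw [Nat.add_comm]


open Function

lemma iter_swap (f : α → α) (n : ℕ) (z : α) : f (f^[n] z) = f^[n] (f z) :=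
  (Function.iterate_succ_apply' f n z).symm.trans (Function.iterate_succ_apply f n z)

theorem ext_core {α : Type*} (f : α → α) (hf : Function.Injective f)
    (A B : Set α)
    (hA : ∀ x ∈ A, f x ∈ A) (hB : ∀ y ∈ B, f y ∈ B)
    (hNA : ∀ x : α, x ∉ Set.range f → x ∈ A)
    (hNB : ∀ x : α, x ∉ Set.range f → x ∈ B)
    (hUfin : {q : Quotient (orbSetoid f) | ∃ n, f^[n] q.out ∈ A}.Finite)
    (hVfin : {q : Quotient (orbSetoid f) | ∃ n, f^[n] q.out ∈ B}.Finite)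
    (φ : ↥A ≃ ↥B)
    (hcomm : ∀ x y : ↥A, (y : α) = f x → ((φ y : ↥B) : α) = f (φ x))
    (hfix : ∀ x : ↥A, (x : α) ∉ Set.range f → ((φ x : ↥B) : α) = x) :
    ∃ g : α ≃ α, (∀ a : α, g (f a) = f (g a)) ∧
      ∀ x : ↥A, g (x : α) = ((φ x : ↥B) : α) := by
  classical
  set Φ : ∀ x : α, x ∈ A → α := fun x hx => ((φ ⟨x, hx⟩ : ↥B) : α) with hΦ_def
  set Ψ : ∀ y : α, y ∈ B → α := fun y hy => ((φ.symm ⟨y, hy⟩ : ↥A) : α) with hΨ_def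
  have hΦB : ∀ x hx, Φ x hx ∈ B := fun x hx => (φ ⟨x, hx⟩).2
  have hΨA : ∀ y hy, Ψ y hy ∈ A := fun y hy => (φ.symm ⟨y, hy⟩).2
  have hΦf : ∀ x (hx : x ∈ A), Φ (f x) (hA x hx) = f (Φ x hx) := fun x hx =>
    hcomm ⟨x, hx⟩ ⟨f x, hA x hx⟩ rfl
  have hΦinj : ∀ x hx y hy, Φ x hx = Φ y hy → x = y := by
    intro x hx y hy h
    have h2 := φ.injective (Subtype.ext h)
    exact congrArg Subtype.val h2
  have hΦN : ∀ x hx, x ∉ Set.range f → Φ x hx = x := fun x hx hr => hfix ⟨x, hx⟩ hr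
  have hΨf : ∀ y (hy : y ∈ B), Ψ (f y) (hB y hy) = f (Ψ y hy) := by
    intro y hy
    have h2 : ((φ ⟨f ((φ.symm ⟨y, hy⟩ : ↥A) : α), hA _ (φ.symm ⟨y, hy⟩).2⟩ : ↥B) : α)
        = f ((φ (φ.symm ⟨y, hy⟩) : ↥B) : α) := hcomm _ _ rfl
    rw [Equiv.apply_symm_apply] at h2
    have h1 : φ ⟨f ((φ.symm ⟨y, hy⟩ : ↥A) : α), hA _ (φ.symm ⟨y, hy⟩).2⟩
        = ⟨f y, hB y hy⟩ := Subtype.ext h2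
    have h3 := congrArg φ.symm h1
    rw [Equiv.symm_apply_apply] at h3
    show ((φ.symm ⟨f y, hB y hy⟩ : ↥A) : α) = f ((φ.symm ⟨y, hy⟩ : ↥A) : α)
    rw [← h3]
  have hΨinj : ∀ y hy y' hy', Ψ y hy = Ψ y' hy' → y = y' := by
    intro y hy y' hy' h
    have h2 := φ.symm.injective (Subtype.ext h)
    exact congrArg Subtype.val h2
  have hΨN : ∀ y hy, y ∉ Set.range f → Ψ y hy = y := by
    intro y hy hr
    have yA : y ∈ A := hNA y hr
    have h1 : φ ⟨y, yA⟩ = ⟨y, hy⟩ := Subtype.ext (hΦN y yA hr)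
    show ((φ.symm ⟨y, hy⟩ : ↥A) : α) = y
    rw [← h1, Equiv.symm_apply_apply]
  obtain ⟨G, hG⟩ := half hf hA hNA Φ hΦf hΦinj hΦN
  obtain ⟨G', hG'⟩ := half hf hB hNB Ψ hΨf hΨinj hΨN
  set Af := {x : α | ∃ n, f^[n] x ∈ A} with hAf_def
  set Bf := {x : α | ∃ n, f^[n] x ∈ B} with hBf_def
  have hAff : ∀ x ∈ Af, f x ∈ Af := by
    rintro x ⟨n, h⟩
    refine ⟨n, ?_⟩
    rw [← Function.iterate_succ_apply, Function.iterate_succ_apply']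
    exact hA _ h
  have hBff : ∀ x ∈ Bf, f x ∈ Bf := by
    rintro x ⟨n, h⟩
    refine ⟨n, ?_⟩
    rw [← Function.iterate_succ_apply, Function.iterate_succ_apply']
    exact hB _ h
  have hAfc : ∀ x : α, x ∉ Af → f x ∉ Af := by
    rintro x hx ⟨n, h⟩
    exact hx ⟨n + 1, by rw [Function.iterate_succ_apply]; exact h⟩
  have hBfc : ∀ x : α, x ∉ Bf → f x ∉ Bf := by
    rintro x hx ⟨n, h⟩
    exact hx ⟨n + 1, by rw [Function.iterate_succ_apply]; exact h⟩
  have hAfrel : ∀ x y : α, OrbRel f x y → y ∈ Af → x ∈ Af := by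
    rintro x y ⟨m, n, e⟩ ⟨p, hp⟩
    refine ⟨p + m, ?_⟩
    have h1 : f^[p + m] x = f^[p] (f^[n] y) := by
      rw [Function.iterate_add_apply, e]
    rw [h1, ← Function.iterate_add_apply, Nat.add_comm p n, Function.iterate_add_apply]
    exact iter_closed hA hp n
  have hBfrel : ∀ x y : α, OrbRel f x y → y ∈ Bf → x ∈ Bf := by
    rintro x y ⟨m, n, e⟩ ⟨p, hp⟩
    refine ⟨p + m, ?_⟩
    have h1 : f^[p + m] x = f^[p] (f^[n] y) := by
      rw [Function.iterate_add_apply, e]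
    rw [h1, ← Function.iterate_add_apply, Nat.add_comm p n, Function.iterate_add_apply]
    exact iter_closed hB hp n
  have Φcongr : ∀ (x : α) hx (y : α) hy, x = y → Φ x hx = Φ y hy := by
    rintro x hx y hy rfl; rfl
  have Ψcongr : ∀ (x : α) hx (y : α) hy, x = y → Ψ x hx = Ψ y hy := by
    rintro x hx y hy rfl; rfl
  have hGB : ∀ (x : α) (n : ℕ) (h : f^[n] x ∈ A), f^[n] (G x) ∈ B := by
    intro x n h; rw [hG x n h]; exact hΦB _ _
  have hG'A : ∀ (y : α) (n : ℕ) (h : f^[n] y ∈ B), f^[n] (G' y) ∈ A := by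
    intro y n h; rw [hG' y n h]; exact hΨA _ _
  have hGBf : ∀ x : α, x ∈ Af → G x ∈ Bf := by
    rintro x ⟨n, h⟩; exact ⟨n, hGB x n h⟩
  have hG'Af : ∀ y : α, y ∈ Bf → G' y ∈ Af := by
    rintro y ⟨n, h⟩; exact ⟨n, hG'A y n h⟩
  have hGf : ∀ x : α, x ∈ Af → G (f x) = f (G x) := by
    rintro x ⟨n, h⟩
    have h1 : f^[n + 1] x ∈ A := by rw [Function.iterate_succ_apply']; exact hA _ h
    have h' : f^[n] (f x) ∈ A := by rw [← Function.iterate_succ_apply]; exact h1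
    apply hf.iterate n
    calc f^[n] (G (f x)) = Φ (f^[n] (f x)) h' := hG (f x) n h'
      _ = Φ (f (f^[n] x)) (hA _ h) := Φcongr _ _ _ _
          (by rw [← Function.iterate_succ_apply, Function.iterate_succ_apply'])
      _ = f (Φ (f^[n] x) h) := hΦf _ h
      _ = f (f^[n] (G x)) := by rw [hG x n h]
      _ = f^[n] (f (G x)) := iter_swap f n (G x)
  have hG'f : ∀ y : α, y ∈ Bf → G' (f y) = f (G' y) := by
    rintro y ⟨n, h⟩
    have h1 : f^[n + 1] y ∈ B := by rw [Function.iterate_succ_apply']; exact hB _ h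
    have h' : f^[n] (f y) ∈ B := by rw [← Function.iterate_succ_apply]; exact h1
    apply hf.iterate n
    calc f^[n] (G' (f y)) = Ψ (f^[n] (f y)) h' := hG' (f y) n h'
      _ = Ψ (f (f^[n] y)) (hB _ h) := Ψcongr _ _ _ _
          (by rw [← Function.iterate_succ_apply, Function.iterate_succ_apply'])
      _ = f (Ψ (f^[n] y) h) := hΨf _ h
      _ = f (f^[n] (G' y)) := by rw [hG' y n h]
      _ = f^[n] (f (G' y)) := iter_swap f n (G' y)
  have hΨΦ : ∀ (z : α) (hz : z ∈ A), Ψ (Φ z hz) (hΦB z hz) = z := by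
    intro z hz
    show ((φ.symm ⟨((φ ⟨z, hz⟩ : ↥B) : α), hΦB z hz⟩ : ↥A) : α) = z
    have h1 : (⟨((φ ⟨z, hz⟩ : ↥B) : α), hΦB z hz⟩ : ↥B) = φ ⟨z, hz⟩ := Subtype.ext rfl
    rw [h1, Equiv.symm_apply_apply]
  have hΦΨ : ∀ (z : α) (hz : z ∈ B), Φ (Ψ z hz) (hΨA z hz) = z := by
    intro z hz
    show ((φ ⟨((φ.symm ⟨z, hz⟩ : ↥A) : α), hΨA z hz⟩ : ↥B) : α) = z
    have h1 : (⟨((φ.symm ⟨z, hz⟩ : ↥A) : α), hΨA z hz⟩ : ↥A) = φ.symm ⟨z, hz⟩ :=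
      Subtype.ext rfl
    rw [h1, Equiv.apply_symm_apply]
  have hG'G : ∀ x : α, x ∈ Af → G' (G x) = x := by
    rintro x ⟨n, h⟩
    have hB' : f^[n] (G x) ∈ B := hGB x n h
    apply hf.iterate n
    calc f^[n] (G' (G x)) = Ψ (f^[n] (G x)) hB' := hG' (G x) n hB'
      _ = Ψ (Φ (f^[n] x) h) (hΦB _ _) := Ψcongr _ _ _ _ (hG x n h)
      _ = f^[n] x := hΨΦ _ h
  have hGG' : ∀ y : α, y ∈ Bf → G (G' y) = y := by
    rintro y ⟨n, h⟩
    have hA' : f^[n] (G' y) ∈ A := hG'A y n h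
    apply hf.iterate n
    calc f^[n] (G (G' y)) = Φ (f^[n] (G' y)) hA' := hG (G' y) n hA'
      _ = Φ (Ψ (f^[n] y) h) (hΨA _ _) := Φcongr _ _ _ _ (hG' y n h)
      _ = f^[n] y := hΦΨ _ h
  have hGiter : ∀ x : α, x ∈ Af → ∀ k, f^[k] (G x) = G (f^[k] x) := by
    intro x hx k
    induction k with
    | zero => rfl
    | succ k ih =>
      calc f^[k + 1] (G x) = f (f^[k] (G x)) := Function.iterate_succ_apply' f k (G x)
        _ = f (G (f^[k] x)) := by rw [ih]
        _ = G (f (f^[k] x)) := (hGf _ (iter_closed hAff hx k)).symm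
        _ = G (f^[k + 1] x) := congrArg G (Function.iterate_succ_apply' f k x).symm
  have hG'iter : ∀ y : α, y ∈ Bf → ∀ k, f^[k] (G' y) = G' (f^[k] y) := by
    intro y hy k
    induction k with
    | zero => rfl
    | succ k ih =>
      calc f^[k + 1] (G' y) = f (f^[k] (G' y)) := Function.iterate_succ_apply' f k (G' y)
        _ = f (G' (f^[k] y)) := by rw [ih]
        _ = G' (f (f^[k] y)) := (hG'f _ (iter_closed hBff hy k)).symm
        _ = G' (f^[k + 1] y) := congrArg G' (Function.iterate_succ_apply' f k y).symm
  have hmpG : ∀ x : α, x ∈ Af →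
      Function.minimalPeriod f (G x) = Function.minimalPeriod f x := by
    intro x hx
    apply Nat.dvd_antisymm
    · have h1 : IsPeriodicPt f (Function.minimalPeriod f x) (G x) := by
        show f^[Function.minimalPeriod f x] (G x) = G x
        rw [hGiter x hx _, Function.iterate_minimalPeriod]
      exact h1.minimalPeriod_dvd
    · have h2 : IsPeriodicPt f (Function.minimalPeriod f (G x)) x := by
        show f^[Function.minimalPeriod f (G x)] x = x
        have e1 : f^[Function.minimalPeriod f (G x)] (G' (G x)) = G' (G x) := by
          rw [hG'iter (G x) (hGBf x hx), Function.iterate_minimalPeriod]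
        rwa [hG'G x hx] at e1
      exact h2.minimalPeriod_dvd
  have hmpG' : ∀ y : α, y ∈ Bf →
      Function.minimalPeriod f (G' y) = Function.minimalPeriod f y := by
    intro y hy
    apply Nat.dvd_antisymm
    · have h1 : IsPeriodicPt f (Function.minimalPeriod f y) (G' y) := by
        show f^[Function.minimalPeriod f y] (G' y) = G' y
        rw [hG'iter y hy _, Function.iterate_minimalPeriod]
      exact h1.minimalPeriod_dvd
    · have h2 : IsPeriodicPt f (Function.minimalPeriod f (G' y)) y := by
        show f^[Function.minimalPeriod f (G' y)] y = y
        have e1 : f^[Function.minimalPeriod f (G' y)] (G (G' y)) = G (G' y) := by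
          rw [hGiter (G' y) (hG'Af y hy), Function.iterate_minimalPeriod]
        rwa [hGG' y hy] at e1
      exact h2.minimalPeriod_dvd
  have hGrel : ∀ x y : α, x ∈ Af → y ∈ Af → OrbRel f x y → OrbRel f (G x) (G y) := by
    rintro x y hx hy ⟨m, n, e⟩
    exact ⟨m, n, by rw [hGiter x hx m, hGiter y hy n, e]⟩
  have hG'rel : ∀ x y : α, x ∈ Bf → y ∈ Bf → OrbRel f x y → OrbRel f (G' x) (G' y) := by
    rintro x y hx hy ⟨m, n, e⟩
    exact ⟨m, n, by rw [hG'iter x hx m, hG'iter y hy n, e]⟩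
  -- quotient by the orbit relation
  set Q := Quotient (orbSetoid f) with hQ_def
  set mkq : α → Q := Quotient.mk (orbSetoid f) with hmk_def
  have hmk_eq : ∀ x y : α, OrbRel f x y → mkq x = mkq y := fun x y h => Quotient.sound h
  have hout : ∀ x : α, OrbRel f (mkq x).out x := fun x => out_orbRel f x
  have hout_eq : ∀ q : Q, mkq q.out = q := fun q => Quotient.out_eq q
  set inA' : Q → Prop := fun q => q.out ∈ Af with hinA'_def
  set inB' : Q → Prop := fun q => q.out ∈ Bf with hinB'_def
  have hinA'mk : ∀ x : α, inA' (mkq x) ↔ x ∈ Af := fun x =>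
    ⟨fun h => hAfrel x _ (OrbRel.symm (hout x)) h, fun h => hAfrel _ x (hout x) h⟩
  have hinB'mk : ∀ x : α, inB' (mkq x) ↔ x ∈ Bf := fun x =>
    ⟨fun h => hBfrel x _ (OrbRel.symm (hout x)) h, fun h => hBfrel _ x (hout x) h⟩
  set len : Q → ℕ := fun q => Function.minimalPeriod f q.out with hlen_def
  have hlenmk : ∀ x : α, len (mkq x) = Function.minimalPeriod f x := fun x =>
    minimalPeriod_eq_of_orbRel hf (hout x)
  have hUfin' : {q : Q | inA' q}.Finite := hUfin
  have hVfin' : {q : Q | inB' q}.Finite := hVfin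
  -- for each minimal period, the leftover orbits on both sides are equinumerous
  have key : ∀ k : ℕ,
      Nonempty (↥{q : Q | ¬ inA' q ∧ len q = k} ≃ ↥{q : Q | ¬ inB' q ∧ len q = k}) := by
    intro k
    set UA : Set Q := {q | inA' q ∧ len q = k} with hUA_def
    set UB : Set Q := {q | inB' q ∧ len q = k} with hUB_def
    have huab : ∀ q : ↥UA, inB' (mkq (G q.1.out)) ∧ len (mkq (G q.1.out)) = k := by
      intro q
      have h1 : q.1.out ∈ Af := q.2.1
      refine ⟨(hinB'mk _).mpr (hGBf _ h1), ?_⟩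
      rw [hlenmk, hmpG _ h1]
      exact q.2.2
    have hFinj : Function.Injective (fun q : ↥UA => (⟨mkq (G q.1.out), huab q⟩ : ↥UB)) := by
      rintro q q' h
      have hval : mkq (G q.1.out) = mkq (G q'.1.out) := congrArg Subtype.val h
      have hrel : OrbRel f (G q.1.out) (G q'.1.out) := Quotient.exact hval
      have h1 : q.1.out ∈ Af := q.2.1
      have h1' : q'.1.out ∈ Af := q'.2.1
      have hrel2 : OrbRel f (G' (G q.1.out)) (G' (G q'.1.out)) :=
        hG'rel _ _ (hGBf _ h1) (hGBf _ h1') hrel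
      rw [hG'G _ h1, hG'G _ h1'] at hrel2
      apply Subtype.ext
      rw [← hout_eq q.1, ← hout_eq q'.1]
      exact hmk_eq _ _ hrel2
    have hFsurj : Function.Surjective (fun q : ↥UA => (⟨mkq (G q.1.out), huab q⟩ : ↥UB)) := by
      rintro ⟨v, hv1, hv2⟩
      have hy : v.out ∈ Bf := hv1
      have hx : G' v.out ∈ Af := hG'Af _ hy
      have hmem : inA' (mkq (G' v.out)) ∧ len (mkq (G' v.out)) = k := by
        refine ⟨(hinA'mk _).mpr hx, ?_⟩
        rw [hlenmk, hmpG' _ hy]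
        exact hv2
      refine ⟨⟨mkq (G' v.out), hmem⟩, ?_⟩
      apply Subtype.ext
      show mkq (G (mkq (G' v.out)).out) = v
      have hrel3 : OrbRel f ((mkq (G' v.out)).out) (G' v.out) := hout _
      have h4 : (mkq (G' v.out)).out ∈ Af := hmem.1
      have hrel4 : OrbRel f (G ((mkq (G' v.out)).out)) (G (G' v.out)) := hGrel _ _ h4 hx hrel3
      rw [hGG' _ hy] at hrel4
      rw [hmk_eq _ _ hrel4]
      exact hout_eq v
    have hUBfin : UB.Finite := hVfin'.subset (fun q hq => hq.1)
    have hcard : Cardinal.mk ↥UA = Cardinal.mk ↥UB :=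
      Cardinal.mk_congr (Equiv.ofBijective _ ⟨hFinj, hFsurj⟩)
    set Fk : Set Q := {q | len q = k} with hFk_def
    have hUAsub : UA ⊆ Fk := fun q hq => hq.2
    have hUBsub : UB ⊆ Fk := fun q hq => hq.2
    have hdiffA : {q : Q | ¬ inA' q ∧ len q = k} = Fk \ UA := by
      ext q
      constructor
      · rintro ⟨h1, h2⟩; exact ⟨h2, fun h => h1 h.1⟩
      · rintro ⟨h1, h2⟩; exact ⟨fun h => h2 ⟨h, h1⟩, h1⟩
    have hdiffB : {q : Q | ¬ inB' q ∧ len q = k} = Fk \ UB := by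
      ext q
      constructor
      · rintro ⟨h1, h2⟩; exact ⟨h2, fun h => h1 h.1⟩
      · rintro ⟨h1, h2⟩; exact ⟨fun h => h2 ⟨h, h1⟩, h1⟩
    apply Cardinal.eq.mp
    rw [hdiffA, hdiffB]
    have e1 := Cardinal.mk_diff_add_mk hUAsub
    have e2 := Cardinal.mk_diff_add_mk hUBsub
    have hlt : Cardinal.mk ↥UB < Cardinal.aleph0 := hUBfin.lt_aleph0
    apply (Cardinal.add_right_inj_of_lt_aleph0 hlt).mp
    calc Cardinal.mk ↥(Fk \ UA) + Cardinal.mk ↥UB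
        = Cardinal.mk ↥(Fk \ UA) + Cardinal.mk ↥UA := by rw [hcard]
      _ = Cardinal.mk ↥Fk := e1
      _ = Cardinal.mk ↥(Fk \ UB) + Cardinal.mk ↥UB := e2.symm
  have eqs : ∀ k : ℕ, ↥{q : Q | ¬ inA' q ∧ len q = k} ≃ ↥{q : Q | ¬ inB' q ∧ len q = k} :=
    fun k => (key k).some
  set CA : Set Q := {q : Q | ¬ inA' q} with hCA_def
  set CB : Set Q := {q : Q | ¬ inB' q} with hCB_def
  set θto : ↥CA → ↥CB := fun q => ⟨(eqs (len q.1) ⟨q.1, ⟨q.2, rfl⟩⟩).1,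
    (eqs (len q.1) ⟨q.1, ⟨q.2, rfl⟩⟩).2.1⟩ with hθto_def
  set θinv : ↥CB → ↥CA := fun q => ⟨((eqs (len q.1)).symm ⟨q.1, ⟨q.2, rfl⟩⟩).1,
    ((eqs (len q.1)).symm ⟨q.1, ⟨q.2, rfl⟩⟩).2.1⟩ with hθinv_def
  have hθlen : ∀ q : ↥CA, len (θto q).1 = len q.1 := fun q =>
    (eqs (len q.1) ⟨q.1, ⟨q.2, rfl⟩⟩).2.2
  have hθinvlen : ∀ q : ↥CB, len (θinv q).1 = len q.1 := fun q =>
    ((eqs (len q.1)).symm ⟨q.1, ⟨q.2, rfl⟩⟩).2.2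
  have hθ1 : ∀ q : ↥CA, θinv (θto q) = q := by
    intro q
    apply Subtype.ext
    show ((eqs (len (θto q).1)).symm ⟨(θto q).1, ⟨(θto q).2, rfl⟩⟩).1 = q.1
    have hk : len (θto q).1 = len q.1 := hθlen q
    have aux : ∀ (k' : ℕ) (hmem : ¬ inB' (θto q).1) (hk' : len (θto q).1 = k')
        (_ : k' = len q.1), ((eqs k').symm ⟨(θto q).1, ⟨hmem, hk'⟩⟩).1 = q.1 := by
      intro k' hmem hk' hkq
      subst hkq
      have h5 : (⟨(θto q).1, ⟨hmem, hk'⟩⟩ : ↥{q' : Q | ¬ inB' q' ∧ len q' = len q.1})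
          = eqs (len q.1) ⟨q.1, ⟨q.2, rfl⟩⟩ := Subtype.ext rfl
      rw [h5, Equiv.symm_apply_apply]
    exact aux (len (θto q).1) (θto q).2 rfl hk
  have hθ2 : ∀ q : ↥CB, θto (θinv q) = q := by
    intro q
    apply Subtype.ext
    show (eqs (len (θinv q).1) ⟨(θinv q).1, ⟨(θinv q).2, rfl⟩⟩).1 = q.1
    have hk : len (θinv q).1 = len q.1 := hθinvlen q
    have aux : ∀ (k' : ℕ) (hmem : ¬ inA' (θinv q).1) (hk' : len (θinv q).1 = k')
        (_ : k' = len q.1), ((eqs k') ⟨(θinv q).1, ⟨hmem, hk'⟩⟩).1 = q.1 := by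
      intro k' hmem hk' hkq
      subst hkq
      have h5 : (⟨(θinv q).1, ⟨hmem, hk'⟩⟩ : ↥{q' : Q | ¬ inA' q' ∧ len q' = len q.1})
          = (eqs (len q.1)).symm ⟨q.1, ⟨q.2, rfl⟩⟩ := Subtype.ext rfl
      rw [h5, Equiv.apply_symm_apply]
    exact aux (len (θinv q).1) (θinv q).2 rfl hk
  -- fullness of the complements
  have hfullB : ∀ y : α, y ∉ Bf → ∀ m, ∃ z, f^[m] z = y := by
    intro y hy m
    induction m generalizing y with
    | zero => exact ⟨y, rfl⟩
    | succ m ih =>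
      have hyr : y ∈ Set.range f := by
        by_contra hr
        exact hy ⟨0, hNB y hr⟩
      obtain ⟨z0, rfl⟩ := hyr
      have hz0 : z0 ∉ Bf := by
        rintro ⟨n, hn⟩
        cases n with
        | zero => exact hy ⟨0, hB _ hn⟩
        | succ n => exact hy ⟨n, by rw [← Function.iterate_succ_apply]; exact hn⟩
      obtain ⟨z, hz⟩ := ih z0 hz0
      exact ⟨z, by rw [Function.iterate_succ_apply', hz]⟩
  have hfullA : ∀ y : α, y ∉ Af → ∀ m, ∃ z, f^[m] z = y := by
    intro y hy m
    induction m generalizing y with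
    | zero => exact ⟨y, rfl⟩
    | succ m ih =>
      have hyr : y ∈ Set.range f := by
        by_contra hr
        exact hy ⟨0, hNA y hr⟩
      obtain ⟨z0, rfl⟩ := hyr
      have hz0 : z0 ∉ Af := by
        rintro ⟨n, hn⟩
        cases n with
        | zero => exact hy ⟨0, hA _ hn⟩
        | succ n => exact hy ⟨n, by rw [← Function.iterate_succ_apply]; exact hn⟩
      obtain ⟨z, hz⟩ := ih z0 hz0
      exact ⟨z, by rw [Function.iterate_succ_apply', hz]⟩
  -- the matching of leftover orbits, elementwise
  have EC : ∀ (x : α) (hx : ¬ inA' (mkq x)), ∃! w, ∃ m n : ℕ,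
      f^[m] x = f^[n] ((mkq x).out) ∧ f^[m] w = f^[n] ((θto ⟨mkq x, hx⟩).1.out) := by
    intro x hx
    refine orb_match hf (hfullB _ (θto ⟨mkq x, hx⟩).2) ?_ x (OrbRel.symm (hout x))
    exact (hθlen ⟨mkq x, hx⟩).symm
  have EC' : ∀ (y : α) (hy : ¬ inB' (mkq y)), ∃! w, ∃ m n : ℕ,
      f^[m] y = f^[n] ((mkq y).out) ∧ f^[m] w = f^[n] ((θinv ⟨mkq y, hy⟩).1.out) := by
    intro y hy
    refine orb_match hf (hfullA _ (θinv ⟨mkq y, hy⟩).2) ?_ y (OrbRel.symm (hout y))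
    exact (hθinvlen ⟨mkq y, hy⟩).symm
  choose gC hgC1 hgC2 using EC
  choose gC' hgC1' hgC2' using EC'
  have pc1 : ∀ (x : α) (hx : ¬ inA' (mkq x)), mkq (gC x hx) = (θto ⟨mkq x, hx⟩).1 := by
    intro x hx
    obtain ⟨m, n, _, e2⟩ := hgC1 x hx
    have hrel : OrbRel f (gC x hx) ((θto ⟨mkq x, hx⟩).1.out) := ⟨m, n, e2⟩
    rw [hmk_eq _ _ hrel]
    exact hout_eq _
  have pc1' : ∀ (y : α) (hy : ¬ inB' (mkq y)), mkq (gC' y hy) = (θinv ⟨mkq y, hy⟩).1 := by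
    intro y hy
    obtain ⟨m, n, _, e2⟩ := hgC1' y hy
    have hrel : OrbRel f (gC' y hy) ((θinv ⟨mkq y, hy⟩).1.out) := ⟨m, n, e2⟩
    rw [hmk_eq _ _ hrel]
    exact hout_eq _
  have pc2 : ∀ (x : α) (hx : ¬ inA' (mkq x)), gC x hx ∉ Bf := by
    intro x hx h
    obtain ⟨m, n, _, e2⟩ := hgC1 x hx
    have hrel : OrbRel f ((θto ⟨mkq x, hx⟩).1.out) (gC x hx) := OrbRel.symm ⟨m, n, e2⟩
    exact (θto ⟨mkq x, hx⟩).2 (hBfrel _ _ hrel h)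
  have pc2' : ∀ (y : α) (hy : ¬ inB' (mkq y)), gC' y hy ∉ Af := by
    intro y hy h
    obtain ⟨m, n, _, e2⟩ := hgC1' y hy
    have hrel : OrbRel f ((θinv ⟨mkq y, hy⟩).1.out) (gC' y hy) := OrbRel.symm ⟨m, n, e2⟩
    exact (θinv ⟨mkq y, hy⟩).2 (hAfrel _ _ hrel h)
  have pc3 : ∀ (x : α) (hx : ¬ inA' (mkq x)) (hx' : ¬ inA' (mkq (f x))),
      gC (f x) hx' = f (gC x hx) := by
    intro x hx hx'
    have emk : mkq (f x) = mkq x := hmk_eq _ _ ⟨0, 1, by simp⟩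
    have hsub : (⟨mkq (f x), hx'⟩ : ↥CA) = ⟨mkq x, hx⟩ := Subtype.ext emk
    symm
    apply hgC2 (f x) hx'
    rw [hsub, emk]
    obtain ⟨m, n, e1, e2⟩ := hgC1 x hx
    refine ⟨m, n + 1, ?_, ?_⟩
    · rw [show f^[m] (f x) = f (f^[m] x) from (iter_swap f m x).symm, e1,
        Function.iterate_succ_apply']
    · rw [show f^[m] (f (gC x hx)) = f (f^[m] (gC x hx)) from (iter_swap f m (gC x hx)).symm,
        e2, Function.iterate_succ_apply']
  have pc4 : ∀ (x : α) (hx : ¬ inA' (mkq x)) (hy : ¬ inB' (mkq (gC x hx))),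
      gC' (gC x hx) hy = x := by
    intro x hx hy
    symm
    apply hgC2' (gC x hx) hy
    have hsub : (⟨mkq (gC x hx), hy⟩ : ↥CB) = θto ⟨mkq x, hx⟩ := Subtype.ext (pc1 x hx)
    rw [hsub, hθ1,
      show (mkq (gC x hx)).out = (θto ⟨mkq x, hx⟩).1.out from
        congrArg Quotient.out (pc1 x hx)]
    obtain ⟨m, n, e1, e2⟩ := hgC1 x hx
    exact ⟨m, n, e2, e1⟩
  have pc5 : ∀ (y : α) (hy : ¬ inB' (mkq y)) (hx : ¬ inA' (mkq (gC' y hy))),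
      gC (gC' y hy) hx = y := by
    intro y hy hx
    symm
    apply hgC2 (gC' y hy) hx
    have hsub : (⟨mkq (gC' y hy), hx⟩ : ↥CA) = θinv ⟨mkq y, hy⟩ := Subtype.ext (pc1' y hy)
    rw [hsub, hθ2,
      show (mkq (gC' y hy)).out = (θinv ⟨mkq y, hy⟩).1.out from
        congrArg Quotient.out (pc1' y hy)]
    obtain ⟨m, n, e1, e2⟩ := hgC1' y hy
    exact ⟨m, n, e2, e1⟩
  -- assemble the automorphism
  have notinA : ∀ x : α, x ∉ Af → ¬ inA' (mkq x) := fun x hx h => hx ((hinA'mk x).mp h)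
  have notinB : ∀ y : α, y ∉ Bf → ¬ inB' (mkq y) := fun y hy h => hy ((hinB'mk y).mp h)
  set Gt : α → α := fun x => if hx : x ∈ Af then G x else gC x (notinA x hx) with hGt_def
  set Gt' : α → α := fun y => if hy : y ∈ Bf then G' y else gC' y (notinB y hy) with hGt'_def
  have hleft : Function.LeftInverse Gt' Gt := by
    intro x
    by_cases hx : x ∈ Af
    · have h1 : G x ∈ Bf := hGBf x hx
      simp only [hGt_def, hGt'_def, dif_pos hx, dif_pos h1]
      exact hG'G x hx
    · have h2 : gC x (notinA x hx) ∉ Bf := pc2 x _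
      simp only [hGt_def, hGt'_def, dif_neg hx, dif_neg h2]
      exact pc4 x _ _
  have hright : Function.RightInverse Gt' Gt := by
    intro y
    by_cases hy : y ∈ Bf
    · have h1 : G' y ∈ Af := hG'Af y hy
      simp only [hGt_def, hGt'_def, dif_pos hy, dif_pos h1]
      exact hGG' y hy
    · have h2 : gC' y (notinB y hy) ∉ Af := pc2' y _
      simp only [hGt_def, hGt'_def, dif_neg hy, dif_neg h2]
      exact pc5 y _ _
  refine ⟨⟨Gt, Gt', hleft, hright⟩, ?_, ?_⟩
  · intro a
    show Gt (f a) = f (Gt a)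
    by_cases ha : a ∈ Af
    · have h1 : f a ∈ Af := hAff a ha
      simp only [hGt_def, dif_pos ha, dif_pos h1]
      exact hGf a ha
    · have h1 : f a ∉ Af := hAfc a ha
      simp only [hGt_def, dif_neg ha, dif_neg h1]
      exact pc3 a _ _
  · intro x
    show Gt (x : α) = ((φ x : ↥B) : α)
    have hx : (x : α) ∈ Af := ⟨0, x.2⟩
    simp only [hGt_def, dif_pos hx]
    exact hG (x : α) 0 x.2

/-- if `a` is not in the range and `f^[k] a = f^[l] b` with `k ≤ l` then `a = f^[l-k] b`. -/
lemma eq_iter_of_iterate_eq {f : α → α} (hf : Function.Injective f) {a b : α} {k l : ℕ}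
    (hkl : k ≤ l) (h : f^[k] a = f^[l] b) : a = f^[l - k] b := by
  have h2 : f^[k] a = f^[k] (f^[l - k] b) := by
    rw [← Function.iterate_add_apply, Nat.add_sub_cancel' hkl]; exact h
  exact hf.iterate k h2

lemma eq_of_iterate_eq_nonrange {f : α → α} (hf : Function.Injective f) {a b : α}
    (ha : a ∉ Set.range f) (hb : b ∉ Set.range f) {k l : ℕ}
    (h : f^[k] a = f^[l] b) : a = b := by
  rcases le_total k l with hkl | hkl
  · have := eq_iter_of_iterate_eq hf hkl h
    rcases Nat.eq_zero_or_pos (l - k) with h0 | h0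
    · rwa [h0, Function.iterate_zero_apply] at this
    · exfalso
      obtain ⟨c, hc⟩ := Nat.exists_eq_add_of_lt h0
      rw [hc, Nat.add_comm, Function.iterate_add_apply] at this
      exact ha ⟨_, by simpa using this.symm⟩
  · have := eq_iter_of_iterate_eq hf hkl h.symm
    rcases Nat.eq_zero_or_pos (k - l) with h0 | h0
    · rw [h0, Function.iterate_zero_apply] at this; exact this.symm
    · exfalso
      obtain ⟨c, hc⟩ := Nat.exists_eq_add_of_lt h0
      rw [hc, Nat.add_comm, Function.iterate_add_apply] at this
      exact hb ⟨_, by simpa using this.symm⟩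

lemma forward_dir {α : Type*} (f : α → α) (hf : Function.Injective f)
    (S : Set α) (hS : IsExceptionalInj f S) : {x : α | x ∉ Set.range f}.Finite := by
  classical
  obtain ⟨hSfin, hext⟩ := hS
  by_contra hinf
  set N := {x : α | x ∉ Set.range f} with hN
  -- elements of N whose forward orbit meets S form a finite set
  have hM : {a : α | a ∈ N ∧ ∃ k, f^[k] a ∈ S}.Finite := by
    set M := {a : α | a ∈ N ∧ ∃ k, f^[k] a ∈ S} with hMdef
    have hch : ∀ a : α, a ∈ M → ∃ k, f^[k] a ∈ S := fun a ha => ha.2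
    choose k hk using hch
    haveI := hSfin.to_subtype
    have hFinj : Function.Injective
        (fun a : ↥M => (⟨f^[k a.1 a.2] a.1, hk a.1 a.2⟩ : ↥S)) := by
      intro a b hab
      have h := congrArg Subtype.val hab
      exact Subtype.ext (eq_of_iterate_eq_nonrange hf a.2.1 b.2.1 h)
    exact Set.finite_coe_iff.mp (Finite.of_injective _ hFinj)
  have hNM : (N \ {a : α | a ∈ N ∧ ∃ k, f^[k] a ∈ S}).Infinite :=
    Set.Infinite.diff hinf hM
  obtain ⟨a, haN, haM⟩ := hNM.nonempty
  have ha1 : a ∉ Set.range f := haN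
  have ha2 : ∀ k, f^[k] a ∉ S := fun k hk => haM ⟨haN, k, hk⟩
  -- the forward orbit of a avoids cl S
  have hdisj : ∀ n, f^[n] a ∉ clInj f S := by
    rintro n ⟨b, hbS, j, hj⟩
    rcases le_total n j with hnj | hnj
    · have := eq_iter_of_iterate_eq hf hnj hj.symm
      rcases Nat.eq_zero_or_pos (j - n) with h0 | h0
      · rw [h0, Function.iterate_zero_apply] at this
        exact ha2 0 (by simpa [this] using hbS)
      · obtain ⟨c, hc⟩ := Nat.exists_eq_add_of_lt h0
        rw [hc, Nat.add_comm, Function.iterate_add_apply] at this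
        exact ha1 ⟨_, by simpa using this.symm⟩
    · have := eq_iter_of_iterate_eq hf hnj hj
      exact ha2 (n - j) (by rw [← this]; exact hbS)
  set s : Set α := insert a S with hs_def
  set t : Set α := insert (f a) S with ht_def
  have hSs : S ⊆ clInj f s := fun x hx => mem_clInj_self (Set.mem_insert_of_mem _ hx)
  have hSt : S ⊆ clInj f t := fun x hx => mem_clInj_self (Set.mem_insert_of_mem _ hx)
  have hclsS_s : clInj f S ⊆ clInj f s := clInj_mono f (Set.subset_insert _ _)
  have hclsS_t : clInj f S ⊆ clInj f t := clInj_mono f (Set.subset_insert _ _)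
  have hstruct_s : ∀ x ∈ clInj f s, x ∈ clInj f S ∨ ∃ n, x = f^[n] a := by
    rintro x ⟨x₀, hx₀, n, rfl⟩
    rcases Set.mem_insert_iff.mp hx₀ with h | h
    · exact Or.inr ⟨n, by rw [h]⟩
    · exact Or.inl ⟨x₀, h, n, rfl⟩
  have hstruct_t : ∀ x ∈ clInj f t, x ∈ clInj f S ∨ ∃ n, x = f^[n + 1] a := by
    rintro x ⟨x₀, hx₀, n, rfl⟩
    rcases Set.mem_insert_iff.mp hx₀ with h | h
    · exact Or.inr ⟨n, by rw [h, Function.iterate_succ_apply]⟩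
    · exact Or.inl ⟨x₀, h, n, rfl⟩
  set v : α → α := fun x => if x ∈ clInj f S then x else f x with hv_def
  have hvmem : ∀ x : ↥(clInj f s), v x ∈ clInj f t := by
    rintro ⟨x, hx⟩
    by_cases hxS : x ∈ clInj f S
    · simpa [hv_def, hxS] using hclsS_t hxS
    · rcases (hstruct_s x hx).resolve_left hxS with ⟨n, rfl⟩
      simp only [hv_def, hxS, if_neg, if_false]
      refine ⟨f a, Set.mem_insert _ _, n, ?_⟩
      rw [← Function.iterate_succ_apply, Function.iterate_succ_apply']
  set V : ↥(clInj f s) → ↥(clInj f t) := fun x => ⟨v x, hvmem x⟩ with hV_def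
  have hVbij : Function.Bijective V := by
    constructor
    · rintro ⟨x, hx⟩ ⟨y, hy⟩ hxy
      have hval : v x = v y := congrArg Subtype.val hxy
      apply Subtype.ext
      by_cases hxS : x ∈ clInj f S <;> by_cases hyS : y ∈ clInj f S
      · simpa [hv_def, hxS, hyS] using hval
      · exfalso
        rcases (hstruct_s y hy).resolve_left hyS with ⟨n, rfl⟩
        simp only [hv_def, hxS, hyS, if_pos, if_neg, if_false] at hval
        rw [show f (f^[n] a) = f^[n + 1] a from (Function.iterate_succ_apply' f n a).symm]
          at hval
        exact hdisj (n + 1) (hval ▸ hxS)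
      · exfalso
        rcases (hstruct_s x hx).resolve_left hxS with ⟨n, rfl⟩
        simp only [hv_def, hxS, hyS, if_pos, if_neg, if_false] at hval
        rw [show f (f^[n] a) = f^[n + 1] a from (Function.iterate_succ_apply' f n a).symm]
          at hval
        exact hdisj (n + 1) (hval ▸ hyS)
      · simp only [hv_def, hxS, hyS, if_neg, if_false] at hval
        exact hf hval
    · rintro ⟨y, hy⟩
      by_cases hyS : y ∈ clInj f S
      · refine ⟨⟨y, hclsS_s hyS⟩, ?_⟩
        apply Subtype.ext
        simp [hV_def, hv_def, hyS]
      · rcases (hstruct_t y hy).resolve_left hyS with ⟨n, rfl⟩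
        refine ⟨⟨f^[n] a, ⟨a, Set.mem_insert _ _, n, rfl⟩⟩, ?_⟩
        apply Subtype.ext
        simp only [hV_def, hv_def, hdisj n, if_neg, if_false]
        exact (Function.iterate_succ_apply' f n a).symm
  set φ : ↥(clInj f s) ≃ ↥(clInj f t) := Equiv.ofBijective V hVbij with hφ_def
  have hφval : ∀ x : ↥(clInj f s), ((φ x : ↥(clInj f t)) : α) = v x := fun x => rfl
  have hcomm : ∀ x y : ↥(clInj f s), (y : α) = f x →
      ((φ y : ↥(clInj f t)) : α) = f (φ x) := by
    rintro ⟨x, hx⟩ ⟨y, hy⟩ hyx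
    simp only [hφval]
    simp only at hyx
    subst hyx
    by_cases hxS : x ∈ clInj f S
    · have : f x ∈ clInj f S := f_mem_clInj hxS
      simp [hv_def, hxS, this]
    · rcases (hstruct_s x hx).resolve_left hxS with ⟨n, rfl⟩
      have : f (f^[n] a) ∉ clInj f S := by
        rw [show f (f^[n] a) = f^[n + 1] a from (Function.iterate_succ_apply' f n a).symm]
        exact hdisj (n + 1)
      simp [hv_def, hxS, this]
  have hfix : ∀ x : ↥(clInj f s), (x : α) ∈ S → ((φ x : ↥(clInj f t)) : α) = x := by
    rintro ⟨x, hx⟩ hxS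
    simp only [hφval]
    simp [hv_def, mem_clInj_self hxS]
  obtain ⟨g, hg, hgext⟩ := hext s t (hSfin.insert a) (hSfin.insert (f a)) hSs hSt φ hcomm hfix
  have ha_in : a ∈ clInj f s := mem_clInj_self (Set.mem_insert _ _)
  have haS : a ∉ clInj f S := by simpa using hdisj 0
  have e1 : g a = f a := by
    have := hgext ⟨a, ha_in⟩
    rw [this, hφval]
    simp [hv_def, haS]
  have hsymm : g.symm (f a) = f (g.symm a) := by
    rw [Equiv.symm_apply_eq, hg, Equiv.apply_symm_apply]
  exact ha1 ⟨g.symm a, by rw [← hsymm, ← e1, Equiv.symm_apply_apply]⟩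


end InjStructAux

/-- A countable injection structure is weakly ultrahomogeneous iff it has only finitely many
ω-orbits, i.e., the set of elements outside the range of `f` is finite. -/
theorem weaklyUltrahomogeneousInj_iff
    {α : Type*} [Countable α] (f : α → α) (hf : Function.Injective f) :
    WeaklyUltrahomogeneousInj f ↔ {x : α | x ∉ Set.range f}.Finite := by
  constructor
  · rintro ⟨S, hS⟩
    exact InjStructAux.forward_dir f hf S hS
  · intro hfin
    refine ⟨{x : α | x ∉ Set.range f}, hfin, ?_⟩
    intro s t hs ht hSs hSt φ hcomm hfix
    have hUfin : {q : Quotient (InjStructAux.orbSetoid f) |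
        ∃ n, f^[n] q.out ∈ clInj f s}.Finite := by
      apply Set.Finite.subset (hs.image (Quotient.mk (InjStructAux.orbSetoid f)))
      rintro q ⟨n, hn⟩
      obtain ⟨x₀, hx₀, j, hj⟩ := hn
      have hrel : InjStructAux.OrbRel f x₀ q.out := ⟨j, n, hj⟩
      exact ⟨x₀, hx₀, (Quotient.sound hrel).trans (Quotient.out_eq q)⟩
    have hVfin : {q : Quotient (InjStructAux.orbSetoid f) |
        ∃ n, f^[n] q.out ∈ clInj f t}.Finite := by
      apply Set.Finite.subset (ht.image (Quotient.mk (InjStructAux.orbSetoid f)))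
      rintro q ⟨n, hn⟩
      obtain ⟨x₀, hx₀, j, hj⟩ := hn
      have hrel : InjStructAux.OrbRel f x₀ q.out := ⟨j, n, hj⟩
      exact ⟨x₀, hx₀, (Quotient.sound hrel).trans (Quotient.out_eq q)⟩
    exact InjStructAux.ext_core f hf (clInj f s) (clInj f t)
      (fun x hx => InjStructAux.f_mem_clInj hx) (fun y hy => InjStructAux.f_mem_clInj hy)
      (fun x hx => hSs hx) (fun x hx => hSt hx) hUfin hVfin φ hcomm
      (fun x hx => hfix x hx)
end

section
/- Let (α, f) be a countable injection structure with only finitely many ω-orbits. Then any set S ⊆ α containing exactly one element from each ω-orbit is an exceptional set for (α, f), witnessing that (α, f) is weakly ultrahomogeneous. -/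
/-- The orbit of `a` under `f`. -/
def orbitInj {α : Type*} (f : α → α) (a : α) : Set α :=
  {x | ∃ m n : ℕ, f^[m] x = f^[n] a}

open Cardinal in

/-- Complements of equinumerous finite fiber-respecting subsets are fiber-respecting
equinumerous. -/
theorem exists_compl_equiv_fiber {X I : Type*} (p : X → I) (A A' : Set X)
    (hA : A.Finite) (hA' : A'.Finite) (u : ↥A ≃ ↥A') (hu : ∀ a : ↥A, p ↑(u a) = p ↑a) :
    ∃ v : {x // x ∉ A} ≃ {x // x ∉ A'}, ∀ x, p ↑(v x) = p ↑x := by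
  classical
  have fib : ∀ i : I, Nonempty (↥({y : {x // p x = i} | (y : X) ∈ A}ᶜ) ≃
      ↥({y : {x // p x = i} | (y : X) ∈ A'}ᶜ)) := by
    intro i
    have hfin1 : ({y : {x // p x = i} | (y : X) ∈ A}).Finite :=
      Set.Finite.preimage (Subtype.val_injective.injOn) hA
    have hfin2 : ({y : {x // p x = i} | (y : X) ∈ A'}).Finite :=
      Set.Finite.preimage (Subtype.val_injective.injOn) hA'
    have hbij : ∃ w : ↥({y : {x // p x = i} | (y : X) ∈ A}) →
        ↥({y : {x // p x = i} | (y : X) ∈ A'}), Function.Bijective w := by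
      have himg : ∀ y : ↥({y : {x // p x = i} | (y : X) ∈ A}),
          (↑(u ⟨y.1.1, y.2⟩) : X) ∈ A' ∧ p ↑(u ⟨y.1.1, y.2⟩) = i := by
        intro y
        refine ⟨(u _).2, ?_⟩
        rw [hu]; exact y.1.2
      refine ⟨fun y => ⟨⟨↑(u ⟨y.1.1, y.2⟩), (himg y).2⟩, (himg y).1⟩, ?_, ?_⟩
      · intro y₁ y₂ hy
        have h1 : (↑(u ⟨y₁.1.1, y₁.2⟩) : X) = ↑(u ⟨y₂.1.1, y₂.2⟩) :=
          congrArg (fun z : ↥({y : {x // p x = i} | (y : X) ∈ A'}) => z.1.1) hy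
        have h3 := u.injective (Subtype.ext h1)
        exact Subtype.ext (Subtype.ext (congrArg (fun z : ↥A => z.1) h3))
      · intro z
        have hp : p (u.symm ⟨z.1.1, z.2⟩).1 = i := by
          have h5 := hu (u.symm ⟨z.1.1, z.2⟩)
          rw [u.apply_symm_apply] at h5
          rw [← h5]; exact z.1.2
        refine ⟨⟨⟨(u.symm ⟨z.1.1, z.2⟩).1, hp⟩, (u.symm ⟨z.1.1, z.2⟩).2⟩, ?_⟩
        apply Subtype.ext; apply Subtype.ext
        show (↑(u ⟨(u.symm ⟨z.1.1, z.2⟩).1, (u.symm ⟨z.1.1, z.2⟩).2⟩) : X) = z.1.1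
        rw [show (⟨(u.symm ⟨z.1.1, z.2⟩).1, (u.symm ⟨z.1.1, z.2⟩).2⟩ : ↥A)
            = u.symm ⟨z.1.1, z.2⟩ from rfl, u.apply_symm_apply]
    obtain ⟨w, hw⟩ := hbij
    have hcard : (#(↥({y : {x // p x = i} | (y : X) ∈ A})))
        = (#(↥({y : {x // p x = i} | (y : X) ∈ A'}))) :=
      Cardinal.mk_congr (Equiv.ofBijective w hw)
    have h1 := Cardinal.mk_sum_compl ({y : {x // p x = i} | (y : X) ∈ A})
    rw [hcard, ← Cardinal.mk_sum_compl ({y : {x // p x = i} | (y : X) ∈ A'})] at h1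
    exact Cardinal.eq.mp (Cardinal.eq_of_add_eq_add_left h1 hfin2.lt_aleph0)
  have e := fun i => Classical.choice (fib i)
  have resh : ∀ (B : Set X) (i : I),
      {y : {x // x ∉ B} // p ↑y = i} ≃ ↥({y : {x // p x = i} | (y : X) ∈ B}ᶜ) :=
    fun B i =>
      ⟨fun y => ⟨⟨y.1.1, y.2⟩, y.1.2⟩, fun z => ⟨⟨z.1.1, z.2⟩, z.1.2⟩,
       fun y => rfl, fun z => rfl⟩
  refine ⟨(Equiv.sigmaFiberEquiv (fun y : {x // x ∉ A} => p ↑y)).symm.trans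
    ((Equiv.sigmaCongrRight (fun i => ((resh A i).trans (e i)).trans (resh A' i).symm)).trans
      (Equiv.sigmaFiberEquiv (fun y : {x // x ∉ A'} => p ↑y))), ?_⟩
  intro x
  exact (((Equiv.sigmaCongrRight (fun i => ((resh A i).trans (e i)).trans (resh A' i).symm))
    ((Equiv.sigmaFiberEquiv (fun y : {x // x ∉ A} => p ↑y)).symm x)).snd).prop


noncomputable section

open Equiv

open Classical in
/-- The minimal positive period of `x` under permutation `F`, or `0` if none. -/
def permPer {β : Type*} (F : Equiv.Perm β) (x : β) : ℕ :=
  if h : ∃ n, 0 < n ∧ (F ^ n) x = x then Nat.find h else 0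

theorem perm_zpow_apply_comm {β : Type*} (F : Equiv.Perm β) (a b : ℤ) (x : β) :
    (F ^ (a + b)) x = (F ^ a) ((F ^ b) x) := by
  rw [zpow_add]; rfl

theorem perm_fixed_zpow {β : Type*} {G : Equiv.Perm β} {x : β} (h : G x = x) (q : ℤ) :
    (G ^ q) x = x := by
  have hn : ∀ n : ℕ, (G ^ n) x = x := by
    intro n
    induction n with
    | zero => rfl
    | succ n ih => rw [pow_succ, Equiv.Perm.mul_apply, h, ih]
  rcases q with n | n
  · exact_mod_cast hn n
  · rw [zpow_negSucc]
    have := hn (n + 1)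
    calc ((G ^ (n+1))⁻¹) x = ((G ^ (n+1))⁻¹) ((G ^ (n+1)) x) := by rw [this]
    _ = x := by simp

theorem perm_fixed_sub {β : Type*} (F : Equiv.Perm β) {x : β} {a b : ℤ}
    (ha : (F ^ a) x = x) (hb : (F ^ b) x = x) : (F ^ (a - b)) x = x := by
  have hnb : (F ^ (-b)) x = x := by
    calc (F ^ (-b)) x = (F ^ (-b)) ((F ^ b) x) := by rw [hb]
    _ = (F ^ (-b + b)) x := (perm_zpow_apply_comm F _ _ x).symm
    _ = x := by simp
  calc (F ^ (a - b)) x = (F ^ (a + -b)) x := by rw [sub_eq_add_neg]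
  _ = (F ^ a) ((F ^ (-b)) x) := perm_zpow_apply_comm F _ _ x
  _ = x := by rw [hnb, ha]

/-- The stabilizer of `x` in the `ℤ`-action by `F` is exactly multiples of `permPer F x`. -/
theorem perm_zpow_fixed_iff {β : Type*} (F : Equiv.Perm β) (x : β) (m : ℤ) :
    (F ^ m) x = x ↔ (permPer F x : ℤ) ∣ m := by
  classical
  unfold permPer
  split_ifs with h
  · set n₀ := Nat.find h with hn₀
    obtain ⟨hpos, hfix⟩ := Nat.find_spec h
    have hfixz : (F ^ (n₀ : ℤ)) x = x := by rw [zpow_natCast]; exact hfix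
    constructor
    · intro hm
      by_contra hdvd
      set r := m % (n₀ : ℤ) with hr
      have hn0 : (0:ℤ) < n₀ := by exact_mod_cast hpos
      have hrnonneg : 0 ≤ r := Int.emod_nonneg m (by omega)
      have hrlt : r < n₀ := Int.emod_lt_of_pos m hn0
      have hrfix : (F ^ r) x = x := by
        have : r = m - (n₀ : ℤ) * (m / (n₀ : ℤ)) := by rw [hr, Int.emod_def]
        rw [this]
        apply perm_fixed_sub F hm
        rw [zpow_mul]
        exact perm_fixed_zpow (by rw [← zpow_natCast] at hfix; exact hfix : (F ^ (n₀:ℤ)) x = x) _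
      have hrne : r ≠ 0 := by
        intro h0
        exact hdvd (Int.dvd_of_emod_eq_zero h0)
      have hrpos : 0 < r.toNat := by omega
      have : (F ^ r.toNat) x = x := by
        rw [← zpow_natCast]
        rw [Int.toNat_of_nonneg hrnonneg]
        exact hrfix
      exact Nat.find_min h (by omega : r.toNat < n₀) ⟨hrpos, this⟩
    · rintro ⟨q, rfl⟩
      rw [zpow_mul]
      exact perm_fixed_zpow hfixz q
  · simp only [Nat.cast_zero, zero_dvd_iff]
    constructor
    · intro hm
      by_contra h0
      have habs : ∀ k : ℤ, (F ^ k) x = x → 0 < k.toNat → False := by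
        intro k hk hkpos
        apply h
        refine ⟨k.toNat, hkpos, ?_⟩
        rw [← zpow_natCast, Int.toNat_of_nonneg (by omega)]
        exact hk
      rcases lt_or_gt_of_ne h0 with hneg | hpos
      · have : (F ^ (0 - m)) x = x := perm_fixed_sub F (by simp) hm
        exact habs _ this (by omega)
      · exact habs _ hm (by omega)
    · rintro rfl; simp

theorem permPer_congr {β : Type*} (F : Equiv.Perm β) {x y : β}
    (h : ∀ n : ℕ, 0 < n → ((F ^ n) x = x ↔ (F ^ n) y = y)) : permPer F x = permPer F y := by
  classical
  unfold permPer
  have hiff : (∃ n, 0 < n ∧ (F ^ n) x = x) ↔ (∃ n, 0 < n ∧ (F ^ n) y = y) := by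
    constructor
    · rintro ⟨n, hn, hfix⟩; exact ⟨n, hn, (h n hn).mp hfix⟩
    · rintro ⟨n, hn, hfix⟩; exact ⟨n, hn, (h n hn).mpr hfix⟩
  split_ifs with h1 h2 h2
  · apply le_antisymm
    · exact Nat.find_le ⟨(Nat.find_spec h2).1, (h _ (Nat.find_spec h2).1).mpr (Nat.find_spec h2).2⟩
    · exact Nat.find_le ⟨(Nat.find_spec h1).1, (h _ (Nat.find_spec h1).1).mp (Nat.find_spec h1).2⟩
  · exact absurd (hiff.mp h1) h2
  · exact absurd (hiff.mpr h2) h1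
  · rfl

theorem permPer_zpow {β : Type*} (F : Equiv.Perm β) (x : β) (k : ℤ) :
    permPer F ((F ^ k) x) = permPer F x := by
  apply permPer_congr
  intro n hn
  have hcomm : ∀ z : β, (F ^ n) ((F ^ k) z) = (F ^ k) ((F ^ n) z) := by
    intro z
    rw [← zpow_natCast, ← perm_zpow_apply_comm, ← perm_zpow_apply_comm, add_comm]
  rw [hcomm]
  exact ⟨fun hh => (F ^ k).injective hh, fun hh => by rw [hh]⟩

/-- Transfer of fixedness along equal periods. -/
theorem perm_fixed_of_permPer_eq {β : Type*} (F : Equiv.Perm β) {x y : β}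
    (h : permPer F x = permPer F y) {m : ℤ} (hm : (F ^ m) x = x) : (F ^ m) y = y := by
  rw [perm_zpow_fixed_iff] at hm ⊢
  rw [← h]; exact hm

end

/-- The orbit setoid of a permutation. -/
def orbitSetoid {β : Type*} (F : Equiv.Perm β) : Setoid β where
  r x y := ∃ k : ℤ, (F ^ k) x = y
  iseqv := by
    constructor
    · intro x; exact ⟨0, rfl⟩
    · rintro x y ⟨k, rfl⟩
      exact ⟨-k, by rw [← perm_zpow_apply_comm]; simp⟩
    · rintro x y z ⟨k, rfl⟩ ⟨l, rfl⟩
      exact ⟨l + k, by rw [perm_zpow_apply_comm]⟩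

theorem exists_perm_extend_invariant {β : Type*} (F : Equiv.Perm β) (E E' : Set β) (h : β → β)
    (hEiff : ∀ x, x ∈ E ↔ F x ∈ E) (hE'iff : ∀ y, y ∈ E' ↔ F y ∈ E')
    (hmaps : ∀ x ∈ E, h x ∈ E')
    (hinj : ∀ x ∈ E, ∀ y ∈ E, h x = h y → x = y)
    (hsurj : ∀ y ∈ E', ∃ x ∈ E, h x = y)
    (hcomm : ∀ x ∈ E, h (F x) = F (h x))
    (G : Set β) (hG : G.Finite) (hgen : ∀ x ∈ E, ∃ y ∈ G, ∃ k : ℤ, (F ^ k) y = x) :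
    ∃ θ : Equiv.Perm β, (∀ x, θ (F x) = F (θ x)) ∧ ∀ x ∈ E, θ x = h x := by
  classical
  -- membership in E is invariant under all integer powers
  have hEpow : ∀ (n : ℕ) (x : β), (F ^ n) x ∈ E ↔ x ∈ E := by
    intro n
    induction n with
    | zero => intro x; simp
    | succ n ih =>
      intro x
      rw [pow_succ, Equiv.Perm.mul_apply, ih (F x), ← hEiff]
  have hEz : ∀ (k : ℤ) (x : β), (F ^ k) x ∈ E ↔ x ∈ E := by
    intro k x
    rcases k with n | n
    · rw [Int.ofNat_eq_coe, zpow_natCast]; exact hEpow n x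
    · rw [zpow_negSucc]
      constructor
      · intro hx
        have := (hEpow (n + 1) ((F ^ (n + 1))⁻¹ x)).mpr hx
        simpa using this
      · intro hx
        apply (hEpow (n + 1) ((F ^ (n + 1))⁻¹ x)).mp
        simpa using hx
  have hE'pow : ∀ (n : ℕ) (y : β), (F ^ n) y ∈ E' ↔ y ∈ E' := by
    intro n
    induction n with
    | zero => intro x; simp
    | succ n ih =>
      intro x
      rw [pow_succ, Equiv.Perm.mul_apply, ih (F x), ← hE'iff]
  have hE'z : ∀ (k : ℤ) (y : β), (F ^ k) y ∈ E' ↔ y ∈ E' := by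
    intro k x
    rcases k with n | n
    · rw [Int.ofNat_eq_coe, zpow_natCast]; exact hE'pow n x
    · rw [zpow_negSucc]
      constructor
      · intro hx
        have := (hE'pow (n + 1) ((F ^ (n + 1))⁻¹ x)).mpr hx
        simpa using this
      · intro hx
        apply (hE'pow (n + 1) ((F ^ (n + 1))⁻¹ x)).mp
        simpa using hx
  -- h commutes with all integer powers of F on E
  have hcomm' : ∀ x ∈ E, h (F⁻¹ x) = F⁻¹ (h x) := by
    intro x hx
    have hx' : F⁻¹ x ∈ E := by
      rw [hEiff (F⁻¹ x)]; simpa using hx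
    have := hcomm (F⁻¹ x) hx'
    rw [show F (F⁻¹ x) = x from by simp] at this
    rw [this]; simp
  have hcommn : ∀ (n : ℕ), ∀ x ∈ E, h ((F ^ n) x) = (F ^ n) (h x) := by
    intro n
    induction n with
    | zero => intro x _; rfl
    | succ n ih =>
      intro x hx
      rw [pow_succ', Equiv.Perm.mul_apply, Equiv.Perm.mul_apply]
      rw [hcomm _ ((hEpow n x).mpr hx), ih x hx]
  have hcommz : ∀ (k : ℤ), ∀ x ∈ E, h ((F ^ k) x) = (F ^ k) (h x) := by
    intro k
    rcases k with n | n
    · intro x hx; rw [Int.ofNat_eq_coe, zpow_natCast]; exact hcommn n x hx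
    · intro x hx
      rw [zpow_negSucc]
      have hmem : (F ^ (n + 1))⁻¹ x ∈ E := by
        rw [← hEpow (n + 1) ((F ^ (n + 1))⁻¹ x)]; simpa using hx
      have := hcommn (n + 1) _ hmem
      simp only [show (F ^ (n + 1)) ((F ^ (n + 1))⁻¹ x) = x from by simp] at this
      rw [this]; simp
  -- choose preimages under h
  choose invh hinvhE hinvh using hsurj
  letI rs : Setoid β := orbitSetoid F
  -- the period function on the quotient
  let perQ : Quotient rs → ℕ := Quotient.lift (permPer F) (by
    rintro a b ⟨k, rfl⟩
    exact (permPer_zpow F a k).symm)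
  have perQ_mk : ∀ a : β, perQ ⟦a⟧ = permPer F a := fun a => rfl
  have perQ_out : ∀ q : Quotient rs, perQ q = permPer F q.out := by
    intro q
    conv_lhs => rw [← Quotient.out_eq q]
    rfl
  let QE : Set (Quotient rs) := {q | ∃ x ∈ E, ⟦x⟧ = q}
  let QE' : Set (Quotient rs) := {q | ∃ y ∈ E', ⟦y⟧ = q}
  have hQE : ∀ x : β, (⟦x⟧ : Quotient rs) ∈ QE ↔ x ∈ E := by
    intro x
    constructor
    · rintro ⟨y, hy, hxy⟩
      obtain ⟨k, rfl⟩ := Quotient.exact hxy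
      exact (hEz k y).mpr hy
    · intro hx; exact ⟨x, hx, rfl⟩
  have hQE' : ∀ y : β, (⟦y⟧ : Quotient rs) ∈ QE' ↔ y ∈ E' := by
    intro x
    constructor
    · rintro ⟨y, hy, hxy⟩
      obtain ⟨k, rfl⟩ := Quotient.exact hxy
      exact (hE'z k y).mpr hy
    · intro hx; exact ⟨x, hx, rfl⟩
  -- the induced map on the quotient
  let ufun : Quotient rs → Quotient rs := Quotient.lift
    (fun x => if x ∈ E then (⟦h x⟧ : Quotient rs) else ⟦x⟧) (by
    rintro a b ⟨k, rfl⟩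
    by_cases ha : a ∈ E
    · rw [if_pos ha, if_pos ((hEz k a).mpr ha)]
      exact Quotient.sound ⟨k, (hcommz k a ha).symm⟩
    · rw [if_neg ha, if_neg (fun hm => ha ((hEz k a).mp hm))]
      exact Quotient.sound ⟨k, rfl⟩)
  have ufun_mk : ∀ x ∈ E, ufun ⟦x⟧ = ⟦h x⟧ := by
    intro x hx
    show (if x ∈ E then (⟦h x⟧ : Quotient rs) else ⟦x⟧) = ⟦h x⟧
    rw [if_pos hx]
  have humem : ∀ q : ↥QE, ufun q.1 ∈ QE' := by
    rintro ⟨q, x, hx, rfl⟩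
    rw [ufun_mk x hx]
    exact ⟨h x, hmaps x hx, rfl⟩
  have hubij : Function.Bijective (fun q : ↥QE => (⟨ufun q.1, humem q⟩ : ↥QE')) := by
    constructor
    · rintro ⟨q₁, x₁, hx₁, rfl⟩ ⟨q₂, x₂, hx₂, rfl⟩ hq
      have hval : ufun ⟦x₁⟧ = ufun ⟦x₂⟧ := congrArg Subtype.val hq
      rw [ufun_mk x₁ hx₁, ufun_mk x₂ hx₂] at hval
      obtain ⟨k, hk⟩ := Quotient.exact hval
      rw [← hcommz k x₁ hx₁] at hk
      have := hinj _ ((hEz k x₁).mpr hx₁) _ hx₂ hk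
      exact Subtype.ext (Quotient.sound ⟨k, this⟩)
    · rintro ⟨q', y, hy, rfl⟩
      refine ⟨⟨⟦invh y hy⟧, (hQE _).mpr (hinvhE y hy)⟩, Subtype.ext ?_⟩
      show ufun ⟦invh y hy⟧ = ⟦y⟧
      rw [ufun_mk _ (hinvhE y hy), hinvh y hy]
  let u : ↥QE ≃ ↥QE' := Equiv.ofBijective _ hubij
  have hu : ∀ q : ↥QE, perQ ↑(u q) = perQ ↑q := by
    rintro ⟨q, x, hx, rfl⟩
    show perQ (ufun ⟦x⟧) = perQ ⟦x⟧
    rw [ufun_mk x hx, perQ_mk, perQ_mk]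
    apply permPer_congr
    intro n hn
    constructor
    · intro hfix
      rw [← hcommn n x hx] at hfix
      exact hinj _ ((hEpow n x).mpr hx) _ hx hfix
    · intro hfix
      rw [← hcommn n x hx, hfix]
  have hQEfin : QE.Finite := by
    apply Set.Finite.subset (hG.image (fun y => (⟦y⟧ : Quotient rs)))
    rintro q ⟨x, hx, rfl⟩
    obtain ⟨y, hyG, k, hk⟩ := hgen x hx
    exact ⟨y, hyG, Quotient.sound ⟨k, hk⟩⟩
  have hQE'fin : QE'.Finite := by
    apply Set.Finite.subset (hQEfin.image ufun)
    rintro q ⟨y, hy, rfl⟩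
    obtain ⟨x, hx, hhx⟩ : ∃ x ∈ E, h x = y := ⟨invh y hy, hinvhE y hy, hinvh y hy⟩
    refine ⟨⟦x⟧, (hQE x).mpr hx, ?_⟩
    rw [ufun_mk x hx, hhx]
  obtain ⟨v, hv⟩ := exists_compl_equiv_fiber perQ QE QE' hQEfin hQE'fin u hu
  -- notation for the canonical exponent
  have hexp : ∀ x : β, ∃ k : ℤ, (F ^ k) (⟦x⟧ : Quotient rs).out = x :=
    fun x => Quotient.exact (Quotient.out_eq ⟦x⟧)
  set kk : β → ℤ := fun x => Classical.choose (hexp x) with hkkdef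
  have hkk : ∀ x : β, (F ^ kk x) (⟦x⟧ : Quotient rs).out = x :=
    fun x => Classical.choose_spec (hexp x)
  -- transfer of relations between points with equal periods
  have key : ∀ (q q' : Quotient rs), perQ q = perQ q' → ∀ k l : ℤ,
      (F ^ k) q.out = (F ^ l) q.out → (F ^ k) q'.out = (F ^ l) q'.out := by
    intro q q' hper k l heq
    have h1 : (F ^ (k - l)) q.out = q.out := by
      have h2 : (F ^ (-l)) ((F ^ k) q.out) = (F ^ (-l)) ((F ^ l) q.out) := by rw [heq]
      rw [← perm_zpow_apply_comm, ← perm_zpow_apply_comm] at h2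
      rw [sub_eq_add_neg, add_comm]
      rw [h2]
      rw [neg_add_cancel]
      rfl
    have hperout : permPer F q.out = permPer F q'.out := by
      rw [← perQ_out, ← perQ_out, hper]
    have h2 : (F ^ (k - l)) q'.out = q'.out := perm_fixed_of_permPer_eq F hperout h1
    calc (F ^ k) q'.out = (F ^ (l + (k - l))) q'.out := by norm_num
    _ = (F ^ l) ((F ^ (k - l)) q'.out) := perm_zpow_apply_comm F _ _ _
    _ = (F ^ l) q'.out := by rw [h2]
  have hmkE : ∀ x : β, x ∉ E → (⟦x⟧ : Quotient rs) ∉ QE := fun x hx hq => hx ((hQE x).mp hq)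
  have hmkE' : ∀ y : β, y ∉ E' → (⟦y⟧ : Quotient rs) ∉ QE' := fun y hy hq => hy ((hQE' y).mp hq)
  -- the two halves of the desired permutation
  set θf : β → β := fun x => if hx : x ∈ E then h x
    else (F ^ kk x) (v ⟨⟦x⟧, hmkE x hx⟩).1.out with hθfdef
  set θi : β → β := fun y => if hy : y ∈ E' then invh y hy
    else (F ^ kk y) (v.symm ⟨⟦y⟧, hmkE' y hy⟩).1.out with hθidef
  have hθf_pos : ∀ x (hx : x ∈ E), θf x = h x := fun x hx => dif_pos hx
  have hθf_neg : ∀ x (hx : x ∉ E),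
      θf x = (F ^ kk x) (v ⟨⟦x⟧, hmkE x hx⟩).1.out := fun x hx => dif_neg hx
  have hθi_pos : ∀ y (hy : y ∈ E'), θi y = invh y hy := fun y hy => dif_pos hy
  have hθi_neg : ∀ y (hy : y ∉ E'),
      θi y = (F ^ kk y) (v.symm ⟨⟦y⟧, hmkE' y hy⟩).1.out := fun y hy => dif_neg hy
  have hmkzpow : ∀ (k : ℤ) (a : β), (⟦(F ^ k) a⟧ : Quotient rs) = ⟦a⟧ :=
    fun k a => (Quotient.sound (⟨k, rfl⟩ : ∃ j : ℤ, (F ^ j) a = (F ^ k) a)).symm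
  have ha1 : ∀ x (hx : x ∉ E), (⟦θf x⟧ : Quotient rs) = ↑(v ⟨⟦x⟧, hmkE x hx⟩) := by
    intro x hx
    rw [hθf_neg x hx, hmkzpow, Quotient.out_eq]
  have ha2 : ∀ x (hx : x ∉ E), θf x ∉ E' := by
    intro x hx hmem
    exact (v ⟨⟦x⟧, hmkE x hx⟩).2 ((ha1 x hx) ▸ (hQE' (θf x)).mpr hmem)
  have ha1' : ∀ y (hy : y ∉ E'), (⟦θi y⟧ : Quotient rs) = ↑(v.symm ⟨⟦y⟧, hmkE' y hy⟩) := by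
    intro y hy
    rw [hθi_neg y hy, hmkzpow, Quotient.out_eq]
  have ha2' : ∀ y (hy : y ∉ E'), θi y ∉ E := by
    intro y hy hmem
    exact (v.symm ⟨⟦y⟧, hmkE' y hy⟩).2 ((ha1' y hy) ▸ (hQE (θi y)).mpr hmem)
  have hv' : ∀ w, perQ ↑(v.symm w) = perQ ↑w := by
    intro w
    have := hv (v.symm w)
    rw [v.apply_symm_apply] at this
    exact this.symm
  -- left inverse
  have hleft : ∀ x, θi (θf x) = x := by
    intro x
    by_cases hx : x ∈ E
    · rw [hθf_pos x hx, hθi_pos (h x) (hmaps x hx)]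
      exact hinj _ (hinvhE _ (hmaps x hx)) _ hx (hinvh _ (hmaps x hx))
    · have hy := ha2 x hx
      rw [hθi_neg (θf x) hy]
      have hsub : (⟨⟦θf x⟧, hmkE' (θf x) hy⟩ : {q // q ∉ QE'}) = v ⟨⟦x⟧, hmkE x hx⟩ :=
        Subtype.ext (ha1 x hx)
      rw [hsub, v.symm_apply_apply]
      have heq1 : (F ^ kk (θf x)) (v ⟨⟦x⟧, hmkE x hx⟩).1.out
          = (F ^ kk x) (v ⟨⟦x⟧, hmkE x hx⟩).1.out := by
        have h5 := hkk (θf x)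
        rw [ha1 x hx] at h5
        rw [h5, hθf_neg x hx]
      have hper : perQ (v ⟨⟦x⟧, hmkE x hx⟩).1 = perQ (⟦x⟧ : Quotient rs) :=
        hv ⟨⟦x⟧, hmkE x hx⟩
      have := key _ _ hper _ _ heq1
      rw [hkk x] at this
      rw [this]
  -- right inverse
  have hright : ∀ y, θf (θi y) = y := by
    intro y
    by_cases hy : y ∈ E'
    · rw [hθi_pos y hy, hθf_pos _ (hinvhE y hy)]
      exact hinvh y hy
    · have hx := ha2' y hy
      rw [hθf_neg (θi y) hx]
      have hsub : (⟨⟦θi y⟧, hmkE (θi y) hx⟩ : {q // q ∉ QE}) = v.symm ⟨⟦y⟧, hmkE' y hy⟩ :=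
        Subtype.ext (ha1' y hy)
      rw [hsub, v.apply_symm_apply]
      have heq1 : (F ^ kk (θi y)) (v.symm ⟨⟦y⟧, hmkE' y hy⟩).1.out
          = (F ^ kk y) (v.symm ⟨⟦y⟧, hmkE' y hy⟩).1.out := by
        have h5 := hkk (θi y)
        rw [ha1' y hy] at h5
        rw [h5, hθi_neg y hy]
      have hper : perQ (v.symm ⟨⟦y⟧, hmkE' y hy⟩).1 = perQ (⟦y⟧ : Quotient rs) :=
        hv' ⟨⟦y⟧, hmkE' y hy⟩
      have := key _ _ hper _ _ heq1
      rw [hkk y] at this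
      rw [this]
  -- commutation with F
  have hcommθ : ∀ x, θf (F x) = F (θf x) := by
    intro x
    by_cases hx : x ∈ E
    · rw [hθf_pos x hx, hθf_pos (F x) ((hEiff x).mp hx)]
      exact hcomm x hx
    · have hFx : F x ∉ E := fun hm => hx ((hEiff x).mpr hm)
      rw [hθf_neg (F x) hFx, hθf_neg x hx]
      have hm : (⟦F x⟧ : Quotient rs) = ⟦x⟧ := by
        have := hmkzpow 1 x
        rw [zpow_one] at this
        exact this
      have hsub : (⟨⟦F x⟧, hmkE (F x) hFx⟩ : {q // q ∉ QE}) = ⟨⟦x⟧, hmkE x hx⟩ :=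
        Subtype.ext hm
      rw [hsub]
      have heq1 : (F ^ kk (F x)) (⟦x⟧ : Quotient rs).out
          = (F ^ (1 + kk x)) (⟦x⟧ : Quotient rs).out := by
        have h1 := hkk (F x)
        rw [hm] at h1
        rw [h1, perm_zpow_apply_comm, zpow_one, hkk x]
      have hper : perQ (⟦x⟧ : Quotient rs) = perQ (v ⟨⟦x⟧, hmkE x hx⟩).1 :=
        (hv ⟨⟦x⟧, hmkE x hx⟩).symm
      have h2 := key _ _ hper _ _ heq1
      rw [h2, perm_zpow_apply_comm, zpow_one]
  refine ⟨⟨θf, θi, hleft, hright⟩, hcommθ, fun x hx => hθf_pos x hx⟩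


theorem perm_set_zpow_iff {β : Type*} (F : Equiv.Perm β) (E : Set β)
    (hiff : ∀ x, x ∈ E ↔ F x ∈ E) : ∀ (k : ℤ) (x : β), (F ^ k) x ∈ E ↔ x ∈ E := by
  have hpow : ∀ (n : ℕ) (x : β), (F ^ n) x ∈ E ↔ x ∈ E := by
    intro n
    induction n with
    | zero => intro x; simp
    | succ n ih =>
      intro x
      rw [pow_succ, Equiv.Perm.mul_apply, ih (F x), ← hiff]
  intro k x
  rcases k with n | n
  · rw [Int.ofNat_eq_coe, zpow_natCast]; exact hpow n x
  · rw [zpow_negSucc]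
    constructor
    · intro hx
      have := (hpow (n + 1) ((F ^ (n + 1))⁻¹ x)).mpr hx
      simpa using this
    · intro hx
      apply (hpow (n + 1) ((F ^ (n + 1))⁻¹ x)).mp
      simpa using hx

theorem exists_perm_extend {β : Type*} (F : Equiv.Perm β) (E E' : Set β) (h : β → β)
    (hEf : ∀ x ∈ E, F x ∈ E) (hE'f : ∀ y ∈ E', F y ∈ E')
    (hmaps : ∀ x ∈ E, h x ∈ E')
    (hinj : ∀ x ∈ E, ∀ y ∈ E, h x = h y → x = y)
    (hsurj : ∀ y ∈ E', ∃ x ∈ E, h x = y)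
    (hcomm : ∀ x ∈ E, h (F x) = F (h x))
    (G : Set β) (hG : G.Finite) (hgen : ∀ x ∈ E, ∃ y ∈ G, ∃ k : ℤ, (F ^ k) y = x) :
    ∃ θ : Equiv.Perm β, (∀ x, θ (F x) = F (θ x)) ∧ ∀ x ∈ E, θ x = h x := by
  classical
  have hpowc : ∀ (n : ℕ) (x : β), (F ^ n) (F x) = F ((F ^ n) x) := by
    intro n x
    rw [← Equiv.Perm.mul_apply, ← pow_succ, pow_succ', Equiv.Perm.mul_apply]
  have hEfn : ∀ (n : ℕ), ∀ x ∈ E, (F ^ n) x ∈ E := by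
    intro n
    induction n with
    | zero => intro x hx; simpa using hx
    | succ n ih =>
      intro x hx
      rw [pow_succ, Equiv.Perm.mul_apply]
      exact ih (F x) (hEf x hx)
  have hE'fn : ∀ (n : ℕ), ∀ y ∈ E', (F ^ n) y ∈ E' := by
    intro n
    induction n with
    | zero => intro x hx; simpa using hx
    | succ n ih =>
      intro x hx
      rw [pow_succ, Equiv.Perm.mul_apply]
      exact ih (F x) (hE'f x hx)
  have hcommn : ∀ (n : ℕ), ∀ x ∈ E, h ((F ^ n) x) = (F ^ n) (h x) := by
    intro n
    induction n with
    | zero => intro x _; rfl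
    | succ n ih =>
      intro x hx
      rw [pow_succ', Equiv.Perm.mul_apply, Equiv.Perm.mul_apply]
      rw [hcomm _ (hEfn n x hx), ih x hx]
  have hcancel : ∀ (k : ℤ) (w : β), (F ^ k) ((F ^ (-k)) w) = w := by
    intro k w
    rw [← perm_zpow_apply_comm]
    simp
  set Eb : Set β := {x | ∃ n : ℕ, (F ^ n) x ∈ E} with hEbdef
  set Eb' : Set β := {y | ∃ n : ℕ, (F ^ n) y ∈ E'} with hEb'def
  have hEsub : E ⊆ Eb := fun x hx => ⟨0, by simpa using hx⟩
  have hE'sub : E' ⊆ Eb' := fun x hx => ⟨0, by simpa using hx⟩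
  have hEbiff : ∀ x, x ∈ Eb ↔ F x ∈ Eb := by
    intro x
    constructor
    · rintro ⟨n, hn⟩
      exact ⟨n, by rw [hpowc]; exact hEf _ hn⟩
    · rintro ⟨n, hn⟩
      exact ⟨n + 1, by rw [pow_succ, Equiv.Perm.mul_apply]; exact hn⟩
  have hEb'iff : ∀ y, y ∈ Eb' ↔ F y ∈ Eb' := by
    intro x
    constructor
    · rintro ⟨n, hn⟩
      exact ⟨n, by rw [hpowc]; exact hE'f _ hn⟩
    · rintro ⟨n, hn⟩
      exact ⟨n + 1, by rw [pow_succ, Equiv.Perm.mul_apply]; exact hn⟩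
  have hEbz := perm_set_zpow_iff F Eb hEbiff
  have hEb'z := perm_set_zpow_iff F Eb' hEb'iff
  -- the saturated extension of h
  set hb : β → β := fun x => if hx : ∃ n : ℕ, (F ^ n) x ∈ E then
    (F ^ (-(Nat.find hx : ℤ))) (h ((F ^ Nat.find hx) x)) else x with hhbdef
  have hstep : ∀ (x : β) (n m : ℕ), n ≤ m → (F ^ n) x ∈ E →
      (F ^ (-(n:ℤ))) (h ((F ^ n) x)) = (F ^ (-(m:ℤ))) (h ((F ^ m) x)) := by
    intro x n m hnm hn
    have hj : (F ^ (m - n)) ((F ^ n) x) = (F ^ m) x := by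
      rw [← Equiv.Perm.mul_apply, ← pow_add]
      congr 2
      omega
    have h1 : h ((F ^ m) x) = (F ^ (m - n)) (h ((F ^ n) x)) := by
      rw [← hj, hcommn (m - n) _ hn]
    rw [h1, ← zpow_natCast F (m - n), ← perm_zpow_apply_comm]
    have hexp : -(n:ℤ) = -(m:ℤ) + ((m - n : ℕ) : ℤ) := by omega
    rw [← hexp]
  have hind : ∀ (x : β) (hx : ∃ n : ℕ, (F ^ n) x ∈ E) (m : ℕ), (F ^ m) x ∈ E →
      hb x = (F ^ (-(m:ℤ))) (h ((F ^ m) x)) := by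
    intro x hx m hm
    rw [hhbdef]
    simp only [dif_pos hx]
    rcases le_total (Nat.find hx) m with hle | hle
    · exact hstep x _ m hle (Nat.find_spec hx)
    · exact (hstep x m _ hle hm).symm
  have hbE : ∀ x ∈ E, hb x = h x := by
    intro x hx
    have h0 : (F ^ (0:ℕ)) x ∈ E := by simpa using hx
    rw [hind x ⟨0, h0⟩ 0 h0]
    simp
  have hbmaps : ∀ x ∈ Eb, hb x ∈ Eb' := by
    rintro x ⟨n, hn⟩
    rw [hind x ⟨n, hn⟩ n hn]
    exact (hEb'z _ _).mpr (hE'sub (hmaps _ hn))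
  have hbinj : ∀ x ∈ Eb, ∀ y ∈ Eb, hb x = hb y → x = y := by
    rintro x ⟨n, hn⟩ y ⟨m, hm⟩ hxy
    have hnN : (F ^ (n + m)) x ∈ E := by
      rw [add_comm, pow_add, Equiv.Perm.mul_apply]
      exact hEfn m _ hn
    have hmN : (F ^ (n + m)) y ∈ E := by
      rw [pow_add, Equiv.Perm.mul_apply]
      exact hEfn n _ hm
    rw [hind x ⟨n, hn⟩ _ hnN, hind y ⟨m, hm⟩ _ hmN] at hxy
    have h2 := congrArg (fun w => (F ^ ((n + m : ℕ) : ℤ)) w) hxy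
    simp only [hcancel] at h2
    have h3 := hinj _ hnN _ hmN h2
    have h4 := congrArg (fun w => (F ^ (-((n + m : ℕ) : ℤ))) w) h3
    rw [← zpow_natCast F (n + m), ← perm_zpow_apply_comm, ← perm_zpow_apply_comm] at h4
    simpa using h4
  have hbsurj : ∀ y ∈ Eb', ∃ x ∈ Eb, hb x = y := by
    rintro y ⟨n, hn⟩
    obtain ⟨x₀, hx₀, hhx₀⟩ := hsurj _ hn
    refine ⟨(F ^ (-(n:ℤ))) x₀, ?_, ?_⟩
    · have : (F ^ (n:ℤ)) ((F ^ (-(n:ℤ))) x₀) = x₀ := hcancel n x₀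
      refine ⟨n, ?_⟩
      rw [← zpow_natCast, this]
      exact hx₀
    · have hmem : (F ^ n) ((F ^ (-(n:ℤ))) x₀) ∈ E := by
        rw [← zpow_natCast, hcancel]
        exact hx₀
      rw [hind _ ⟨n, hmem⟩ n hmem, ← zpow_natCast F n, hcancel, hhx₀,
        ← zpow_natCast F n, ← perm_zpow_apply_comm]
      simp
  have hbcomm : ∀ x ∈ Eb, hb (F x) = F (hb x) := by
    rintro x ⟨n, hn⟩
    have hn1 : (F ^ n) (F x) ∈ E := by
      rw [hpowc]
      exact hEf _ hn
    have hn2 : (F ^ (n + 1)) x ∈ E := by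
      rw [pow_succ, Equiv.Perm.mul_apply]
      exact hn1
    rw [hind (F x) ⟨n, hn1⟩ n hn1, hind x ⟨n + 1, hn2⟩ (n + 1) hn2]
    have hrw : (F ^ n) (F x) = (F ^ (n + 1)) x := by
      rw [pow_succ, Equiv.Perm.mul_apply]
    have hFz : ∀ (u : β) (m : ℤ), F ((F ^ m) u) = (F ^ (1 + m)) u := by
      intro u m
      rw [perm_zpow_apply_comm, zpow_one]
    rw [hrw, hFz]
    congr 2
    omega
  have hbgen : ∀ x ∈ Eb, ∃ y ∈ G, ∃ k : ℤ, (F ^ k) y = x := by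
    rintro x ⟨n, hn⟩
    obtain ⟨y, hyG, k, hk⟩ := hgen _ hn
    refine ⟨y, hyG, k - n, ?_⟩
    have h1 : (F ^ (-(n:ℤ))) ((F ^ k) y) = (F ^ (-(n:ℤ))) ((F ^ n) x) := by rw [hk]
    rw [← perm_zpow_apply_comm] at h1
    rw [← zpow_natCast F n, ← perm_zpow_apply_comm] at h1
    simp only [neg_add_cancel] at h1
    rw [sub_eq_add_neg, add_comm, h1]
    simp
  obtain ⟨θ, hθcomm, hθext⟩ := exists_perm_extend_invariant F Eb Eb' hb hEbiff hEb'iff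
    hbmaps hbinj hbsurj hbcomm G hG hbgen
  refine ⟨θ, hθcomm, fun x hx => ?_⟩
  rw [hθext x (hEsub hx), hbE x hx]

/-- The set of elements with arbitrarily deep preimages. -/
def BinfInj {α : Type*} (f : α → α) : Set α := ⋂ n : ℕ, Set.range f^[n]

section InjLemmas

variable {α : Type*} {f : α → α} {s : Set α}

theorem mem_BinfInj {x : α} : x ∈ BinfInj f ↔ ∀ n : ℕ, ∃ y, f^[n] y = x := by
  simp [BinfInj, Set.mem_iInter, Set.mem_range]

theorem clInj_succ {x : α} (hx : x ∈ clInj f s) : f x ∈ clInj f s := by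
  obtain ⟨x₀, hx₀, n, rfl⟩ := hx
  exact ⟨x₀, hx₀, n + 1, (Function.iterate_succ_apply' f n x₀)⟩

theorem clInj_iterate (n : ℕ) {x : α} (hx : x ∈ clInj f s) : f^[n] x ∈ clInj f s := by
  induction n with
  | zero => exact hx
  | succ n ih =>
    rw [Function.iterate_succ_apply']
    exact clInj_succ ih

theorem BinfInj_mem_f {x : α} (hx : x ∈ BinfInj f) : f x ∈ BinfInj f := by
  rw [mem_BinfInj] at hx ⊢
  intro n
  obtain ⟨y, rfl⟩ := hx n
  exact ⟨f y, by rw [← Function.iterate_succ_apply, Function.iterate_succ_apply']⟩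

theorem BinfInj_of_f (hf : Function.Injective f) {x : α} (hx : f x ∈ BinfInj f) :
    x ∈ BinfInj f := by
  rw [mem_BinfInj] at hx ⊢
  intro n
  obtain ⟨y, hy⟩ := hx (n + 1)
  rw [Function.iterate_succ_apply'] at hy
  exact ⟨y, hf hy⟩

theorem BinfInj_of_iterate (hf : Function.Injective f) (n : ℕ) {x : α}
    (hx : f^[n] x ∈ BinfInj f) : x ∈ BinfInj f := by
  induction n with
  | zero => exact hx
  | succ n ih =>
    rw [Function.iterate_succ_apply'] at hx
    exact ih (BinfInj_of_f hf hx)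

theorem root_of_not_mem_BinfInj {x : α} (hx : x ∉ BinfInj f) :
    ∃ a d, a ∉ Set.range f ∧ f^[d] a = x := by
  have hex : ∃ n : ℕ, x ∉ Set.range f^[n] := by
    by_contra hc
    push_neg at hc
    exact hx (Set.mem_iInter.mpr hc)
  obtain ⟨n, hn⟩ := hex
  clear hx
  induction n generalizing x with
  | zero => exact absurd ⟨x, rfl⟩ hn
  | succ n ih =>
    by_cases hxr : x ∈ Set.range f
    · obtain ⟨y, rfl⟩ := hxr
      have hy : y ∉ Set.range f^[n] := by
        rintro ⟨z, rfl⟩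
        exact hn ⟨z, by rw [Function.iterate_succ_apply']⟩
      obtain ⟨a, d, ha, rfl⟩ := ih hy
      exact ⟨a, d + 1, ha, by rw [Function.iterate_succ_apply']⟩
    · exact ⟨x, 0, hxr, rfl⟩

theorem orbit_iter (hf : Function.Injective f) {a : α} (ha : a ∉ Set.range f) {x : α}
    (hx : x ∈ orbitInj f a) : ∃ e, f^[e] a = x := by
  obtain ⟨m, n, hmn⟩ := hx
  induction m generalizing n with
  | zero => exact ⟨n, hmn.symm⟩
  | succ m ih =>
    cases n with
    | zero =>
      rw [Function.iterate_succ_apply'] at hmn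
      exact absurd ⟨f^[m] x, hmn⟩ ha
    | succ n =>
      rw [Function.iterate_succ_apply', Function.iterate_succ_apply'] at hmn
      exact ih n (hf hmn)

end InjLemmas

theorem omega_fixed {α : Type*} (f : α → α) (hf : Function.Injective f) (S : Set α)
    (hone : ∀ a : α, a ∉ Set.range f → ∃! x : α, x ∈ S ∩ orbitInj f a)
    (s t : Set α) (hSs : S ⊆ clInj f s)
    (φ : ↥(clInj f s) ≃ ↥(clInj f t))
    (hφc : ∀ x y : ↥(clInj f s), (y : α) = f x → ((φ y : ↥(clInj f t)) : α) = f (φ x))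
    (hφS : ∀ x : ↥(clInj f s), (x : α) ∈ S → ((φ x : ↥(clInj f t)) : α) = x) :
    ∀ (x : α) (hx : x ∈ clInj f s), x ∉ BinfInj f →
      ((φ ⟨x, hx⟩ : ↥(clInj f t)) : α) = x := by
  have hφiter : ∀ (n : ℕ) (x : α) (hx : x ∈ clInj f s) (hx' : f^[n] x ∈ clInj f s),
      ((φ ⟨f^[n] x, hx'⟩ : ↥(clInj f t)) : α) = f^[n] ((φ ⟨x, hx⟩ : ↥(clInj f t)) : α) := by
    intro n
    induction n with
    | zero => intro x hx hx'; rfl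
    | succ n ih =>
      intro x hx hx'
      have h1 : f^[n] x ∈ clInj f s := clInj_iterate n hx
      have h2 : (⟨f^[n + 1] x, hx'⟩ : ↥(clInj f s)).1 = f ((⟨f^[n] x, h1⟩ : ↥(clInj f s)) : α) :=
        Function.iterate_succ_apply' f n x
      rw [hφc ⟨f^[n] x, h1⟩ ⟨f^[n + 1] x, hx'⟩ h2, ih x hx h1]
      exact (Function.iterate_succ_apply' f n _).symm
  intro x hx hxB
  obtain ⟨a, d, ha, hda⟩ := root_of_not_mem_BinfInj hxB
  obtain ⟨xS, ⟨hxSS, hxSo⟩, -⟩ := hone a ha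
  obtain ⟨e, he⟩ := orbit_iter hf ha hxSo
  have hxScl : xS ∈ clInj f s := hSs hxSS
  have hfix : ∀ (n : ℕ) (h' : f^[n] xS ∈ clInj f s),
      ((φ ⟨f^[n] xS, h'⟩ : ↥(clInj f t)) : α) = f^[n] xS := by
    intro n h'
    rw [hφiter n xS hxScl h', hφS ⟨xS, hxScl⟩ hxSS]
  rcases le_total e d with hed | hde
  · have hxeq : f^[d - e] xS = x := by
      rw [← he, ← Function.iterate_add_apply, ← hda]
      congr 1
      omega
    have h' : f^[d - e] xS ∈ clInj f s := clInj_iterate _ hxScl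
    have h4 : (⟨x, hx⟩ : ↥(clInj f s)) = ⟨f^[d - e] xS, h'⟩ := Subtype.ext hxeq.symm
    rw [h4, hfix (d - e) h', hxeq]
  · have hxSeq : f^[e - d] x = xS := by
      rw [← hda, ← Function.iterate_add_apply, ← he]
      congr 1
      omega
    have h' : f^[e - d] x ∈ clInj f s := clInj_iterate _ hx
    have h3 := hφiter (e - d) x hx h'
    have h4 : (⟨f^[e - d] x, h'⟩ : ↥(clInj f s)) = ⟨xS, hxScl⟩ := Subtype.ext hxSeq
    rw [h4, hφS ⟨xS, hxScl⟩ hxSS] at h3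
    have h5 : f^[e - d] ((φ ⟨x, hx⟩ : ↥(clInj f t)) : α) = f^[e - d] x := by
      rw [← h3, hxSeq]
    exact hf.iterate (e - d) h5


/-- Let `(α, f)` be a countable injection structure with only finitely many ω-orbits.  Any set
`S` consisting of exactly one element from each ω-orbit is an exceptional set for `(α, f)`. -/
theorem isExceptionalInj_of_one_from_each_omega_orbit
    {α : Type*} [Countable α] (f : α → α) (hf : Function.Injective f)
    (hfin : {x : α | x ∉ Set.range f}.Finite)
    (S : Set α)
    (hone : ∀ a : α, a ∉ Set.range f → ∃! x : α, x ∈ S ∩ orbitInj f a)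
    (honly : ∀ x ∈ S, ∃ a : α, a ∉ Set.range f ∧ x ∈ orbitInj f a) :
    IsExceptionalInj f S := by
  classical
  constructor
  · -- S is finite
    choose! rt hrt1 hrt2 using honly
    have hinjOn : Set.InjOn rt S := by
      intro x₁ hx₁ x₂ hx₂ heq
      obtain ⟨x0, -, huniq⟩ := hone (rt x₁) (hrt1 x₁ hx₁)
      have h1 := huniq x₁ ⟨hx₁, hrt2 x₁ hx₁⟩
      have h2 := huniq x₂ ⟨hx₂, heq ▸ hrt2 x₂ hx₂⟩
      rw [h1, h2]
    have himg : rt '' S ⊆ {x : α | x ∉ Set.range f} := by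
      rintro y ⟨x, hx, rfl⟩
      exact hrt1 x hx
    exact Set.Finite.of_finite_image (hfin.subset himg) hinjOn
  intro s t hs ht hSs hSt φ hφc hφS
  -- commutation and fixing facts for `φ.symm`
  have hφc' : ∀ x y : ↥(clInj f t), (y : α) = f x →
      ((φ.symm y : ↥(clInj f s)) : α) = f (φ.symm x) := by
    intro x y hxy
    have hm : f ((φ.symm x : ↥(clInj f s)) : α) ∈ clInj f s := clInj_succ (φ.symm x).2
    have h1 := hφc (φ.symm x) ⟨f ((φ.symm x : ↥(clInj f s)) : α), hm⟩ rfl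
    rw [φ.apply_symm_apply] at h1
    have h2 : φ ⟨f ((φ.symm x : ↥(clInj f s)) : α), hm⟩ = y := Subtype.ext (h1.trans hxy.symm)
    rw [← h2, φ.symm_apply_apply]
  have hφS' : ∀ x : ↥(clInj f t), (x : α) ∈ S → ((φ.symm x : ↥(clInj f s)) : α) = x := by
    intro x hxS
    have h1 : φ ⟨(x : α), hSs hxS⟩ = x := Subtype.ext (hφS ⟨(x : α), hSs hxS⟩ hxS)
    rw [← h1, φ.symm_apply_apply]
    exact (hφS ⟨(x : α), hSs hxS⟩ hxS).symm
  have hW := omega_fixed f hf S hone s t hSs φ hφc hφS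
  have hW' := omega_fixed f hf S hone t s hSt φ.symm hφc' hφS'
  -- φ preserves membership in BinfInj
  have hmapB : ∀ (x : α) (hx : x ∈ clInj f s), x ∈ BinfInj f →
      ((φ ⟨x, hx⟩ : ↥(clInj f t)) : α) ∈ BinfInj f := by
    intro x hx hxB
    by_contra hB'
    have h1 := hW' ((φ ⟨x, hx⟩ : ↥(clInj f t)) : α) (φ ⟨x, hx⟩).2 hB'
    have h2 : (⟨((φ ⟨x, hx⟩ : ↥(clInj f t)) : α), (φ ⟨x, hx⟩).2⟩ : ↥(clInj f t))
        = φ ⟨x, hx⟩ := Subtype.ext rfl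
    rw [h2, φ.symm_apply_apply] at h1
    apply hB'
    rw [← h1]
    exact hxB
  have hmapB' : ∀ (y : α) (hy : y ∈ clInj f t), y ∈ BinfInj f →
      ((φ.symm ⟨y, hy⟩ : ↥(clInj f s)) : α) ∈ BinfInj f := by
    intro y hy hyB
    by_contra hB'
    have h1 := hW ((φ.symm ⟨y, hy⟩ : ↥(clInj f s)) : α) (φ.symm ⟨y, hy⟩).2 hB'
    have h2 : (⟨((φ.symm ⟨y, hy⟩ : ↥(clInj f s)) : α), (φ.symm ⟨y, hy⟩).2⟩ : ↥(clInj f s))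
        = φ.symm ⟨y, hy⟩ := Subtype.ext rfl
    rw [h2, φ.apply_symm_apply] at h1
    apply hB'
    rw [← h1]
    exact hyB
  -- the permutation induced by `f` on `BinfInj f`
  have hFbij : Function.Bijective (fun b : ↥(BinfInj f) =>
      (⟨f b.1, BinfInj_mem_f b.2⟩ : ↥(BinfInj f))) := by
    constructor
    · intro b₁ b₂ hb
      exact Subtype.ext (hf (congrArg Subtype.val hb))
    · intro b
      have h1 : b.1 ∈ Set.range f^[1] := Set.mem_iInter.mp b.2 1
      obtain ⟨y, hy⟩ := h1
      rw [Function.iterate_one] at hy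
      have hyB : y ∈ BinfInj f := BinfInj_of_f hf (hy ▸ b.2)
      exact ⟨⟨y, hyB⟩, Subtype.ext hy⟩
  set F : Equiv.Perm ↥(BinfInj f) := Equiv.ofBijective _ hFbij with hFdef
  have hFapp : ∀ b : ↥(BinfInj f), (F b : α) = f b.1 := fun b => rfl
  set E : Set ↥(BinfInj f) := {b | b.1 ∈ clInj f s} with hEdef
  set E' : Set ↥(BinfInj f) := {b | b.1 ∈ clInj f t} with hE'def
  set h : ↥(BinfInj f) → ↥(BinfInj f) := fun b =>
    if hb : b.1 ∈ clInj f s then ⟨((φ ⟨b.1, hb⟩ : ↥(clInj f t)) : α), hmapB b.1 hb b.2⟩ else b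
    with hhdef
  have hpos : ∀ (b : ↥(BinfInj f)) (hb : b.1 ∈ clInj f s),
      h b = ⟨((φ ⟨b.1, hb⟩ : ↥(clInj f t)) : α), hmapB b.1 hb b.2⟩ := fun b hb => dif_pos hb
  have hFiter : ∀ (n : ℕ) (b : ↥(BinfInj f)), ((F ^ n) b : α) = f^[n] b.1 := by
    intro n
    induction n with
    | zero => intro b; rfl
    | succ n ih =>
      intro b
      rw [pow_succ', Equiv.Perm.mul_apply, hFapp, ih, Function.iterate_succ_apply']
  obtain ⟨θ, hθcomm, hθext⟩ := exists_perm_extend F E E' h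
    (fun b hb => clInj_succ hb)
    (fun b hb => clInj_succ hb)
    (fun b hb => by rw [hpos b hb]; exact (φ ⟨b.1, hb⟩).2)
    (by
      intro b₁ hb₁ b₂ hb₂ heq
      rw [hpos b₁ hb₁, hpos b₂ hb₂] at heq
      have h1 : ((φ ⟨b₁.1, hb₁⟩ : ↥(clInj f t)) : α) = ((φ ⟨b₂.1, hb₂⟩ : ↥(clInj f t)) : α) :=
        congrArg (fun z : ↥(BinfInj f) => z.1) heq
      have h2 := φ.injective (Subtype.ext h1)
      exact Subtype.ext (congrArg (fun z : ↥(clInj f s) => z.1) h2))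
    (by
      intro b' hb'
      have hxB : ((φ.symm ⟨b'.1, hb'⟩ : ↥(clInj f s)) : α) ∈ BinfInj f :=
        hmapB' b'.1 hb' b'.2
      refine ⟨⟨((φ.symm ⟨b'.1, hb'⟩ : ↥(clInj f s)) : α), hxB⟩, (φ.symm ⟨b'.1, hb'⟩).2, ?_⟩
      rw [hpos _ (φ.symm ⟨b'.1, hb'⟩).2]
      apply Subtype.ext
      show ((φ ⟨((φ.symm ⟨b'.1, hb'⟩ : ↥(clInj f s)) : α), _⟩ : ↥(clInj f t)) : α) = b'.1
      have h3 : (⟨((φ.symm ⟨b'.1, hb'⟩ : ↥(clInj f s)) : α), (φ.symm ⟨b'.1, hb'⟩).2⟩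
          : ↥(clInj f s)) = φ.symm ⟨b'.1, hb'⟩ := Subtype.ext rfl
      rw [h3, φ.apply_symm_apply])
    (by
      intro b hb
      have hFb : (F b).1 ∈ clInj f s := clInj_succ hb
      rw [hpos b hb, hpos (F b) hFb]
      apply Subtype.ext
      show ((φ ⟨(F b).1, hFb⟩ : ↥(clInj f t)) : α) = f ((φ ⟨b.1, hb⟩ : ↥(clInj f t)) : α)
      exact hφc ⟨b.1, hb⟩ ⟨(F b).1, hFb⟩ (hFapp b))
    {b : ↥(BinfInj f) | b.1 ∈ s}
    (Set.Finite.preimage Subtype.val_injective.injOn hs)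
    (by
      rintro b ⟨x₀, hx₀s, n, hn⟩
      have hx₀B : x₀ ∈ BinfInj f := BinfInj_of_iterate hf n (hn ▸ b.2)
      refine ⟨⟨x₀, hx₀B⟩, hx₀s, (n : ℤ), ?_⟩
      rw [zpow_natCast]
      exact Subtype.ext ((hFiter n ⟨x₀, hx₀B⟩).trans hn))
  -- assemble the automorphism
  refine ⟨Equiv.Perm.ofSubtype θ, ?_, ?_⟩
  · intro a
    by_cases ha : a ∈ BinfInj f
    · have hfa : f a ∈ BinfInj f := BinfInj_mem_f ha
      rw [Equiv.Perm.ofSubtype_apply_of_mem θ hfa, Equiv.Perm.ofSubtype_apply_of_mem θ ha]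
      have h1 : (⟨f a, hfa⟩ : ↥(BinfInj f)) = F ⟨a, ha⟩ := Subtype.ext rfl
      rw [h1, hθcomm, hFapp]
    · have hfa : f a ∉ BinfInj f := fun hm => ha (BinfInj_of_f hf hm)
      rw [Equiv.Perm.ofSubtype_apply_of_not_mem θ hfa,
        Equiv.Perm.ofSubtype_apply_of_not_mem θ ha]
  · intro x
    by_cases hxB : (x : α) ∈ BinfInj f
    · rw [Equiv.Perm.ofSubtype_apply_of_mem θ hxB]
      have h1 : (⟨(x : α), hxB⟩ : ↥(BinfInj f)) ∈ E := x.2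
      rw [hθext _ h1, hpos _ x.2]
    · rw [Equiv.Perm.ofSubtype_apply_of_not_mem θ hxB]
      have h1 := hW (x : α) x.2 hxB
      have h2 : (⟨(x : α), x.2⟩ : ↥(clInj f s)) = x := Subtype.ext rfl
      rw [h2] at h1
      rw [h1]
end

section
/- Let G be a countable weakly ultrahomogeneous simple graph. Then there exist a cardinal n and a finite collection C of connected components of G such that every connected component of G not belonging to C is a complete graph (any two distinct vertices in the component are adjacent) whose vertex set has cardinality n. -/
universe u

/-- `S` is an exceptional set for the simple graph `G`: `S` is finite, and every isomorphism
between induced subgraphs of `G` on finite vertex sets both containing `S`, which fixes each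
element of `S`, extends to an automorphism of `G`. -/
def IsExceptionalGraph {V : Type*} (G : SimpleGraph V) (S : Set V) : Prop :=
  S.Finite ∧
    ∀ s t : Set V, s.Finite → t.Finite → S ⊆ s → S ⊆ t →
      ∀ φ : ↥s ≃ ↥t,
        (∀ x y : ↥s, G.Adj (x : V) (y : V) ↔ G.Adj ((φ x : ↥t) : V) ((φ y : ↥t) : V)) →
        (∀ x : ↥s, (x : V) ∈ S → ((φ x : ↥t) : V) = x) →
        ∃ ψ : G ≃g G, ∀ x : ↥s, ψ (x : V) = ((φ x : ↥t) : V)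

/-- A simple graph is weakly ultrahomogeneous if it has an exceptional set. -/
def WeaklyUltrahomogeneousGraph {V : Type*} (G : SimpleGraph V) : Prop :=
  ∃ S : Set V, IsExceptionalGraph G S

open Classical in
/-- Key lemma: if `a, b` lie outside a finite set `T ⊇ S` and have no neighbours in `T`,
then some automorphism of `G` fixes `T` pointwise and sends `a` to `b`. -/
lemma exceptional_key {V : Type*} {G : SimpleGraph V} {S : Set V}
    (h : IsExceptionalGraph G S) {T : Set V} (hT : T.Finite) (hST : S ⊆ T)
    {a b : V} (ha : a ∉ T) (hb : b ∉ T)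
    (haT : ∀ w ∈ T, ¬ G.Adj a w) (hbT : ∀ w ∈ T, ¬ G.Adj b w) :
    ∃ ψ : G ≃g G, ψ a = b ∧ ∀ w ∈ T, ψ w = w := by
  obtain ⟨hSfin, hext⟩ := h
  set φ : ↥(insert a T) ≃ ↥(insert b T) :=
    (Equiv.Set.insert ha).trans (Equiv.Set.insert hb).symm with hφ
  have hcompute : ∀ x : ↥(insert a T),
      ((φ x : ↥(insert b T)) : V) = if (x : V) = a then b else (x : V) := by
    rintro ⟨x, hx⟩
    rcases hx with rfl | hx
    · simp [hφ]
    · have hxa : x ≠ a := fun hxa => ha (hxa ▸ hx)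
      have : (⟨x, Or.inr hx⟩ : ↥(insert a T)) = ⟨(⟨x, hx⟩ : ↥T), Or.inr hx⟩ := rfl
      simp [hφ, this, hxa]
  have hadj : ∀ x y : ↥(insert a T),
      G.Adj (x : V) (y : V) ↔
        G.Adj ((φ x : ↥(insert b T)) : V) ((φ y : ↥(insert b T)) : V) := by
    rintro ⟨x, hx⟩ ⟨y, hy⟩
    rw [hcompute, hcompute]
    rcases hx with rfl | hx <;> rcases hy with rfl | hy
    · simp
    · have hya : y ≠ x := fun hh => ha (hh ▸ hy)
      simp only [if_pos rfl, if_neg hya]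
      constructor
      · intro hA; exact absurd hA (haT y hy)
      · intro hA; exact absurd hA (hbT y hy)
    · have hxa : x ≠ y := fun hh => ha (hh ▸ hx)
      simp only [if_pos rfl, if_neg hxa]
      constructor
      · intro hA; exact absurd hA.symm (haT x hx)
      · intro hA; exact absurd hA.symm (hbT x hx)
    · have hxa : x ≠ a := fun hh => ha (hh ▸ hx)
      have hya : y ≠ a := fun hh => ha (hh ▸ hy)
      simp [hxa, hya]
  have hfix : ∀ x : ↥(insert a T), (x : V) ∈ S →
      ((φ x : ↥(insert b T)) : V) = x := by
    rintro ⟨x, hx⟩ hxS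
    have hxa : x ≠ a := fun hh => ha (hh ▸ hST hxS)
    rw [hcompute]; simp [hxa]
  obtain ⟨ψ, hψ⟩ := hext (insert a T) (insert b T) (hT.insert a) (hT.insert b)
    (hST.trans (Set.subset_insert a T)) (hST.trans (Set.subset_insert b T)) φ hadj hfix
  refine ⟨ψ, ?_, ?_⟩
  · have := hψ ⟨a, Or.inl rfl⟩
    rwa [hcompute, if_pos rfl] at this
  · intro w hw
    have := hψ ⟨w, Or.inr hw⟩
    have hwa : w ≠ a := fun hh => ha (hh ▸ hw)
    rwa [hcompute, if_neg hwa] at this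

/-- If the component of `x` contains no point of `S`, then `x` is not adjacent to any `w ∈ S`. -/
lemma not_adj_of_comp_not_meet {V : Type*} {G : SimpleGraph V} {S : Set V} {x : V}
    (hx : ∀ w ∈ S, G.connectedComponentMk w ≠ G.connectedComponentMk x)
    {w : V} (hw : w ∈ S) : ¬ G.Adj x w := fun hA =>
  hx w hw (SimpleGraph.ConnectedComponent.eq.mpr hA.symm.reachable)

/-- In a countable weakly ultrahomogeneous graph, there are a cardinal `n` and a finite
collection `C` of connected components such that every component outside `C` is a complete
graph on a vertex set of cardinality `n`. -/
theorem weaklyUltrahomogeneousGraph_components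
    {V : Type u} [Countable V] (G : SimpleGraph V)
    (h : WeaklyUltrahomogeneousGraph G) :
    ∃ (n : Cardinal.{u}) (C : Set G.ConnectedComponent), C.Finite ∧
      ∀ c : G.ConnectedComponent, c ∉ C →
        (∀ x ∈ c.supp, ∀ y ∈ c.supp, x ≠ y → G.Adj x y) ∧ Cardinal.mk ↥c.supp = n := by
  classical
  obtain ⟨S, hSe⟩ := h
  have hSfin : S.Finite := hSe.1
  set A : Set G.ConnectedComponent := G.connectedComponentMk '' S with hA
  have hAfin : A.Finite := hSfin.image _
  set B : Set G.ConnectedComponent :=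
    {c | ¬ ∀ x ∈ c.supp, ∀ y ∈ c.supp, x ≠ y → G.Adj x y} with hB
  -- components outside A contain no point of S
  have hmeet : ∀ c : G.ConnectedComponent, c ∉ A →
      ∀ w ∈ S, G.connectedComponentMk w ≠ c := by
    intro c hc w hw hEq
    exact hc ⟨w, hw, hEq⟩
  -- elements of a component outside A are not in S
  have hnotinS : ∀ c : G.ConnectedComponent, c ∉ A → ∀ x ∈ c.supp, x ∉ S := by
    intro c hc x hx hxS
    exact hmeet c hc x hxS ((SimpleGraph.ConnectedComponent.mem_supp_iff c x).mp hx)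
  -- at most one incomplete component outside A
  have hsub : (B \ A).Subsingleton := by
    intro c1 hc1 c2 hc2
    by_contra hne
    have hc1B : ¬ ∀ x ∈ c1.supp, ∀ y ∈ c1.supp, x ≠ y → G.Adj x y := hc1.1
    have hc1A : c1 ∉ A := hc1.2
    have hc2B : ¬ ∀ x ∈ c2.supp, ∀ y ∈ c2.supp, x ≠ y → G.Adj x y := hc2.1
    have hc2A : c2 ∉ A := hc2.2
    push_neg at hc1B hc2B
    obtain ⟨x1, hx1, y1, hy1, hxy1, hnadj1⟩ := hc1B
    obtain ⟨x2, hx2, -, -, -, -⟩ := hc2B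
    rw [SimpleGraph.ConnectedComponent.mem_supp_iff] at hx1 hy1 hx2
    have hx1S := hnotinS c1 hc1A x1 (by rwa [SimpleGraph.ConnectedComponent.mem_supp_iff])
    have hy1S := hnotinS c1 hc1A y1 (by rwa [SimpleGraph.ConnectedComponent.mem_supp_iff])
    have hx2S := hnotinS c2 hc2A x2 (by rwa [SimpleGraph.ConnectedComponent.mem_supp_iff])
    -- T = insert x1 S, a = y1, b = x2
    have hy1x1 : y1 ≠ x1 := fun hh => hxy1 hh.symm
    have hx2x1 : x2 ≠ x1 := by
      intro hh; apply hne; rw [← hx1, ← hx2, hh]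
    have haT : ∀ w ∈ insert x1 S, ¬ G.Adj y1 w := by
      rintro w (rfl | hw)
      · exact fun hA => hnadj1 hA.symm
      · exact not_adj_of_comp_not_meet
          (fun v hv => by rw [hy1]; exact hmeet c1 hc1A v hv) hw
    have hbT : ∀ w ∈ insert x1 S, ¬ G.Adj x2 w := by
      rintro w (rfl | hw)
      · intro hA
        apply hne
        rw [← hx1, ← hx2, SimpleGraph.ConnectedComponent.eq]
        exact hA.symm.reachable
      · exact not_adj_of_comp_not_meet
          (fun v hv => by rw [hx2]; exact hmeet c2 hc2A v hv) hw
    obtain ⟨ψ, hψab, hψfix⟩ := exceptional_key hSe (hSfin.insert x1)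
      (Set.subset_insert x1 S)
      (by rintro (rfl | hmem) ; exacts [hxy1 rfl, hy1S hmem])
      (by rintro (rfl | hmem) ; exacts [hx2x1 rfl, hx2S hmem]) haT hbT
    have hreach : G.Reachable y1 x1 := by
      rw [← SimpleGraph.ConnectedComponent.eq, hx1, hy1]
    have hr2 : G.Reachable x2 x1 := by
      have h2 : G.Reachable (ψ y1) (ψ x1) := hreach.map ψ.toHom
      rwa [hψab, hψfix x1 (Set.mem_insert x1 S)] at h2
    apply hne
    rw [← hx1, ← hx2, SimpleGraph.ConnectedComponent.eq]
    exact hr2.symm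
  set C : Set G.ConnectedComponent := A ∪ (B \ A) with hC
  have hCfin : C.Finite := hAfin.union hsub.finite
  by_cases hE : ∃ c : G.ConnectedComponent, c ∉ C
  · obtain ⟨c0, hc0⟩ := hE
    refine ⟨Cardinal.mk ↥c0.supp, C, hCfin, fun c hc => ?_⟩
    have hcomp : ∀ c' : G.ConnectedComponent, c' ∉ C →
        ∀ x ∈ c'.supp, ∀ y ∈ c'.supp, x ≠ y → G.Adj x y := by
      intro c' hc'
      by_contra hbad
      exact hc' (Or.inr ⟨hbad, fun hmem => hc' (Or.inl hmem)⟩)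
    refine ⟨hcomp c hc, ?_⟩
    -- equal cardinality with c0
    by_cases hcc0 : c = c0
    · rw [hcc0]
    have hcA : c ∉ A := fun hmem => hc (Or.inl hmem)
    have hc0A : c0 ∉ A := fun hmem => hc0 (Or.inl hmem)
    obtain ⟨x, hx0⟩ := c.exists_rep
    obtain ⟨y, hy0⟩ := c0.exists_rep
    have hx : G.connectedComponentMk x = c := hx0
    have hy : G.connectedComponentMk y = c0 := hy0
    have hxS : x ∉ S := hnotinS c hcA x (by rwa [SimpleGraph.ConnectedComponent.mem_supp_iff])
    have hyS : y ∉ S := hnotinS c0 hc0A y (by rwa [SimpleGraph.ConnectedComponent.mem_supp_iff])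
    have haT : ∀ w ∈ S, ¬ G.Adj x w :=
      fun w hw => not_adj_of_comp_not_meet
        (fun v hv => by rw [hx]; exact hmeet c hcA v hv) hw
    have hbT : ∀ w ∈ S, ¬ G.Adj y w :=
      fun w hw => not_adj_of_comp_not_meet
        (fun v hv => by rw [hy]; exact hmeet c0 hc0A v hv) hw
    obtain ⟨ψ, hψab, -⟩ := exceptional_key hSe hSfin (subset_refl S) hxS hyS haT hbT
    refine Cardinal.mk_congr ?_
    refine ⟨fun v => ⟨ψ v, ?_⟩, fun w => ⟨ψ.symm w, ?_⟩, fun v => ?_, fun w => ?_⟩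
    · obtain ⟨v, hv⟩ := v
      rw [SimpleGraph.ConnectedComponent.mem_supp_iff] at hv ⊢
      have hvx : G.Reachable v x :=
        SimpleGraph.ConnectedComponent.eq.mp (hv.trans hx.symm)
      have hr : G.Reachable (ψ v) y := by
        have h2 : G.Reachable (ψ v) (ψ x) := hvx.map ψ.toHom
        rwa [hψab] at h2
      exact (SimpleGraph.ConnectedComponent.eq.mpr hr).trans hy
    · obtain ⟨w, hw⟩ := w
      rw [SimpleGraph.ConnectedComponent.mem_supp_iff] at hw ⊢
      have hwy : G.Reachable w y :=
        SimpleGraph.ConnectedComponent.eq.mp (hw.trans hy.symm)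
      have hr : G.Reachable (ψ.symm w) x := by
        have h2 : G.Reachable (ψ.symm w) (ψ.symm y) := hwy.map ψ.symm.toHom
        rwa [← hψab, RelIso.symm_apply_apply] at h2
      exact (SimpleGraph.ConnectedComponent.eq.mpr hr).trans hx
    · simp
    · simp
  · push_neg at hE
    exact ⟨0, C, hCfin, fun c hc => absurd (hE c) (by simpa using hc)⟩
end

section
/- Let G be a countable weakly ultrahomogeneous simple graph and let C be a connected component of G that is not finitely dominated. Then there is a finite set F ⊆ C such that every vertex of C is at graph distance at most 2 from some element of F. -/
/-- A connected component `c` of `G` is finitely dominated if some finite subset `F` of `c`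
is such that every vertex of `c` is adjacent to an element of `F`. -/
def FinitelyDominated {V : Type*} (G : SimpleGraph V) (c : G.ConnectedComponent) : Prop :=
  ∃ F : Set V, F ⊆ c.supp ∧ F.Finite ∧ ∀ v ∈ c.supp, ∃ x ∈ F, G.Adj v x

private lemma iso_dist_le_aux {V : Type*} {G : SimpleGraph V} (ψ : G ≃g G) (a b : V) :
    G.dist (ψ a) (ψ b) ≤ G.dist a b := by
  by_cases hr : G.Reachable a b
  · obtain ⟨p, hp⟩ := hr.exists_walk_length_eq_dist
    calc G.dist (ψ a) (ψ b) ≤ (p.map ψ.toHom).length := SimpleGraph.dist_le _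
      _ = p.length := SimpleGraph.Walk.length_map _ _
      _ = G.dist a b := hp
  · rw [SimpleGraph.dist_eq_zero_of_not_reachable hr,
      SimpleGraph.dist_eq_zero_of_not_reachable]
    intro hr'
    exact hr (by simpa using hr'.map ψ.symm.toHom)

private lemma iso_dist_aux {V : Type*} {G : SimpleGraph V} (ψ : G ≃g G) (a b : V) :
    G.dist (ψ a) (ψ b) = G.dist a b := by
  refine le_antisymm (iso_dist_le_aux ψ a b) ?_
  simpa using iso_dist_le_aux ψ.symm (ψ a) (ψ b)

/-- If a connected component `c` of a countable weakly ultrahomogeneous graph is not finitely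
dominated, then there is a finite subset `F` of `c` such that every vertex of `c` is at graph
distance at most 2 from some element of `F`. -/
theorem weaklyUltrahomogeneousGraph_not_finitelyDominated_dist_two
    {V : Type*} [Countable V] (G : SimpleGraph V)
    (h : WeaklyUltrahomogeneousGraph G)
    (c : G.ConnectedComponent) (hc : ¬ FinitelyDominated G c) :
    ∃ F : Set V, F ⊆ c.supp ∧ F.Finite ∧ ∀ v ∈ c.supp, ∃ x ∈ F, G.dist v x ≤ 2 := by
  classical
  by_contra hcon
  push_neg at hcon
  obtain ⟨S, hSfin, hS⟩ := h
  -- choose u₁ far from S ∩ c.supp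
  obtain ⟨u₁, hu₁c, hu₁⟩ := hcon (S ∩ c.supp) Set.inter_subset_right (hSfin.inter_of_left _)
  -- choose u₂ far from S ∩ c.supp and from u₁
  obtain ⟨u₂, hu₂c, hu₂⟩ := hcon (insert u₁ (S ∩ c.supp))
    (Set.insert_subset hu₁c Set.inter_subset_right)
    ((hSfin.inter_of_left _).insert u₁)
  have hd21 : 2 < G.dist u₂ u₁ := hu₂ u₁ (Set.mem_insert _ _)
  have hreach : G.Reachable u₁ u₂ := by
    apply SimpleGraph.ConnectedComponent.exact
    rw [(SimpleGraph.ConnectedComponent.mem_supp_iff c u₁).mp hu₁c,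
      (SimpleGraph.ConnectedComponent.mem_supp_iff c u₂).mp hu₂c]
  have hd12 : 2 < G.dist u₁ u₂ := by rwa [SimpleGraph.dist_comm]
  -- adjacency facts for u₂
  have hu₂S : ∀ s₀ ∈ S, ¬ G.Adj u₂ s₀ := by
    intro s₀ hs₀ hadj
    have hs₀c : s₀ ∈ c.supp := by
      rw [SimpleGraph.ConnectedComponent.mem_supp_iff,
        ← (SimpleGraph.ConnectedComponent.mem_supp_iff c u₂).mp hu₂c]
      exact (SimpleGraph.ConnectedComponent.sound hadj.reachable).symm
    have := hu₂ s₀ (Set.mem_insert_of_mem _ ⟨hs₀, hs₀c⟩)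
    rw [SimpleGraph.dist_eq_one_iff_adj.mpr hadj] at this
    omega
  have hu₂u₁ : ¬ G.Adj u₂ u₁ := by
    intro hadj
    rw [SimpleGraph.dist_eq_one_iff_adj.mpr hadj] at hd21
    omega
  have hu₂ne : u₂ ≠ u₁ := by
    intro hEq
    rw [hEq, SimpleGraph.dist_self] at hd21; omega
  have hu₂notS : u₂ ∉ S := by
    intro hmem
    have := hu₂ u₂ (Set.mem_insert_of_mem _ ⟨hmem, hu₂c⟩)
    rw [SimpleGraph.dist_self] at this; omega
  have hu₁notS : u₁ ∉ S := by
    intro hmem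
    have := hu₁ u₁ ⟨hmem, hu₁c⟩
    rw [SimpleGraph.dist_self] at this; omega
  -- get a geodesic from u₁ to u₂ and its penultimate vertex y
  obtain ⟨p, hp⟩ := hreach.exists_walk_length_eq_dist
  have hrevlen : p.reverse.length = G.dist u₁ u₂ := by
    rw [SimpleGraph.Walk.length_reverse, hp]
  cases hpr : p.reverse with
  | nil =>
    rw [hpr] at hrevlen
    simp only [SimpleGraph.Walk.length_nil] at hrevlen
    omega
  | @cons _ y _ hadjy q' =>
    rw [hpr] at hrevlen
    simp only [SimpleGraph.Walk.length_cons] at hrevlen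
    -- hadjy : G.Adj u₂ y, q' : G.Walk y u₁, q'.length + 1 = dist u₁ u₂
    have hdisty : G.dist u₁ y ≤ G.dist u₁ u₂ - 1 := by
      have := SimpleGraph.dist_le q'.reverse
      rw [SimpleGraph.Walk.length_reverse] at this
      omega
    have hyc : y ∈ c.supp := by
      rw [SimpleGraph.ConnectedComponent.mem_supp_iff,
        ← (SimpleGraph.ConnectedComponent.mem_supp_iff c u₂).mp hu₂c]
      exact (SimpleGraph.ConnectedComponent.sound hadjy.reachable).symm
    have hynotS : y ∉ S := by
      intro hmem
      have := hu₂ y (Set.mem_insert_of_mem _ ⟨hmem, hyc⟩)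
      rw [SimpleGraph.dist_eq_one_iff_adj.mpr hadjy] at this
      omega
    have hyS : ∀ s₀ ∈ S, ¬ G.Adj y s₀ := by
      intro s₀ hs₀ hadj
      have hs₀c : s₀ ∈ c.supp := by
        rw [SimpleGraph.ConnectedComponent.mem_supp_iff,
          ← (SimpleGraph.ConnectedComponent.mem_supp_iff c y).mp hyc]
        exact (SimpleGraph.ConnectedComponent.sound hadj.reachable).symm
      have h1 := hu₂ s₀ (Set.mem_insert_of_mem _ ⟨hs₀, hs₀c⟩)
      have h2 : G.dist u₂ s₀ ≤ 2 := by
        have := SimpleGraph.dist_le (SimpleGraph.Walk.cons hadjy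
          (SimpleGraph.Walk.cons hadj SimpleGraph.Walk.nil))
        simpa using this
      omega
    have hyne₁ : y ≠ u₁ := by
      intro hEq
      subst hEq
      rw [SimpleGraph.dist_eq_one_iff_adj.mpr hadjy] at hd21; omega
    have hyu₁ : ¬ G.Adj y u₁ := by
      intro hadj
      have h2 : G.dist u₂ u₁ ≤ 2 := by
        have := SimpleGraph.dist_le (SimpleGraph.Walk.cons hadjy
          (SimpleGraph.Walk.cons hadj SimpleGraph.Walk.nil))
        simpa using this
      omega
    have hyne₂ : y ≠ u₂ := hadjy.ne'
    -- build the partial isomorphism swapping u₂ and y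
    set e : Equiv.Perm V := Equiv.swap u₂ y with he
    set ss : Set V := insert u₁ (insert u₂ S) with hss
    set tt : Set V := insert u₁ (insert y S) with htt
    have hefix : ∀ x : V, x ≠ u₂ → x ≠ y → e x = x := fun x h1 h2 =>
      Equiv.swap_apply_of_ne_of_ne h1 h2
    have himg : e '' ss = tt := by
      rw [hss, htt, Set.image_insert_eq, Set.image_insert_eq]
      have hS' : e '' S = S := by
        have : ∀ x ∈ S, e x = x := fun x hx =>
          hefix x (fun hEq => hu₂notS (hEq ▸ hx)) (fun hEq => hynotS (hEq ▸ hx))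
        rw [Set.image_congr this, Set.image_id']
      rw [hS', hefix u₁ (Ne.symm hu₂ne) (Ne.symm hyne₁), Equiv.swap_apply_left]
    have hSss : S ⊆ ss := fun x hx => Set.mem_insert_of_mem _ (Set.mem_insert_of_mem _ hx)
    have hStt : S ⊆ tt := fun x hx => Set.mem_insert_of_mem _ (Set.mem_insert_of_mem _ hx)
    have hssfin : ss.Finite := ((hSfin.insert u₂).insert u₁)
    have httfin : tt.Finite := ((hSfin.insert y).insert u₁)
    let φ : ↥ss ≃ ↥tt := (e.image ss).trans (Equiv.setCongr himg)
    have hφval : ∀ x : ↥ss, ((φ x : ↥tt) : V) = e (x : V) := fun x => rfl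
    -- adjacency pattern with insert u₁ S
    have hkey₂ : ∀ b ∈ insert u₁ S, ¬ G.Adj u₂ b := by
      intro b hb
      rcases hb with rfl | hb
      · exact hu₂u₁
      · exact hu₂S b hb
    have hkeyy : ∀ b ∈ insert u₁ S, ¬ G.Adj y b := by
      intro b hb
      rcases hb with rfl | hb
      · exact hyu₁
      · exact hyS b hb
    have hnotss : y ∉ ss := by
      rw [hss]
      intro hmem
      rcases hmem with rfl | hmem
      · exact hyne₁ rfl
      · rcases hmem with rfl | hmem
        · exact hyne₂ rfl
        · exact hynotS hmem
    have hmemins : ∀ a ∈ ss, a ≠ u₂ → a ∈ insert u₁ S := by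
      intro a ha hne
      rw [hss] at ha
      rcases ha with rfl | ha
      · exact Set.mem_insert _ _
      · rcases ha with rfl | ha
        · exact absurd rfl hne
        · exact Set.mem_insert_of_mem _ ha
    have hadjiff : ∀ a b : V, a ∈ ss → b ∈ ss → (G.Adj a b ↔ G.Adj (e a) (e b)) := by
      intro a b ha hb
      by_cases ha2 : a = u₂ <;> by_cases hb2 : b = u₂
      · subst ha2; subst hb2; simp
      · subst ha2
        have hbfix : e b = b := hefix b hb2 (fun hEq => hnotss (hEq ▸ hb))
        rw [Equiv.swap_apply_left, hbfix]
        have hbmem := hmemins b hb hb2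
        constructor
        · intro hadj; exact absurd hadj (hkey₂ b hbmem)
        · intro hadj; exact absurd hadj (hkeyy b hbmem)
      · subst hb2
        have hafix : e a = a := hefix a ha2 (fun hEq => hnotss (hEq ▸ ha))
        rw [Equiv.swap_apply_left, hafix]
        have hamem := hmemins a ha ha2
        constructor
        · intro hadj; exact absurd hadj.symm (hkey₂ a hamem)
        · intro hadj; exact absurd hadj.symm (hkeyy a hamem)
      · rw [hefix a ha2 (fun hEq => hnotss (hEq ▸ ha)),
          hefix b hb2 (fun hEq => hnotss (hEq ▸ hb))]
    obtain ⟨ψ, hψ⟩ := hS ss tt hssfin httfin hSss hStt φ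
      (fun x y' => by rw [hφval x, hφval y']; exact hadjiff _ _ x.2 y'.2)
      (fun x hx => by
        rw [hφval x]
        exact hefix _ (fun hEq => hu₂notS (hEq ▸ hx)) (fun hEq => hynotS (hEq ▸ hx)))
    have hψu₁ : ψ u₁ = u₁ := by
      have := hψ ⟨u₁, Set.mem_insert _ _⟩
      rw [hφval] at this
      simpa [hefix u₁ (Ne.symm hu₂ne) (Ne.symm hyne₁)] using this
    have hψu₂ : ψ u₂ = y := by
      have := hψ ⟨u₂, Set.mem_insert_of_mem _ (Set.mem_insert _ _)⟩
      rw [hφval] at this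
      simpa [he, Equiv.swap_apply_left] using this
    have hfinal : G.dist u₁ y = G.dist u₁ u₂ := by
      have hd := iso_dist_aux ψ u₁ u₂
      rw [hψu₁, hψu₂] at hd
      exact hd
    omega
end

section
/- Let (T, ≤) be a countable tree that is weakly ultrahomogeneous as a partial order. Then T has finite height: there is an n ∈ ℕ such that for every a ∈ T the set {x : x < a} has cardinality at most n. -/
/-- A partial order is a tree order if it has a least element (the root) and, for every element
`a`, the set of elements strictly below `a` is finite and linearly ordered. -/
def IsTreeOrder (T : Type*) [PartialOrder T] : Prop :=
  (∃ r : T, ∀ x : T, r ≤ x) ∧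
    (∀ a : T, {x : T | x < a}.Finite) ∧
    (∀ a x y : T, x < a → y < a → x ≤ y ∨ y ≤ x)

/-- `S` is an exceptional set for the partial order `T`: `S` is finite, and every order
isomorphism between finite subsets of `T` both containing `S`, which fixes each element of `S`,
extends to an order automorphism of `T`. -/
def IsExceptionalPO {T : Type*} [PartialOrder T] (S : Set T) : Prop :=
  S.Finite ∧
    ∀ (s t : Set T), s.Finite → t.Finite → ∀ (hs : S ⊆ s), S ⊆ t →
      ∀ φ : ↥s ≃o ↥t,
        (∀ (x : T) (hx : x ∈ S), ((φ ⟨x, hs hx⟩ : ↥t) : T) = x) →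
        ∃ ψ : T ≃o T, ∀ x : ↥s, ψ (x : T) = ((φ x : ↥t) : T)

/-- A partial order is weakly ultrahomogeneous if it has an exceptional set. -/
def WeaklyUltrahomogeneousPO (T : Type*) [PartialOrder T] : Prop :=
  ∃ S : Set T, IsExceptionalPO S

/-- A countable tree which is weakly ultrahomogeneous as a partial order has finite height. -/
theorem weaklyUltrahomogeneous_tree_finite_height
    {T : Type*} [PartialOrder T] [Countable T]
    (htree : IsTreeOrder T) (h : WeaklyUltrahomogeneousPO T) :
    ∃ n : ℕ, ∀ a : T, {x : T | x < a}.ncard ≤ n := by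
  classical
  by_contra hcon
  push_neg at hcon
  obtain ⟨S, hSfin, hS⟩ := h
  set ht : T → ℕ := fun a => {x : T | x < a}.ncard with hht
  -- build a sequence of strictly increasing heights
  choose g hg using hcon
  let f : ℕ → T := fun n => Nat.rec (motive := fun _ => T) (g 0) (fun _ x => g (ht x)) n
  have hmono : StrictMono (ht ∘ f) := strictMono_nat_of_lt_succ (fun n => hg (ht (f n)))
  have hfinj : Function.Injective f := Function.Injective.of_comp hmono.injective
  -- types over S
  haveI : Finite ↥S := hSfin.to_subtype
  let τ : T → (↥S → Bool × Bool) := fun a s => (decide (a ≤ (s : T)), decide ((s : T) ≤ a))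
  obtain ⟨c, hc⟩ := Finite.exists_infinite_fiber (τ ∘ f)
  have hA : ((τ ∘ f) ⁻¹' {c}).Infinite := Set.infinite_coe_iff.mp hc
  have hpre : (f ⁻¹' S).Finite :=
    Set.Finite.preimage (Function.Injective.injOn hfinj) hSfin
  have hB : ((τ ∘ f) ⁻¹' {c} \ f ⁻¹' S).Infinite := hA.diff hpre
  obtain ⟨n, hn⟩ := hB.nonempty
  obtain ⟨m, hm, hnm⟩ := hB.exists_gt n
  set a := f n with hadef
  set b := f m with hbdef
  have ha : a ∉ S := hn.2
  have hb : b ∉ S := hm.2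
  have hτ : τ a = τ b := by
    have h1 : τ (f n) = c := hn.1
    have h2 : τ (f m) = c := hm.1
    rw [hadef, hbdef, h1, h2]
  have hne : ht a < ht b := hmono hnm
  have hab : a ≠ b := fun hEq => absurd (congrArg ht hEq) (ne_of_lt hne)
  have hle1 : ∀ s ∈ S, (a ≤ s ↔ b ≤ s) := by
    intro s hs
    have := congrFun hτ ⟨s, hs⟩
    have := (Prod.mk.injEq _ _ _ _).mp this
    exact decide_eq_decide.mp this.1
  have hle2 : ∀ s ∈ S, (s ≤ a ↔ s ≤ b) := by
    intro s hs
    have := congrFun hτ ⟨s, hs⟩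
    have := (Prod.mk.injEq _ _ _ _).mp this
    exact decide_eq_decide.mp this.2
  haveI := Classical.decEq T
  -- the partial isomorphism
  let F : T → T := fun x => if x = a then b else x
  let G : T → T := fun x => if x = b then a else x
  have memF : ∀ x ∈ insert a S, F x ∈ insert b S := by
    intro x hx
    rcases hx with rfl | hx
    · simp [F]
    · have hxa : x ≠ a := fun hEq => ha (hEq ▸ hx)
      simp [F, hxa, Set.mem_insert_iff, hx]
  have memG : ∀ x ∈ insert b S, G x ∈ insert a S := by
    intro x hx
    rcases hx with rfl | hx
    · simp [G]
    · have hxb : x ≠ b := fun hEq => hb (hEq ▸ hx)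
      simp [G, hxb, Set.mem_insert_iff, hx]
  have hGF : ∀ x ∈ insert a S, G (F x) = x := by
    intro x hx
    rcases hx with rfl | hx
    · simp [F, G, hab.symm]
    · have hxa : x ≠ a := fun hEq => ha (hEq ▸ hx)
      have hxb : x ≠ b := fun hEq => hb (hEq ▸ hx)
      simp [F, G, hxa, hxb]
  have hFG : ∀ x ∈ insert b S, F (G x) = x := by
    intro x hx
    rcases hx with rfl | hx
    · simp [F, G, hab]
    · have hxa : x ≠ a := fun hEq => ha (hEq ▸ hx)
      have hxb : x ≠ b := fun hEq => hb (hEq ▸ hx)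
      simp [F, G, hxa, hxb]
  have hF : ∀ x ∈ insert a S, ∀ y ∈ insert a S, (F x ≤ F y ↔ x ≤ y) := by
    intro x hx y hy
    rcases hx with rfl | hx <;> rcases hy with rfl | hy
    · simp [F]
    · have hya : y ≠ a := fun hEq => ha (hEq ▸ hy)
      simp only [F, if_pos rfl, if_neg hya]
      exact (hle1 y hy).symm
    · have hxa : x ≠ a := fun hEq => ha (hEq ▸ hx)
      simp only [F, if_pos rfl, if_neg hxa]
      exact (hle2 x hx).symm
    · have hxa : x ≠ a := fun hEq => ha (hEq ▸ hx)
      have hya : y ≠ a := fun hEq => ha (hEq ▸ hy)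
      simp [F, hxa, hya]
  let φ : ↥(insert a S) ≃o ↥(insert b S) :=
    { toFun := fun x => ⟨F x, memF x x.2⟩
      invFun := fun y => ⟨G y, memG y y.2⟩
      left_inv := fun x => Subtype.ext (hGF x x.2)
      right_inv := fun y => Subtype.ext (hFG y y.2)
      map_rel_iff' := fun {x y} => by
        simpa [Subtype.mk_le_mk] using hF x x.2 y y.2 }
  have hfix : ∀ (x : T) (hx : x ∈ S),
      ((φ ⟨x, Set.subset_insert a S hx⟩ : ↥(insert b S)) : T) = x := by
    intro x hx
    have hxa : x ≠ a := fun hEq => ha (hEq ▸ hx)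
    simp [φ, F, hxa]
  obtain ⟨ψ, hψ⟩ := hS (insert a S) (insert b S) (hSfin.insert a) (hSfin.insert b)
    (Set.subset_insert a S) (Set.subset_insert b S) φ hfix
  have hψa : ψ a = b := by
    have := hψ ⟨a, Set.mem_insert a S⟩
    simpa [φ, F] using this
  -- automorphisms preserve height
  have himg : (fun x => ψ x) '' {x : T | x < a} = {x : T | x < b} := by
    ext y
    simp only [Set.mem_image, Set.mem_setOf_eq]
    constructor
    · rintro ⟨x, hx, rfl⟩
      rw [← hψa]
      exact ψ.strictMono hx
    · intro hy
      refine ⟨ψ.symm y, ?_, ψ.apply_symm_apply y⟩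
      rw [← hψa] at hy
      simpa using ψ.symm.strictMono hy
  have hcard : ht a = ht b := by
    rw [hht]
    simp only
    rw [← himg, Set.ncard_image_of_injective _ ψ.injective]
  exact absurd hcard (ne_of_lt hne)
end

section
/- Let (T, ≤) be a countable tree, viewed as a partial order. Then (T, ≤) is weakly ultrahomogeneous if and only if the set of elements of rank at least 1, i.e., the set of non-maximal elements of T, is finite. -/
/-- Complements of equinumerous finite subsets are equinumerous. -/
lemma compl_equiv_of_finite {α : Type*} {s t : Set α} (hs : s.Finite) (ht : t.Finite)
    (h : Nonempty (↥s ≃ ↥t)) : Nonempty (↥(sᶜ) ≃ ↥(tᶜ)) := by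
  rw [← Cardinal.eq] at h ⊢
  cases finite_or_infinite α with
  | inl hfin => exact Cardinal.mk_compl_eq_mk_compl_finite_same h
  | inr hinf =>
    exact Cardinal.mk_compl_eq_mk_compl_infinite
      (hs.lt_aleph0.trans_le (Cardinal.aleph0_le_mk α))
      (ht.lt_aleph0.trans_le (Cardinal.aleph0_le_mk α))

/-- An equivalence between finite subsets commuting with `f` extends to a fiber-preserving
permutation of the whole type. -/
lemma exists_perm_extend_s14 {X Y : Type*} (f : X → Y) (A B : Set X)
    (hA : A.Finite) (hB : B.Finite) (e : ↥A ≃ ↥B)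
    (hfe : ∀ a : ↥A, f ↑(e a) = f ↑a) :
    ∃ π : Equiv.Perm X, (∀ x, f (π x) = f x) ∧ ∀ a : ↥A, π ↑a = ↑(e a) := by
  classical
  -- fiberwise permutations
  have key : ∀ y : Y, ∃ σ : Equiv.Perm {x // f x = y},
      ∀ (a : {x // f x = y}) (h : (a : X) ∈ A), ((σ a : {x // f x = y}) : X) = ↑(e ⟨↑a, h⟩) := by
    intro y
    set F := {x // f x = y}
    set A' : Set F := {x | (x : X) ∈ A} with hA'
    set B' : Set F := {x | (x : X) ∈ B} with hB'
    have hA'fin : A'.Finite := Set.Finite.preimage (Subtype.val_injective.injOn) hA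
    have hB'fin : B'.Finite := Set.Finite.preimage (Subtype.val_injective.injOn) hB
    -- the induced equivalence on the fiber
    obtain ⟨e', he'⟩ : ∃ e' : ↥A' ≃ ↥B',
        ∀ a : ↥A', ((e' a : F) : X) = ↑(e ⟨↑↑a, a.2⟩) := by
      refine ⟨⟨fun a => ⟨⟨↑(e ⟨↑↑a, a.2⟩), by rw [hfe]; exact (↑a : F).2⟩,
          by exact (e ⟨↑↑a, a.2⟩).2⟩,
        fun b => ⟨⟨↑(e.symm ⟨↑↑b, b.2⟩), ?_⟩, by exact (e.symm ⟨↑↑b, b.2⟩).2⟩, ?_, ?_⟩,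
        fun a => rfl⟩
      · have := hfe (e.symm ⟨↑↑b, b.2⟩)
        rw [Equiv.apply_symm_apply] at this
        rw [← this]; exact (↑b : F).2
      · intro a
        ext
        simp
      · intro b
        ext
        simp
    obtain ⟨c⟩ : Nonempty (↥(A'ᶜ) ≃ ↥(B'ᶜ)) :=
      compl_equiv_of_finite hA'fin hB'fin ⟨e'⟩
    refine ⟨(Equiv.Set.sumCompl A').symm.trans ((e'.sumCongr c).trans (Equiv.Set.sumCompl B')),
      fun a h => ?_⟩
    have ha : a ∈ A' := h
    simp only [Equiv.trans_apply, Equiv.Set.sumCompl_symm_apply_of_mem ha,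
      Equiv.sumCongr_apply, Sum.map_inl, Equiv.Set.sumCompl_apply_inl]
    rw [he' ⟨a, ha⟩]
  choose σ hσ using key
  refine ⟨(Equiv.sigmaFiberEquiv f).symm.trans
    ((Equiv.sigmaCongrRight σ).trans (Equiv.sigmaFiberEquiv f)), ?_, ?_⟩
  · intro x
    exact (σ (f x) ⟨x, rfl⟩).2
  · intro a
    have := hσ (f ↑a) ⟨↑a, rfl⟩ a.2
    exact this

/-- A countable tree is weakly ultrahomogeneous as a partial order iff its set of non-maximal
elements (elements of rank at least 1) is finite. -/
theorem weaklyUltrahomogeneous_tree_iff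
    {T : Type*} [PartialOrder T] [Countable T] (htree : IsTreeOrder T) :
    WeaklyUltrahomogeneousPO T ↔ {a : T | ∃ b : T, a < b}.Finite := by
  classical
  obtain ⟨hroot, hfinbelow, hlin⟩ := htree
  set N : Set T := {a : T | ∃ b : T, a < b} with hN
  constructor
  · -- forward: weakly ultrahomogeneous → N finite
    rintro ⟨S, hSfin, hS⟩
    by_contra hNinf
    have hNinf : N.Infinite := hNinf
    -- downward closure of S
    set S' : Set T := S ∪ ⋃ x ∈ S, {y | y < x} with hS'
    have hS'fin : S'.Finite := hSfin.union (hSfin.biUnion fun x _ => hfinbelow x)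
    have hS'dc : ∀ {y x : T}, y < x → x ∈ S' → y ∈ S' := by
      intro y x hyx hx
      rcases hx with hx | hx
      · exact Or.inr (Set.mem_biUnion hx hyx)
      · simp only [Set.mem_iUnion] at hx
        obtain ⟨z, hz, hxz⟩ := hx
        exact Or.inr (Set.mem_biUnion hz (hyx.trans hxz))
    obtain ⟨a, haN, haS'⟩ := (hNinf.diff hS'fin).nonempty
    obtain ⟨b, hab⟩ := haN
    have hbS' : b ∉ S' := fun hb => haS' (hS'dc hab hb)
    -- comparabilities with S'
    have hlt : ∀ x ∈ S', (x < a ↔ x < b) := by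
      intro x hx
      constructor
      · exact fun h => h.trans hab
      · intro h
        rcases hlin b x a h hab with h1 | h1
        · rcases lt_or_eq_of_le h1 with h2 | h2
          · exact h2
          · exact absurd (h2 ▸ hx) haS'
        · rcases lt_or_eq_of_le h1 with h2 | h2
          · exact absurd (hS'dc h2 hx) haS'
          · exact absurd (h2 ▸ hx) haS'
    have hnota : ∀ x ∈ S', ¬ a ≤ x := by
      intro x hx h
      rcases lt_or_eq_of_le h with h1 | h1
      · exact haS' (hS'dc h1 hx)
      · exact haS' (h1 ▸ hx)
    have hnotb : ∀ x ∈ S', ¬ b ≤ x := by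
      intro x hx h
      rcases lt_or_eq_of_le h with h1 | h1
      · exact hbS' (hS'dc h1 hx)
      · exact hbS' (h1 ▸ hx)
    set s : Set T := S' ∪ {a} with hs_def
    set t : Set T := S' ∪ {b} with ht_def
    have hSs : S ⊆ s := fun x hx => Or.inl (Or.inl hx)
    have hSt : S ⊆ t := fun x hx => Or.inl (Or.inl hx)
    -- the order isomorphism sending a to b
    have hmap : ∀ x ∈ s, (if x = a then b else x) ∈ t := by
      intro x hx
      by_cases h : x = a
      · rw [if_pos h]; exact Or.inr rfl
      · rw [if_neg h]
        rcases hx with hx | hx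
        · exact Or.inl hx
        · exact absurd hx h
    have hinvmap : ∀ x ∈ t, (if x = b then a else x) ∈ s := by
      intro x hx
      by_cases h : x = b
      · rw [if_pos h]; exact Or.inr rfl
      · rw [if_neg h]
        rcases hx with hx | hx
        · exact Or.inl hx
        · exact absurd hx h
    have haS'' : a ∉ S' := haS'
    obtain ⟨φ, hφ⟩ : ∃ φ : ↥s ≃o ↥t,
        ∀ x : ↥s, ((φ x : ↥t) : T) = if (x : T) = a then b else (x : T) := by
      refine ⟨⟨⟨fun x => ⟨if (x : T) = a then b else x, hmap x x.2⟩,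
        fun x => ⟨if (x : T) = b then a else x, hinvmap x x.2⟩, ?_, ?_⟩, ?_⟩, fun x => rfl⟩
      · rintro ⟨x, hx⟩
        ext
        by_cases h : x = a
        · simp [h]
        · have hx' : x ∈ S' := hx.resolve_right h
          have : x ≠ b := fun hxb => hbS' (hxb ▸ hx')
          simp [h, this]
      · rintro ⟨x, hx⟩
        ext
        by_cases h : x = b
        · simp [h]
        · have hx' : x ∈ S' := hx.resolve_right h
          have : x ≠ a := fun hxa => haS' (hxa ▸ hx')
          simp [h, this]
      · rintro ⟨x, hx⟩ ⟨y, hy⟩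
        simp only [Equiv.coe_fn_mk, Subtype.mk_le_mk]
        by_cases hxa : x = a <;> by_cases hya : y = a
        · rw [if_pos hxa, if_pos hya, hxa, hya]
          simp
        · have hy' : y ∈ S' := hy.resolve_right hya
          rw [if_pos hxa, if_neg hya, hxa]
          constructor
          · intro h; exact absurd h (hnotb y hy')
          · intro h; exact absurd h (hnota y hy')
        · have hx' : x ∈ S' := hx.resolve_right hxa
          rw [if_neg hxa, if_pos hya, hya]
          constructor
          · intro h
            rcases lt_or_eq_of_le h with h1 | h1
            · exact le_of_lt ((hlt x hx').2 h1)
            · exact absurd (h1 ▸ hx') hbS'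
          · intro h
            rcases lt_or_eq_of_le h with h1 | h1
            · exact le_of_lt ((hlt x hx').1 h1)
            · exact absurd (h1 ▸ hx') haS'
        · rw [if_neg hxa, if_neg hya]
    have hfix : ∀ (x : T) (hx : x ∈ S), ((φ ⟨x, hSs hx⟩ : ↥t) : T) = x := by
      intro x hx
      have : x ≠ a := fun h => haS' (h ▸ Or.inl hx)
      rw [hφ ⟨x, hSs hx⟩]
      simp [this]
    obtain ⟨ψ, hψ⟩ := hS s t (hS'fin.union (Set.finite_singleton a))
      (hS'fin.union (Set.finite_singleton b)) hSs hSt φ hfix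
    have hψa : ψ a = b := by
      have h1 := hψ ⟨a, Or.inr rfl⟩
      have h2 := hφ ⟨a, Or.inr rfl⟩
      simp only [h2, if_pos rfl] at h1
      exact h1
    -- cardinality contradiction
    have himg : ψ '' {x | x < a} = {x | x < b} := by
      ext y
      constructor
      · rintro ⟨z, hz, rfl⟩
        have : ψ z < ψ a := ψ.lt_iff_lt.2 hz
        rwa [hψa] at this
      · intro hy
        refine ⟨ψ.symm y, ?_, by simp⟩
        have : ψ (ψ.symm y) < ψ a := by rwa [hψa, OrderIso.apply_symm_apply]
        exact ψ.lt_iff_lt.1 this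
    have hcard : {x : T | x < a}.ncard = {x : T | x < b}.ncard := by
      rw [← himg, Set.ncard_image_of_injective _ ψ.injective]
    have hss : {x : T | x < a} ⊂ {x : T | x < b} := by
      constructor
      · exact fun x hx => hx.trans hab
      · intro h
        exact absurd (h hab) (lt_irrefl a)
    have := Set.ncard_lt_ncard hss (hfinbelow b)
    omega
  · -- backward: N finite → weakly ultrahomogeneous
    intro hNfin
    refine ⟨N, hNfin, ?_⟩
    intro s t hsfin htfin hs ht φ hfix
    -- φ maps non-maximal elements to themselves, leaves to leaves with the same predecessors
    have hfix' : ∀ (x : ↥s), (x : T) ∈ N → ((φ x : ↥t) : T) = (x : T) := by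
      rintro ⟨x, hx⟩ hxN
      exact hfix x hxN
    have hmem : ∀ (x : ↥s), ((φ x : ↥t) : T) ∈ N → (x : T) ∈ N := by
      intro x hx
      by_contra hxN
      have h1 : ((φ ⟨(φ x : ↥t), hs hx⟩ : ↥t) : T) = ((φ x : ↥t) : T) := hfix _ hx
      have h2 : (⟨((φ x : ↥t) : T), hs hx⟩ : ↥s) = x := by
        apply φ.injective
        apply Subtype.ext
        exact h1
      rw [← h2] at hxN
      exact hxN hx
    -- predecessors agree
    have hpred : ∀ (x : ↥s) (y : T), y ∈ N → (y < (x : T) ↔ y < ((φ x : ↥t) : T)) := by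
      intro x y hyN
      have h1 : y < (x : T) ↔ (⟨y, hs hyN⟩ : ↥s) < x := Iff.rfl
      have h2 : (⟨y, hs hyN⟩ : ↥s) < x ↔ φ ⟨y, hs hyN⟩ < φ x := (φ.lt_iff_lt).symm
      have h3 : φ ⟨y, hs hyN⟩ < φ x ↔ ((φ ⟨y, hs hyN⟩ : ↥t) : T) < ((φ x : ↥t) : T) := Iff.rfl
      rw [h1, h2, h3, hfix y hyN]
    -- the invariant function
    set f : T → T ⊕ Set T := fun x => if x ∈ N then Sum.inl x else Sum.inr {y | y < x} with hf
    have hfe : ∀ a : ↥s, f ↑(φ.toEquiv a) = f ↑a := by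
      intro a
      show f ((φ a : ↥t) : T) = f (a : T)
      by_cases haN : (a : T) ∈ N
      · rw [hfix' a haN]
      · have hφaN : ((φ a : ↥t) : T) ∉ N := fun h => haN (hmem a h)
        simp only [hf, if_neg haN, if_neg hφaN]
        congr 1
        ext y
        constructor
        · intro hy
          have hyN : y ∈ N := ⟨_, hy⟩
          exact (hpred a y hyN).2 hy
        · intro hy
          have hyN : y ∈ N := ⟨_, hy⟩
          exact (hpred a y hyN).1 hy
    obtain ⟨π, hπf, hπe⟩ := exists_perm_extend_s14 f s t hsfin htfin φ.toEquiv hfe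
    -- π fixes N pointwise
    have hπN : ∀ x ∈ N, π x = x := by
      intro x hx
      have := hπf x
      by_cases h : π x ∈ N
      · simp only [hf, if_pos h, if_pos hx] at this
        exact Sum.inl.inj this
      · simp only [hf, if_neg h, if_pos hx] at this
        exact absurd this (by simp)
    have hπNmem : ∀ x : T, π x ∈ N → x ∈ N := by
      intro x hx
      by_contra hxN
      have := hπf x
      simp only [hf, if_pos hx, if_neg hxN] at this
      exact absurd this (by simp)
    have hπD : ∀ x : T, {y | y < π x} = {y | y < x} := by
      intro x
      by_cases hx : x ∈ N
      · rw [hπN x hx]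
      · have hπx : π x ∉ N := fun h => hx (hπNmem x h)
        have := hπf x
        simp only [hf, if_neg hx, if_neg hπx] at this
        exact Sum.inr.inj this
    -- π is an order isomorphism
    have hlt' : ∀ x y : T, x < y ↔ π x < π y := by
      intro x y
      constructor
      · intro h
        have hxN : x ∈ N := ⟨_, h⟩
        have : x ∈ {z | z < π y} := by rw [hπD y]; exact h
        rwa [← hπN x hxN] at this
      · intro h
        have hπxN : π x ∈ N := ⟨_, h⟩
        have hxN : x ∈ N := hπNmem x hπxN
        have : π x ∈ {z | z < π y} := h
        rw [hπD y] at this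
        rwa [hπN x hxN] at this
    refine ⟨⟨π, ?_⟩, ?_⟩
    · intro x y
      constructor
      · intro h
        rcases lt_or_eq_of_le h with h1 | h1
        · exact le_of_lt ((hlt' x y).2 h1)
        · exact le_of_eq (π.injective h1)
      · intro h
        rcases lt_or_eq_of_le h with h1 | h1
        · exact le_of_lt ((hlt' x y).1 h1)
        · exact le_of_eq (congrArg π h1)
    · intro x
      exact hπe x
end

section
/- Let (T, f, r) be a countable tree with predecessor function. Then (T, f) is ultrahomogeneous if and only if for all a, b ∈ T having the same height, the set of successors of a and the set of successors of b have the same cardinality. -/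
/-- The closure of a set `s` under the function `f`: all iterated images of elements of `s`. -/
def clPred {α : Type*} (f : α → α) (s : Set α) : Set α :=
  {y | ∃ x ∈ s, ∃ n : ℕ, f^[n] x = y}

/-- The structure `(T, f)` is ultrahomogeneous: for all finite sets `s, t ⊆ T`, every bijection
`φ : cl(s) → cl(t)` commuting with `f` extends to an automorphism of `(T, f)`, i.e. a bijection
of `T` commuting with `f`. -/
def UltrahomogeneousPred {T : Type*} (f : T → T) : Prop :=
  ∀ s t : Set T, s.Finite → t.Finite →
    ∀ φ : ↥(clPred f s) ≃ ↥(clPred f t),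
      (∀ x y : ↥(clPred f s), (y : T) = f x → ((φ y : ↥(clPred f t)) : T) = f (φ x)) →
      ∃ g : T ≃ T, (∀ a : T, g (f a) = f (g a)) ∧
        ∀ x : ↥(clPred f s), g (x : T) = ((φ x : ↥(clPred f t)) : T)

namespace UHaux

variable {T : Type*}

/-- height -/
noncomputable def ht (f : T → T) (r : T) (a : T) : ℕ := sInf {n : ℕ | f^[n] a = r}

section basic

variable (f : T → T) (r : T)

lemma ht_spec (hreach : ∀ a : T, ∃ n : ℕ, f^[n] a = r) (a : T) :
    f^[ht f r a] a = r :=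
  Nat.sInf_mem (hreach a)

lemma ht_le {a : T} {n : ℕ} (h : f^[n] a = r) : ht f r a ≤ n := Nat.sInf_le h

lemma iter_ge (hr : f r = r) (hreach : ∀ a : T, ∃ n : ℕ, f^[n] a = r)
    {a : T} {n : ℕ} (h : ht f r a ≤ n) : f^[n] a = r := by
  have := ht_spec f r hreach a
  calc f^[n] a = f^[n - ht f r a] (f^[ht f r a] a) := by
        rw [← Function.iterate_add_apply]; congr 1; omega
    _ = r := by rw [this, Function.iterate_fixed hr]

lemma fixed_eq (hreach : ∀ a : T, ∃ n : ℕ, f^[n] a = r) {p : T} (hp : f p = p) : p = r := by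
  obtain ⟨n, hn⟩ := hreach p
  rw [Function.iterate_fixed hp] at hn
  exact hn

lemma ht_f_lt (hreach : ∀ a : T, ∃ n : ℕ, f^[n] a = r) {a : T} (ha : a ≠ r) :
    ht f r (f a) < ht f r a := by
  have h1 : f^[ht f r a] a = r := ht_spec f r hreach a
  have h2 : ht f r a ≠ 0 := by
    intro h0; rw [h0] at h1; exact ha h1
  have : f^[ht f r a - 1] (f a) = r := by
    rw [← Function.iterate_succ_apply]
    convert h1 using 2; omega
  have := ht_le f r this
  omega

/-- two elements with equal height satisfy the same iterate-equations -/
lemma iter_eq_transfer (hr : f r = r) (hreach : ∀ a : T, ∃ n : ℕ, f^[n] a = r)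
    (hacyc : ∀ (a : T) (m n : ℕ), m < n → f^[m] a = f^[n] a → f^[m] a = r)
    {a b : T} (hab : ht f r a = ht f r b) {m n : ℕ} (h : f^[m] a = f^[n] a) :
    f^[m] b = f^[n] b := by
  rcases lt_trichotomy m n with hmn | hmn | hmn
  · have h1 : f^[m] a = r := hacyc a m n hmn h
    have h2 : ht f r a ≤ m := ht_le f r h1
    have h3 : ht f r a ≤ n := le_of_lt (lt_of_le_of_lt h2 hmn)
    rw [iter_ge f r hr hreach (hab ▸ h2), iter_ge f r hr hreach (hab ▸ h3)]
  · rw [hmn]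
  · have h1 : f^[n] a = r := hacyc a n m hmn h.symm
    have h3 : ht f r a ≤ n := ht_le f r h1
    have h2 : ht f r a ≤ m := le_of_lt (lt_of_le_of_lt h3 hmn)
    rw [iter_ge f r hr hreach (hab ▸ h2), iter_ge f r hr hreach (hab ▸ h3)]

end basic

/-- finite partial isomorphism -/
structure PIso (f : T → T) where
  dom : Set T
  fin : dom.Finite
  toFun : T → T
  closed : ∀ x ∈ dom, f x ∈ dom
  comm : ∀ x ∈ dom, toFun (f x) = f (toFun x)
  inj : Set.InjOn toFun dom

namespace PIso

variable {f : T → T} {r : T}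

def img (p : PIso f) : Set T := p.toFun '' p.dom

lemma img_fin (p : PIso f) : p.img.Finite := p.fin.image _

lemma iter_mem (p : PIso f) {x : T} (hx : x ∈ p.dom) (n : ℕ) : f^[n] x ∈ p.dom := by
  induction n with
  | zero => exact hx
  | succ k ih => rw [Function.iterate_succ_apply']; exact p.closed _ ih

lemma iter_comm (p : PIso f) {x : T} (hx : x ∈ p.dom) (n : ℕ) :
    p.toFun (f^[n] x) = f^[n] (p.toFun x) := by
  induction n with
  | zero => rfl
  | succ k ih =>
    rw [Function.iterate_succ_apply', Function.iterate_succ_apply', p.comm _ (p.iter_mem hx k), ih]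

lemma img_closed (p : PIso f) {y : T} (hy : y ∈ p.img) : f y ∈ p.img := by
  obtain ⟨x, hx, rfl⟩ := hy
  exact ⟨f x, p.closed _ hx, p.comm _ hx⟩

lemma root_mem (hreach : ∀ a : T, ∃ n : ℕ, f^[n] a = r) (p : PIso f)
    {x : T} (hx : x ∈ p.dom) : r ∈ p.dom := by
  obtain ⟨n, hn⟩ := hreach x
  exact hn ▸ p.iter_mem hx n

lemma map_root (hr : f r = r) (hreach : ∀ a : T, ∃ n : ℕ, f^[n] a = r) (p : PIso f)
    (hrdom : r ∈ p.dom) : p.toFun r = r := by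
  apply fixed_eq f r hreach
  have h := p.comm _ hrdom
  rw [hr] at h
  exact h.symm

lemma ht_map (hr : f r = r) (hreach : ∀ a : T, ∃ n : ℕ, f^[n] a = r) (p : PIso f)
    {x : T} (hx : x ∈ p.dom) : ht f r (p.toFun x) = ht f r x := by
  have hrd : r ∈ p.dom := p.root_mem hreach hx
  have hmr : p.toFun r = r := p.map_root hr hreach hrd
  have key : ∀ n : ℕ, f^[n] x = r ↔ f^[n] (p.toFun x) = r := by
    intro n
    constructor
    · intro h; rw [← p.iter_comm hx, h, hmr]
    · intro h
      rw [← p.iter_comm hx, ← hmr] at h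
      exact p.inj (p.iter_mem hx n) hrd h
  unfold ht
  congr 1
  ext n
  exact (key n).symm

/-- the inverse partial isomorphism -/
noncomputable def symm [Nonempty T] (p : PIso f) : PIso f where
  dom := p.img
  fin := p.img_fin
  toFun := Function.invFunOn p.toFun p.dom
  closed := fun _ hy => p.img_closed hy
  comm := by
    intro y hy
    obtain ⟨x, hx, rfl⟩ := hy
    have h1 : Function.invFunOn p.toFun p.dom (p.toFun x) = x :=
      p.inj.leftInvOn_invFunOn hx
    rw [h1, ← p.comm _ hx]
    exact p.inj.leftInvOn_invFunOn (p.closed _ hx)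
  inj := by
    intro y1 h1 y2 h2 heq
    obtain ⟨x1, hx1, rfl⟩ := h1
    obtain ⟨x2, hx2, rfl⟩ := h2
    rw [p.inj.leftInvOn_invFunOn hx1, p.inj.leftInvOn_invFunOn hx2] at heq
    rw [heq]

lemma symm_dom [Nonempty T] (p : PIso f) : p.symm.dom = p.img := rfl

lemma symm_apply [Nonempty T] (p : PIso f) {x : T} (hx : x ∈ p.dom) :
    p.symm.toFun (p.toFun x) = x := p.inj.leftInvOn_invFunOn hx

lemma symm_img [Nonempty T] (p : PIso f) : p.symm.img = p.dom := by
  ext z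
  constructor
  · rintro ⟨y, hy, rfl⟩
    obtain ⟨x, hx, rfl⟩ := hy
    rw [p.symm_apply hx]; exact hx
  · intro hz
    exact ⟨p.toFun z, ⟨z, hz, rfl⟩, p.symm_apply hz⟩

/-- extension relation -/
def Ext (p q : PIso f) : Prop :=
  p.dom ⊆ q.dom ∧ ∀ z ∈ p.dom, q.toFun z = p.toFun z

lemma Ext.refl (p : PIso f) : Ext p p := ⟨subset_rfl, fun _ _ => rfl⟩

lemma Ext.trans {p q s : PIso f} (h1 : Ext p q) (h2 : Ext q s) : Ext p s :=
  ⟨h1.1.trans h2.1, fun z hz => (h2.2 z (h1.1 hz)).trans (h1.2 z hz)⟩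

lemma Ext.img_subset {p q : PIso f} (h : Ext p q) : p.img ⊆ q.img := by
  rintro _ ⟨x, hx, rfl⟩
  exact ⟨x, h.1 hx, h.2 x hx⟩

end PIso

section extension

variable {f : T → T} {r : T}
variable (hr : f r = r) (hreach : ∀ a : T, ∃ n : ℕ, f^[n] a = r)
  (hacyc : ∀ (a : T) (m n : ℕ), m < n → f^[m] a = f^[n] a → f^[m] a = r)
  (hcard : ∀ a b : T, ht f r a = ht f r b →
    Cardinal.mk ↥{x : T | x ≠ a ∧ f x = a} = Cardinal.mk ↥{x : T | x ≠ b ∧ f x = b})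

include hr hreach hcard in
/-- one-step extension -/
lemma extend_one (p : PIso f) (x : T) (hx : x ∉ p.dom) (hfx : f x ∈ p.dom) :
    ∃ q : PIso f, PIso.Ext p q ∧ x ∈ q.dom := by
  classical
  set a := f x with ha
  set b := p.toFun a with hb
  set Sa : Set T := {z | z ≠ a ∧ f z = a} with hSa
  set Sb : Set T := {z | z ≠ b ∧ f z = b} with hSb
  have hxa : x ≠ a := fun h => hx (h ▸ hfx)
  have hxSa : x ∈ Sa := ⟨hxa, rfl⟩
  have hcardab : Cardinal.mk ↥Sa = Cardinal.mk ↥Sb := by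
    exact hcard a b (p.ht_map hr hreach hfx).symm
  set D : Set T := Sa ∩ p.dom with hD
  set R : Set T := Sb ∩ p.img with hR
  have hbij : Set.BijOn p.toFun D R := by
    refine ⟨?_, fun z1 h1 z2 h2 => p.inj h1.2 h2.2, ?_⟩
    · rintro z ⟨⟨hza, hfz⟩, hzdom⟩
      refine ⟨⟨?_, ?_⟩, ⟨z, hzdom, rfl⟩⟩
      · intro hcon
        exact hza (p.inj hzdom hfx hcon)
      · rw [← p.comm _ hzdom, hfz]
    · rintro w ⟨⟨hwb, hfw⟩, z, hzdom, rfl⟩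
      refine ⟨z, ⟨⟨?_, ?_⟩, hzdom⟩, rfl⟩
      · intro hcon; exact hwb (by rw [hcon])
      · apply p.inj (p.closed _ hzdom) hfx
        rw [p.comm _ hzdom, hfw]
  have hy : ∃ y, y ∈ Sb ∧ y ∉ p.img := by
    by_contra hcon
    push_neg at hcon
    have hRSb : R = Sb := by
      apply Set.inter_eq_left.mpr
      intro w hw; exact hcon w hw
    have hSbfin : Sb.Finite := hRSb ▸ (p.img_fin.subset Set.inter_subset_right)
    have hSafin : Sa.Finite := by
      rw [← Set.finite_coe_iff]
      rw [← Set.finite_coe_iff] at hSbfin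
      exact Finite.of_equiv _ (Cardinal.eq.mp hcardab.symm).some
    have hncard : Sa.ncard = Sb.ncard := by
      rw [← Nat.card_coe_set_eq, ← Nat.card_coe_set_eq]
      exact Nat.card_congr (Cardinal.eq.mp hcardab).some
    have hDR : D.ncard = R.ncard := by
      rw [← hbij.image_eq]
      exact (Set.ncard_image_of_injOn hbij.injOn).symm
    have hDeq : D = Sa := by
      apply Set.eq_of_subset_of_ncard_le Set.inter_subset_left _ hSafin
      rw [hncard, ← hRSb, ← hDR]
    have : x ∈ D := hDeq ▸ hxSa
    exact hx this.2
  obtain ⟨y, hySb, hyimg⟩ := hy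
  have hyb : f y = b := hySb.2
  refine ⟨⟨insert x p.dom, p.fin.insert x, Function.update p.toFun x y, ?_, ?_, ?_⟩,
    ⟨Set.subset_insert x p.dom, fun z hz => Function.update_of_ne (show z ≠ x from fun h => hx (h ▸ hz)) _ _⟩,
    Set.mem_insert x p.dom⟩
  · intro z hz
    rcases hz with hzx | hz
    · rw [hzx]; exact Set.mem_insert_of_mem _ hfx
    · exact Set.mem_insert_of_mem _ (p.closed _ hz)
  · intro z hz
    rcases hz with hzx | hz
    · rw [hzx]
      rw [Function.update_of_ne (show f x ≠ x from fun h => hx (h ▸ hfx)) _ _,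
        Function.update_self, ← hb, hyb]
    · have h1 : f z ≠ x := fun h => hx (h ▸ p.closed _ hz)
      have h2 : z ≠ x := fun (h : z = x) => hx (h ▸ hz)
      rw [Function.update_of_ne h1, Function.update_of_ne h2]
      exact p.comm _ hz
  · intro z1 hz1' z2 hz2' heq
    rcases hz1' with hzx1 | hz1 <;> rcases hz2' with hzx2 | hz2
    · rw [hzx1, hzx2]
    · exfalso
      rw [hzx1, Function.update_self,
        Function.update_of_ne (show z2 ≠ x from fun h => hx (h ▸ hz2))] at heq
      exact hyimg ⟨z2, hz2, heq.symm⟩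
    · exfalso
      rw [hzx2, Function.update_self,
        Function.update_of_ne (show z1 ≠ x from fun h => hx (h ▸ hz1))] at heq
      exact hyimg ⟨z1, hz1, heq⟩
    · rw [Function.update_of_ne (show z1 ≠ x from fun h => hx (h ▸ hz1)),
        Function.update_of_ne (show z2 ≠ x from fun h => hx (h ▸ hz2))] at heq
      exact p.inj hz1 hz2 heq

include hr hreach hcard in
/-- extension to contain a given point in the domain -/
lemma extend_mem (p : PIso f) (x : T) :
    ∃ q : PIso f, PIso.Ext p q ∧ x ∈ q.dom := by
  generalize hn : ht f r x = n
  induction n using Nat.strong_induction_on generalizing p x with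
  | _ n ih =>
  by_cases hx : x ∈ p.dom
  · exact ⟨p, PIso.Ext.refl p, hx⟩
  by_cases hxr : x = r
  · have hdome : p.dom = ∅ := by
      by_contra hne
      obtain ⟨z, hz⟩ := Set.nonempty_iff_ne_empty.mpr hne
      exact hx (hxr ▸ p.root_mem hreach hz)
    refine ⟨⟨{r}, Set.finite_singleton r, fun _ => r, ?_, ?_, ?_⟩, ⟨?_, ?_⟩, ?_⟩
    · intro z hz
      rw [Set.mem_singleton_iff] at hz
      rw [hz, hr]
      exact Set.mem_singleton r
    · intro z hz; rw [hr]
    · intro z1 h1 z2 h2 heq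
      rw [Set.mem_singleton_iff] at h1 h2
      rw [h1, h2]
    · rw [hdome]; exact Set.empty_subset _
    · intro z hz; rw [hdome] at hz; exact absurd hz (Set.notMem_empty z)
    · rw [hxr]; exact Set.mem_singleton r
  · have hlt : ht f r (f x) < n := hn ▸ ht_f_lt f r hreach hxr
    obtain ⟨q', hq', hfq'⟩ := ih _ hlt p (f x) rfl
    by_cases hxq : x ∈ q'.dom
    · exact ⟨q', hq', hxq⟩
    · obtain ⟨q, hq, hxq2⟩ := extend_one hr hreach hcard q' x hxq hfq'
      exact ⟨q, hq'.trans hq, hxq2⟩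

include hr hreach hcard in
/-- extension to contain a given point in domain and image -/
lemma extend_both (p : PIso f) (x : T) :
    ∃ q : PIso f, PIso.Ext p q ∧ x ∈ q.dom ∧ x ∈ q.img := by
  haveI : Nonempty T := ⟨r⟩
  obtain ⟨q1, h1, hx1⟩ := extend_mem hr hreach hcard p x
  obtain ⟨q2, h2, hx2⟩ := extend_mem hr hreach hcard q1.symm x
  have hdom12 : q1.img ⊆ q2.dom := h2.1
  have hsub : q1.dom ⊆ q2.img := by
    rw [← q1.symm_img]
    exact PIso.Ext.img_subset h2
  have hagree : ∀ z ∈ q1.dom, q2.symm.toFun z = q1.toFun z := by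
    intro z hz
    have hmem : q1.toFun z ∈ q2.dom := hdom12 ⟨z, hz, rfl⟩
    have hval : q2.toFun (q1.toFun z) = z := by
      rw [h2.2 _ (show q1.toFun z ∈ q1.symm.dom from ⟨z, hz, rfl⟩)]
      exact q1.symm_apply hz
    conv_lhs => rw [← hval]
    exact q2.symm_apply hmem
  have hext : PIso.Ext q1 q2.symm := ⟨hsub, hagree⟩
  refine ⟨q2.symm, h1.trans hext, hext.1 hx1, ?_⟩
  rw [q2.symm_img]
  exact hx2

include hr hreach hcard in
/-- chain construction: every finite partial isomorphism extends to a global automorphism -/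
lemma exists_global [Countable T] (p0 : PIso f) :
    ∃ g : T ≃ T, (∀ a : T, g (f a) = f (g a)) ∧ ∀ z ∈ p0.dom, g z = p0.toFun z := by
  classical
  haveI : Nonempty T := ⟨r⟩
  obtain ⟨e, he⟩ := exists_surjective_nat T
  let P : ℕ → PIso f := fun n =>
    Nat.rec p0 (fun n q => (extend_both hr hreach hcard q (e n)).choose) n
  have hPsucc : ∀ n, PIso.Ext (P n) (P (n+1)) ∧ e n ∈ (P (n+1)).dom ∧ e n ∈ (P (n+1)).img :=
    fun n => (extend_both hr hreach hcard (P n) (e n)).choose_spec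
  have hmono : ∀ m n, m ≤ n → PIso.Ext (P m) (P n) := by
    intro m n h
    induction n, h using Nat.le_induction with
    | base => exact PIso.Ext.refl _
    | succ k hk ih => exact ih.trans (hPsucc k).1
  let idx : T → ℕ := fun x => Classical.choose (he x) + 1
  have hidx : ∀ x, x ∈ (P (idx x)).dom := fun x => by
    have h := Classical.choose_spec (he x)
    have h2 := (hPsucc (Classical.choose (he x))).2.1
    rw [h] at h2
    exact h2
  let g0 : T → T := fun x => (P (idx x)).toFun x
  have hg0 : ∀ (x : T) (n : ℕ), x ∈ (P n).dom → g0 x = (P n).toFun x := by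
    intro x n hxn
    rcases le_total (idx x) n with h | h
    · exact ((hmono _ _ h).2 x (hidx x)).symm
    · exact (hmono _ _ h).2 x hxn
  have hinj : Function.Injective g0 := by
    intro x y hxy
    have hxN : x ∈ (P (max (idx x) (idx y))).dom :=
      (hmono _ _ (le_max_left _ _)).1 (hidx x)
    have hyN : y ∈ (P (max (idx x) (idx y))).dom :=
      (hmono _ _ (le_max_right _ _)).1 (hidx y)
    apply (P (max (idx x) (idx y))).inj hxN hyN
    rw [← hg0 x _ hxN, ← hg0 y _ hyN, hxy]
  have hsurj : Function.Surjective g0 := by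
    intro y
    obtain ⟨n, rfl⟩ := he y
    obtain ⟨z, hz, hze⟩ := (hPsucc n).2.2
    exact ⟨z, (hg0 z (n+1) hz).trans hze⟩
  have hcomm : ∀ a : T, g0 (f a) = f (g0 a) := by
    intro a
    have h1 : a ∈ (P (idx a)).dom := hidx a
    have h2 : f a ∈ (P (idx a)).dom := (P (idx a)).closed _ h1
    rw [hg0 (f a) (idx a) h2, (P (idx a)).comm _ h1, ← hg0 a (idx a) h1]
  refine ⟨Equiv.ofBijective g0 ⟨hinj, hsurj⟩, hcomm, ?_⟩
  intro z hz
  exact hg0 z 0 hz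

end extension

section clPredLemmas

variable {f : T → T} {r : T}

lemma clPred_closed {s : Set T} {x : T} (hx : x ∈ clPred f s) : f x ∈ clPred f s := by
  obtain ⟨z, hz, n, rfl⟩ := hx
  exact ⟨z, hz, n + 1, Function.iterate_succ_apply' f n z⟩

lemma clPred_finite (hr : f r = r) (hreach : ∀ a : T, ∃ n : ℕ, f^[n] a = r)
    {s : Set T} (hs : s.Finite) : (clPred f s).Finite := by
  have hsub : clPred f s ⊆ ⋃ x ∈ s, (fun n => f^[n] x) '' Set.Iic (ht f r x) := by
    rintro y ⟨x, hxs, n, rfl⟩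
    rcases le_or_gt n (ht f r x) with h | h
    · exact Set.mem_biUnion hxs ⟨n, h, rfl⟩
    · refine Set.mem_biUnion hxs ⟨ht f r x, Set.mem_Iic.mpr (le_refl _), ?_⟩
      simp only
      rw [ht_spec f r hreach x, iter_ge f r hr hreach (le_of_lt h)]
  exact ((hs.biUnion (fun x _ => (Set.finite_Iic _).image _)).subset hsub)

end clPredLemmas

end UHaux

/-- A countable tree `(T, f, r)` with predecessor function `f` and root `r` is ultrahomogeneous
iff any two elements of the same height (the least `n` with `f^[n] a = r`) have sets of
successors of the same cardinality. -/
theorem ultrahomogeneousPred_iff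
    {T : Type*} [Countable T] (f : T → T) (r : T)
    (hr : f r = r)
    (hreach : ∀ a : T, ∃ n : ℕ, f^[n] a = r)
    (hacyc : ∀ (a : T) (m n : ℕ), m < n → f^[m] a = f^[n] a → f^[m] a = r) :
    UltrahomogeneousPred f ↔
      ∀ a b : T, sInf {n : ℕ | f^[n] a = r} = sInf {n : ℕ | f^[n] b = r} →
        Cardinal.mk ↥{x : T | x ≠ a ∧ f x = a} = Cardinal.mk ↥{x : T | x ≠ b ∧ f x = b} := by
  constructor
  · -- ultrahomogeneous implies equal successor cardinalities
    intro hUH a b hab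
    have hab' : UHaux.ht f r a = UHaux.ht f r b := hab
    set d := UHaux.ht f r a with hd
    let u : Fin (d + 1) → ↥(clPred f ({a} : Set T)) :=
      fun i => ⟨f^[(i : ℕ)] a, a, rfl, i, rfl⟩
    let v : Fin (d + 1) → ↥(clPred f ({b} : Set T)) :=
      fun i => ⟨f^[(i : ℕ)] b, b, rfl, i, rfl⟩
    have hbij : ∀ (c : T), UHaux.ht f r c = d →
        Function.Bijective (fun i : Fin (d+1) => (⟨f^[(i : ℕ)] c, c, rfl, i, rfl⟩ :
          ↥(clPred f ({c} : Set T)))) := by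
      intro c hc
      constructor
      · intro i j hij
        have hij' : f^[(i : ℕ)] c = f^[(j : ℕ)] c := congrArg Subtype.val hij
        have hi := i.isLt
        have hj := j.isLt
        apply Fin.ext
        by_contra hne
        rcases Nat.lt_or_ge (i : ℕ) (j : ℕ) with hlt | hge
        · have h1 := hacyc c i j hlt hij'
          have h2 : UHaux.ht f r c ≤ (i : ℕ) := UHaux.ht_le f r h1
          omega
        · have hlt : (j : ℕ) < (i : ℕ) := by omega
          have h1 := hacyc c j i hlt hij'.symm
          have h2 : UHaux.ht f r c ≤ (j : ℕ) := UHaux.ht_le f r h1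
          omega
      · rintro ⟨y, hy⟩
        obtain ⟨z, hz, n, rfl⟩ := hy
        rw [Set.mem_singleton_iff] at hz
        subst hz
        rcases le_or_gt n d with hn | hn
        · exact ⟨⟨n, by omega⟩, Subtype.ext rfl⟩
        · refine ⟨⟨d, by omega⟩, Subtype.ext ?_⟩
          show f^[d] z = f^[n] z
          rw [← hc]
          rw [UHaux.ht_spec f r hreach z, UHaux.iter_ge f r hr hreach (by omega : UHaux.ht f r z ≤ n)]
    have hu : Function.Bijective u := hbij a rfl
    have hv : Function.Bijective v := hbij b hab'.symm
    let eu := Equiv.ofBijective u hu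
    let ev := Equiv.ofBijective v hv
    let φ := eu.symm.trans ev
    have huval : ∀ x : ↥(clPred f ({a} : Set T)), (x : T) = f^[((eu.symm x : Fin (d+1)) : ℕ)] a := by
      intro x
      have h1 : u (eu.symm x) = x := eu.apply_symm_apply x
      exact (congrArg Subtype.val h1).symm
    have hφ : ∀ x y : ↥(clPred f ({a} : Set T)), (y : T) = f x →
        ((φ y : ↥(clPred f ({b} : Set T))) : T) = f (φ x) := by
      intro x y hxy
      have hx := huval x
      have hy := huval y
      have heq : f^[((eu.symm y : Fin (d+1)) : ℕ)] a = f^[((eu.symm x : Fin (d+1)) : ℕ) + 1] a := by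
        rw [← hy, hxy, hx, Function.iterate_succ_apply']
      have htr := UHaux.iter_eq_transfer f r hr hreach hacyc hab' heq
      show (v (eu.symm y) : T) = f ((v (eu.symm x) : T))
      show f^[((eu.symm y : Fin (d+1)) : ℕ)] b = f (f^[((eu.symm x : Fin (d+1)) : ℕ)] b)
      rw [htr, Function.iterate_succ_apply']
    obtain ⟨g, hgcomm, hgext⟩ :=
      hUH {a} {b} (Set.finite_singleton a) (Set.finite_singleton b) φ hφ
    have hamem : a ∈ clPred f ({a} : Set T) := ⟨a, rfl, 0, rfl⟩
    have hga : g a = b := by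
      have h0 : u ⟨0, by omega⟩ = ⟨a, hamem⟩ := Subtype.ext rfl
      have h1 : eu.symm ⟨a, hamem⟩ = ⟨0, by omega⟩ := by
        rw [← h0]
        exact eu.symm_apply_apply _
      rw [hgext ⟨a, hamem⟩]
      show (v (eu.symm ⟨a, hamem⟩) : T) = b
      rw [h1]
      rfl
    refine Cardinal.mk_congr (Equiv.subtypeEquiv g ?_)
    intro x
    simp only [Set.mem_setOf_eq]
    constructor
    · rintro ⟨hx1, hx2⟩
      refine ⟨?_, ?_⟩
      · intro hc
        exact hx1 (g.injective (by rw [hc, hga]))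
      · rw [← hgcomm, hx2, hga]
    · rintro ⟨hx1, hx2⟩
      refine ⟨?_, ?_⟩
      · intro hc
        rw [hc, hga] at hx1
        exact hx1 rfl
      · apply g.injective
        rw [hgcomm, hx2, hga]
  · -- equal successor cardinalities implies ultrahomogeneous
    intro hcard s t hs hts φ hφ
    classical
    have hcard' : ∀ a b : T, UHaux.ht f r a = UHaux.ht f r b →
        Cardinal.mk ↥{x : T | x ≠ a ∧ f x = a} = Cardinal.mk ↥{x : T | x ≠ b ∧ f x = b} := hcard
    let p0 : UHaux.PIso f :=
      { dom := clPred f s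
        fin := UHaux.clPred_finite hr hreach hs
        toFun := fun x => if h : x ∈ clPred f s then ((φ ⟨x, h⟩ : ↥(clPred f t)) : T) else x
        closed := fun x hx => UHaux.clPred_closed hx
        comm := by
          intro x hx
          have hfx : f x ∈ clPred f s := UHaux.clPred_closed hx
          simp only [dif_pos hfx, dif_pos hx]
          exact hφ ⟨x, hx⟩ ⟨f x, hfx⟩ rfl
        inj := by
          intro x1 h1 x2 h2 heq
          simp only [dif_pos h1, dif_pos h2] at heq
          have := φ.injective (Subtype.ext heq)
          exact congrArg Subtype.val this }
    obtain ⟨g, hgc, hge⟩ := UHaux.exists_global hr hreach hcard' p0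
    refine ⟨g, hgc, ?_⟩
    intro x
    have h1 := hge (x : T) x.2
    rw [h1]
    show (if h : (x : T) ∈ clPred f s then ((φ ⟨(x : T), h⟩ : ↥(clPred f t)) : T) else (x : T)) = _
    rw [dif_pos x.2]
end

section
/- Let (T, f, r) be a countable tree with predecessor function of height at most 2, i.e., f^[2](a) = r for every a ∈ T. Then (T, f) is weakly ultrahomogeneous if and only if all but finitely many elements of height 1 have an equal number of successors; that is, there is a cardinal k such that the set {a ∈ T : a has height 1 and the set of successors of a has cardinality ≠ k} is finite. -/
universe u

/-- `S` is an exceptional set for `(T, f)`: `S` is finite, and for all finite sets `s, t ⊆ T`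
whose closures contain `S`, every bijection `φ : cl(s) → cl(t)` commuting with `f` and fixing
each element of `S` extends to an automorphism of `(T, f)`. -/
def IsExceptionalPred {T : Type*} (f : T → T) (S : Set T) : Prop :=
  S.Finite ∧
    ∀ s t : Set T, s.Finite → t.Finite → S ⊆ clPred f s → S ⊆ clPred f t →
      ∀ φ : ↥(clPred f s) ≃ ↥(clPred f t),
        (∀ x y : ↥(clPred f s), (y : T) = f x → ((φ y : ↥(clPred f t)) : T) = f (φ x)) →
        (∀ x : ↥(clPred f s), (x : T) ∈ S → ((φ x : ↥(clPred f t)) : T) = x) →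
        ∃ g : T ≃ T, (∀ a : T, g (f a) = f (g a)) ∧
          ∀ x : ↥(clPred f s), g (x : T) = ((φ x : ↥(clPred f t)) : T)

/-- The structure `(T, f)` is weakly ultrahomogeneous if it has an exceptional set. -/
def WeaklyUltrahomogeneousPred {T : Type*} (f : T → T) : Prop :=
  ∃ S : Set T, IsExceptionalPred f S


private lemma card_compl_eq {α β : Type u} (h : Cardinal.mk α = Cardinal.mk β)
    (u : Set α) (v : Set β) (hu : u.Finite) (e : ↥u ≃ ↥v) :
    Cardinal.mk ↥uᶜ = Cardinal.mk ↥vᶜ := by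
  have h1 := Cardinal.mk_sum_compl u
  have h2 := Cardinal.mk_sum_compl v
  have he : Cardinal.mk ↥u = Cardinal.mk ↥v := Cardinal.mk_congr e
  have h3 : Cardinal.mk ↥u + Cardinal.mk ↥uᶜ = Cardinal.mk ↥u + Cardinal.mk ↥vᶜ := by
    rw [h1, he, h2, h]
  exact Cardinal.eq_of_add_eq_add_left h3 hu.lt_aleph0

private lemma extend_equiv {α β : Type u} (h : Cardinal.mk α = Cardinal.mk β)
    (u : Set α) (v : Set β) (hu : u.Finite) (e : ↥u ≃ ↥v) :
    ∃ g : α ≃ β, (∀ x : ↥u, g (x : α) = ((e x : ↥v) : β)) ∧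
      ∀ x : α, x ∉ u → g x ∉ v := by
  classical
  obtain ⟨e'⟩ := Cardinal.eq.mp (card_compl_eq h u v hu e)
  refine ⟨(Equiv.Set.sumCompl u).symm.trans ((e.sumCongr e').trans (Equiv.Set.sumCompl v)),
    ?_, ?_⟩
  · intro x
    simp [Equiv.Set.sumCompl_symm_apply]
  · intro x hx
    simp [Equiv.Set.sumCompl_symm_apply_of_notMem hx]
    exact (e' ⟨x, hx⟩).2



private def lvl1 {T : Type u} (f : T → T) (r : T) : Set T := {a : T | f a = r ∧ a ≠ r}
private def succs {T : Type u} (f : T → T) (a : T) : Set T := {x : T | x ≠ a ∧ f x = a}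

private lemma sig_ext {T : Type u} (f : T → T) (r : T) :
    ∀ (a a' : ↥(lvl1 f r)), (a : T) = (a' : T) →
    ∀ (x : ↥(succs f (a : T))) (x' : ↥(succs f (a' : T))), (x : T) = (x' : T) →
      (⟨a, some x⟩ : Σ b : ↥(lvl1 f r), Option ↥(succs f (b : T))) = ⟨a', some x'⟩ := by
  rintro ⟨a, ha⟩ ⟨a', ha'⟩ h
  dsimp at h; subst h
  rintro ⟨x, hx⟩ ⟨x', hx'⟩ h
  dsimp at h; subst h
  rfl

open Classical in
private noncomputable def decomp {T : Type u} (f : T → T) (r : T) (hr : f r = r)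
    (hff : ∀ x, f (f x) = r) :
    T ≃ Option (Σ a : ↥(lvl1 f r), Option ↥(succs f (a : T))) where
  toFun x :=
    if hx : x = r then none
    else if h1 : f x = r then some ⟨⟨x, h1, hx⟩, none⟩
    else some ⟨⟨f x, hff x, h1⟩, some ⟨x, fun h => h1 (by rw [show f x = f (f x) from congrArg f h]; exact hff x), rfl⟩⟩
  invFun o :=
    match o with
    | none => r
    | some ⟨a, none⟩ => (a : T)
    | some ⟨_, some x⟩ => (x : T)
  left_inv x := by
    by_cases hx : x = r
    · simp [hx]
    · by_cases h1 : f x = r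
      · simp [hx, h1]
      · simp [hx, h1]
  right_inv o := by
    match o with
    | none => simp [hr]
    | some ⟨⟨a, ha1, ha2⟩, none⟩ => simp [ha1, ha2]
    | some ⟨a, some x⟩ =>
      have hfx : f (x : T) = (a : T) := x.2.2
      have hxr : (x : T) ≠ r := fun h => a.2.2 (by rw [← hfx, h, hr])
      have hfxr : f (x : T) ≠ r := by rw [hfx]; exact a.2.2
      dsimp only
      rw [dif_neg hxr, dif_neg hfxr]
      exact congrArg some (sig_ext f r _ a hfx _ x rfl)

private lemma build_auto {T : Type u} (f : T → T) (r : T) (hr : f r = r)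
    (hff : ∀ x, f (f x) = r)
    (σ : ↥(lvl1 f r) ≃ ↥(lvl1 f r))
    (E : ∀ a : ↥(lvl1 f r), ↥(succs f (a : T)) ≃ ↥(succs f ((σ a : ↥(lvl1 f r)) : T))) :
    ∃ g : T ≃ T, (∀ x, g (f x) = f (g x)) ∧ g r = r ∧
      (∀ a : ↥(lvl1 f r), g (a : T) = ((σ a : ↥(lvl1 f r)) : T)) ∧
      (∀ (a : ↥(lvl1 f r)) (x : ↥(succs f (a : T))),
        g (x : T) = ((E a x : ↥(succs f ((σ a : ↥(lvl1 f r)) : T))) : T)) := by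
  set D := decomp f r hr hff with hD
  set c : (Σ a : ↥(lvl1 f r), Option ↥(succs f (a : T))) ≃
      (Σ a : ↥(lvl1 f r), Option ↥(succs f (a : T))) :=
    Equiv.sigmaCongr σ (fun a => (E a).optionCongr) with hc
  set g : T ≃ T := D.trans ((Equiv.optionCongr c).trans D.symm) with hg
  have key : ∀ o, g (D.symm o) = D.symm ((Equiv.optionCongr c) o) := by
    intro o; simp [hg]
  have h0 : g r = r := by
    have := key none
    exact this
  have h1 : ∀ a : ↥(lvl1 f r), g (a : T) = ((σ a : ↥(lvl1 f r)) : T) := by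
    intro a
    have := key (some ⟨a, none⟩)
    simp only [Equiv.optionCongr_apply, Option.map_some] at this; exact this
  have h2 : ∀ (a : ↥(lvl1 f r)) (x : ↥(succs f (a : T))),
      g (x : T) = ((E a x : ↥(succs f ((σ a : ↥(lvl1 f r)) : T))) : T) := by
    intro a x
    have := key (some ⟨a, some x⟩)
    simp only [Equiv.optionCongr_apply, Option.map_some] at this; exact this
  refine ⟨g, ?_, h0, h1, h2⟩
  intro x
  by_cases hx : x = r
  · subst hx; rw [hr, h0, hr]
  · by_cases hfx : f x = r
    · rw [hfx, h0]
      have := h1 ⟨x, hfx, hx⟩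
      rw [this]
      exact ((σ ⟨x, hfx, hx⟩).2.1).symm
    · have ha : f x ∈ lvl1 f r := ⟨hff x, hfx⟩
      have hx' : x ∈ succs f ((⟨f x, ha⟩ : ↥(lvl1 f r)) : T) :=
        ⟨fun h => hfx (by rw [show f x = f (f x) from congrArg f h]; exact hff x), rfl⟩
      rw [h1 ⟨f x, ha⟩, h2 ⟨f x, ha⟩ ⟨x, hx'⟩]
      exact ((E ⟨f x, ha⟩ ⟨x, hx'⟩).2.2).symm

private lemma subset_clPred {T : Type u} (f : T → T) (s : Set T) : s ⊆ clPred f s :=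
  fun x hx => ⟨x, hx, 0, rfl⟩

private lemma clPred_fclosed {T : Type u} (f : T → T) (s : Set T) :
    ∀ x ∈ clPred f s, f x ∈ clPred f s := by
  rintro x ⟨y, hy, n, rfl⟩
  exact ⟨y, hy, n + 1, by rw [Function.iterate_succ_apply']⟩

private lemma clPred_finite {T : Type u} {f : T → T} {r : T} (hr : f r = r)
    (hff : ∀ x, f (f x) = r) {s : Set T} (hs : s.Finite) : (clPred f s).Finite := by
  apply ((hs.union (hs.image f)).union (Set.finite_singleton r)).subset
  rintro x ⟨y, hy, n, rfl⟩
  match n with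
  | 0 => exact Or.inl (Or.inl hy)
  | 1 => exact Or.inl (Or.inr ⟨y, hy, by simp⟩)
  | (n+2) =>
    right
    have h2 : f^[2] y = r := by
      rw [Function.iterate_succ_apply, Function.iterate_one]; exact hff y
    simp [Function.iterate_add_apply f n 2, h2, Function.iterate_fixed hr]

private lemma clPred_insert {T : Type u} (f : T → T) (r : T) (hr : f r = r)
    (a : T) (ha : f a = r) (S : Set T) :
    clPred f (insert a S) = insert a (insert r (clPred f S)) := by
  ext x
  constructor
  · rintro ⟨y, hy, n, rfl⟩
    rcases hy with rfl | hy
    · cases n with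
      | zero => exact Or.inl rfl
      | succ m =>
        right; left
        rw [Function.iterate_succ_apply, ha, Function.iterate_fixed hr]
    · exact Or.inr (Or.inr ⟨y, hy, n, rfl⟩)
  · rintro (rfl | rfl | ⟨y, hy, n, rfl⟩)
    · exact ⟨x, Or.inl rfl, 0, rfl⟩
    · exact ⟨a, Or.inl rfl, 1, by simpa using ha⟩
    · exact ⟨y, Or.inr hy, n, rfl⟩

private lemma transport_equiv {T : Type u} {cs ct : Set T} (φ : ↥cs ≃ ↥ct)
    (P Q : Set T)
    (hPQ : ∀ x : ↥cs, (x : T) ∈ P → ((φ x : ↥ct) : T) ∈ Q)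
    (hQP : ∀ y : ↥ct, (y : T) ∈ Q → ((φ.symm y : ↥cs) : T) ∈ P) :
    ∃ e : ↥{a : ↥P | (a : T) ∈ cs} ≃ ↥{a : ↥Q | (a : T) ∈ ct},
      ∀ a : ↥{a : ↥P | (a : T) ∈ cs},
        ((e a : ↥Q) : T) = ((φ ⟨(a : T), a.2⟩ : ↥ct) : T) := by
  refine ⟨⟨fun a => ⟨⟨((φ ⟨(a : T), a.2⟩ : ↥ct) : T), hPQ _ a.1.2⟩, (φ ⟨(a : T), a.2⟩).2⟩,
    fun b => ⟨⟨((φ.symm ⟨(b : T), b.2⟩ : ↥cs) : T), hQP _ b.1.2⟩, (φ.symm ⟨(b : T), b.2⟩).2⟩,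
    ?_, ?_⟩, fun a => rfl⟩
  · intro a
    apply Subtype.ext; apply Subtype.ext
    simp
  · intro b
    apply Subtype.ext; apply Subtype.ext
    simp

/-- A countable tree `(T, f, r)` with predecessor function of height at most 2 is weakly
ultrahomogeneous iff all but finitely many elements of height 1 have an equal number of
successors. -/
-- auxiliary material above
theorem weaklyUltrahomogeneousPred_iff_of_height_le_two
    {T : Type u} [Countable T] (f : T → T) (r : T)
    (hr : f r = r)
    (hreach : ∀ a : T, ∃ n : ℕ, f^[n] a = r)
    (hacyc : ∀ (a : T) (m n : ℕ), m < n → f^[m] a = f^[n] a → f^[m] a = r)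
    (hht : ∀ a : T, f^[2] a = r) :
    WeaklyUltrahomogeneousPred f ↔
      ∃ k : Cardinal.{u},
        {a : T | (f a = r ∧ a ≠ r) ∧
          Cardinal.mk ↥{x : T | x ≠ a ∧ f x = a} ≠ k}.Finite := by
  classical
  have hff : ∀ x, f (f x) = r := by
    intro x
    have h := hht x
    rwa [Function.iterate_succ_apply, Function.iterate_one] at h
  constructor
  · rintro ⟨S, hSfin, hext⟩
    set C := clPred f S with hC
    have hCfin : C.Finite := clPred_finite hr hff hSfin
    have hCclos := clPred_fclosed f S
    have hSC : S ⊆ C := subset_clPred f S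
    by_cases hA : ∀ a : T, (f a = r ∧ a ≠ r) → a ∈ C
    · exact ⟨0, hCfin.subset fun a ha => hA a ha.1⟩
    push_neg at hA
    obtain ⟨a₀, ha₀A, ha₀C⟩ := hA
    -- key: for any a of height 1 outside C, succ sets of a₀ and a are equinumerous
    have hcard : ∀ a : T, (f a = r ∧ a ≠ r) → a ∉ C →
        Cardinal.mk ↥{x : T | x ≠ a₀ ∧ f x = a₀} = Cardinal.mk ↥{x : T | x ≠ a ∧ f x = a} := by
      intro a haA haC
      have ha₀R : a₀ ∉ insert r C := by
        simp only [Set.mem_insert_iff]; push_neg; exact ⟨ha₀A.2, ha₀C⟩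
      have haR : a ∉ insert r C := by
        simp only [Set.mem_insert_iff]; push_neg; exact ⟨haA.2, haC⟩
      have hcl₀ : clPred f (insert a₀ S) = insert a₀ (insert r C) :=
        clPred_insert f r hr a₀ ha₀A.1 S
      have hcl₁ : clPred f (insert a S) = insert a (insert r C) :=
        clPred_insert f r hr a haA.1 S
      have mem₀ : ∀ x : T, x ∈ clPred f (insert a₀ S) → x ≠ a₀ → x ∈ insert r C := by
        intro x hx hxa
        rw [hcl₀] at hx
        rcases hx with rfl | hx
        · exact absurd rfl hxa
        · exact hx
      have mem₁ : ∀ x : T, x ∈ clPred f (insert a S) → x ≠ a → x ∈ insert r C := by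
        intro x hx hxa
        rw [hcl₁] at hx
        rcases hx with rfl | hx
        · exact absurd rfl hxa
        · exact hx
      have haMem : a ∈ clPred f (insert a S) := by rw [hcl₁]; exact Or.inl rfl
      have ha₀Mem : a₀ ∈ clPred f (insert a₀ S) := by rw [hcl₀]; exact Or.inl rfl
      have hsub01 : insert r C ⊆ clPred f (insert a S) := by
        rw [hcl₁]; exact Set.subset_insert _ _
      have hsub00 : insert r C ⊆ clPred f (insert a₀ S) := by
        rw [hcl₀]; exact Set.subset_insert _ _
      set φ : ↥(clPred f (insert a₀ S)) ≃ ↥(clPred f (insert a S)) :=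
        { toFun := fun x => if h : (x : T) = a₀ then ⟨a, haMem⟩
            else ⟨(x : T), hsub01 (mem₀ _ x.2 h)⟩
          invFun := fun y => if h : (y : T) = a then ⟨a₀, ha₀Mem⟩
            else ⟨(y : T), hsub00 (mem₁ _ y.2 h)⟩
          left_inv := by
            intro x
            dsimp only
            by_cases h : (x : T) = a₀
            · rw [dif_pos h, dif_pos (show ((⟨a, haMem⟩ : ↥(clPred f (insert a S))) : T) = a from rfl)]
              exact Subtype.ext h.symm
            · rw [dif_neg h]
              have hne : (x : T) ≠ a := fun he => haR (he ▸ mem₀ _ x.2 h)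
              rw [dif_neg hne]
          right_inv := by
            intro y
            dsimp only
            by_cases h : (y : T) = a
            · rw [dif_pos h, dif_pos (show ((⟨a₀, ha₀Mem⟩ : ↥(clPred f (insert a₀ S))) : T) = a₀ from rfl)]
              exact Subtype.ext h.symm
            · rw [dif_neg h]
              have hne : (y : T) ≠ a₀ := fun he => ha₀R (he ▸ mem₁ _ y.2 h)
              rw [dif_neg hne] } with hφ
      have hφval : ∀ (x : ↥(clPred f (insert a₀ S))), (x : T) ≠ a₀ → ((φ x : _) : T) = x := by
        intro x h
        show ((if h : (x : T) = a₀ then _ else _ : ↥(clPred f (insert a S))) : T) = x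
        rw [dif_neg h]
      have hφa₀ : ((φ ⟨a₀, ha₀Mem⟩ : _) : T) = a := by
        show ((if h : (a₀ : T) = a₀ then _ else _ : ↥(clPred f (insert a S))) : T) = a
        rw [dif_pos rfl]
      obtain ⟨g, hgc, hgφ⟩ := hext (insert a₀ S) (insert a S) (hSfin.insert a₀) (hSfin.insert a)
        (fun x hx => ⟨x, Or.inr hx, 0, rfl⟩) (fun x hx => ⟨x, Or.inr hx, 0, rfl⟩) φ
        (by
          intro x y hyx
          by_cases h : (x : T) = a₀
          · have hy : (y : T) = r := by rw [hyx, h, ha₀A.1]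
            have hyne : (y : T) ≠ a₀ := by rw [hy]; exact fun he => ha₀A.2 he.symm
            rw [hφval y hyne, hy]
            have : φ x = ⟨a, haMem⟩ := by
              have : x = ⟨a₀, ha₀Mem⟩ := Subtype.ext h
              rw [this]; exact Subtype.ext hφa₀
            rw [this]
            exact haA.1.symm
          · have hyne : (y : T) ≠ a₀ := by
              intro he
              rcases mem₀ _ x.2 h with hxr | hxC
              · exact ha₀A.2 (by rw [← he, hyx, hxr, hr])
              · exact ha₀C (by rw [← he, hyx]; exact hCclos _ hxC)
            rw [hφval y hyne, hφval x h, hyx]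
        )
        (by
          intro x hx
          have : (x : T) ≠ a₀ := fun he => ha₀C (he ▸ hSC hx)
          exact hφval x this)
      have hga₀ : g a₀ = a := by
        have := hgφ ⟨a₀, ha₀Mem⟩
        rw [this, hφa₀]
      have hgc' : ∀ x, g.symm (f x) = f (g.symm x) := by
        intro x
        apply g.injective
        rw [Equiv.apply_symm_apply, hgc, Equiv.apply_symm_apply]
      refine Cardinal.mk_congr (g.subtypeEquiv ?_)
      intro x
      constructor
      · rintro ⟨h1, h2⟩
        refine ⟨fun he => h1 (g.injective (by rw [he, hga₀])), ?_⟩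
        rw [← hgc, h2, hga₀]
      · rintro ⟨h1, h2⟩
        have h3 : x ≠ a₀ := fun he => h1 (by rw [he, hga₀])
        refine ⟨h3, ?_⟩
        rw [← hgc] at h2
        have := g.injective (h2.trans hga₀.symm)
        exact this
    exact ⟨Cardinal.mk ↥{x : T | x ≠ a₀ ∧ f x = a₀}, hCfin.subset (by
      rintro a ⟨haA, hk⟩
      by_contra haC
      exact hk (hcard a haA haC).symm)⟩
  · -- backward direction
    rintro ⟨k, hfin⟩
    have hBadDef : {a : T | (f a = r ∧ a ≠ r) ∧
        Cardinal.mk ↥{x : T | x ≠ a ∧ f x = a} ≠ k}.Finite := hfin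
    refine ⟨insert r {a : T | (f a = r ∧ a ≠ r) ∧
        Cardinal.mk ↥{x : T | x ≠ a ∧ f x = a} ≠ k}, hfin.insert r, ?_⟩
    set Bad := {a : T | (f a = r ∧ a ≠ r) ∧
        Cardinal.mk ↥{x : T | x ≠ a ∧ f x = a} ≠ k} with hBadEq
    intro s t hsfin htfin hSs hSt φ Hcomm Hfix
    have hcsfin : (clPred f s).Finite := clPred_finite hr hff hsfin
    have hctfin : (clPred f t).Finite := clPred_finite hr hff htfin
    have hcsclos : ∀ x ∈ (clPred f s), f x ∈ (clPred f s) := clPred_fclosed f s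
    have hctclos : ∀ x ∈ (clPred f t), f x ∈ (clPred f t) := clPred_fclosed f t
    have hrs : r ∈ (clPred f s) := hSs (Set.mem_insert _ _)
    have hrt : r ∈ (clPred f t) := hSt (Set.mem_insert _ _)
    have hBadcs : Bad ⊆ (clPred f s) := fun a ha => hSs (Set.mem_insert_of_mem _ ha)
    have hBadct : Bad ⊆ (clPred f t) := fun a ha => hSt (Set.mem_insert_of_mem _ ha)
    have hφr : ((φ ⟨r, hrs⟩ : ↥(clPred f t)) : T) = r := Hfix ⟨r, hrs⟩ (Set.mem_insert _ _)
    have hφr' : ((φ.symm ⟨r, hrt⟩ : ↥(clPred f s)) : T) = r := by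
      have h1 : φ ⟨r, hrs⟩ = ⟨r, hrt⟩ := Subtype.ext hφr
      rw [← h1, Equiv.symm_apply_apply]
    have Hcomm' : ∀ y z : ↥(clPred f t), (z : T) = f y → ((φ.symm z : ↥(clPred f s)) : T) = f (φ.symm y) := by
      intro y z hz
      have h2 : f ((φ.symm y : ↥(clPred f s)) : T) ∈ (clPred f s) := hcsclos _ (φ.symm y).2
      have h3 := Hcomm (φ.symm y) ⟨f ((φ.symm y : ↥(clPred f s)) : T), h2⟩ rfl
      rw [Equiv.apply_symm_apply] at h3
      have h4 : φ ⟨f ((φ.symm y : ↥(clPred f s)) : T), h2⟩ = z := Subtype.ext (h3.trans hz.symm)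
      rw [← h4, Equiv.symm_apply_apply]
    have hφA : ∀ x : ↥(clPred f s), (x : T) ∈ lvl1 f r → ((φ x : ↥(clPred f t)) : T) ∈ lvl1 f r := by
      rintro x ⟨h1, h2⟩
      constructor
      · have h3 := Hcomm x ⟨r, hrs⟩ h1.symm
        rw [hφr] at h3
        exact h3.symm
      · intro h
        have h4 : φ x = ⟨r, hrt⟩ := Subtype.ext h
        have h5 : x = φ.symm ⟨r, hrt⟩ := by rw [← h4, Equiv.symm_apply_apply]
        exact h2 (by rw [h5, hφr'])
    have hφA' : ∀ y : ↥(clPred f t), (y : T) ∈ lvl1 f r → ((φ.symm y : ↥(clPred f s)) : T) ∈ lvl1 f r := by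
      rintro y ⟨h1, h2⟩
      constructor
      · have h3 := Hcomm' y ⟨r, hrt⟩ h1.symm
        rw [hφr'] at h3
        exact h3.symm
      · intro h
        have h4 : φ.symm y = ⟨r, hrs⟩ := Subtype.ext h
        have h5 : y = φ ⟨r, hrs⟩ := by rw [← h4, Equiv.apply_symm_apply]
        exact h2 (by rw [h5, hφr])
    have hφgood : ∀ x : ↥(clPred f s), (x : T) ∉ Bad → ((φ x : ↥(clPred f t)) : T) ∉ Bad := by
      intro x hxB hB
      have h1 : ((φ x : ↥(clPred f t)) : T) ∈ (clPred f s) := hBadcs hB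
      have h2 := Hfix ⟨((φ x : ↥(clPred f t)) : T), h1⟩ (Set.mem_insert_of_mem _ hB)
      have h3 : φ ⟨((φ x : ↥(clPred f t)) : T), h1⟩ = φ x := Subtype.ext h2
      have h4 := φ.injective h3
      exact hxB (by rw [show (x : T) = ((φ x : ↥(clPred f t)) : T) from (congrArg Subtype.val h4).symm]; exact hB)
    obtain ⟨e₁, he₁⟩ := transport_equiv φ (lvl1 f r) (lvl1 f r) hφA hφA'
    have hufin : {a : ↥(lvl1 f r) | (a : T) ∈ (clPred f s)}.Finite :=
      hcsfin.preimage Subtype.val_injective.injOn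
    obtain ⟨σ, hσ1, hσ2⟩ := extend_equiv (rfl : Cardinal.mk ↥(lvl1 f r) = Cardinal.mk ↥(lvl1 f r))
      {a : ↥(lvl1 f r) | (a : T) ∈ (clPred f s)} {a : ↥(lvl1 f r) | (a : T) ∈ (clPred f t)} hufin e₁
    have hσu : ∀ (a : ↥(lvl1 f r)) (ha : (a : T) ∈ (clPred f s)),
        ((σ a : ↥(lvl1 f r)) : T) = ((φ ⟨(a : T), ha⟩ : ↥(clPred f t)) : T) := by
      intro a ha
      rw [congrArg Subtype.val (hσ1 ⟨a, ha⟩)]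
      exact he₁ ⟨a, ha⟩
    have hσnot : ∀ a : ↥(lvl1 f r), (a : T) ∉ (clPred f s) → ((σ a : ↥(lvl1 f r)) : T) ∉ (clPred f t) :=
      fun a ha => hσ2 a ha
    have hgoodk : ∀ a : T, (f a = r ∧ a ≠ r) → a ∉ Bad →
        Cardinal.mk ↥(succs f a) = k := by
      intro a ha hB
      by_contra h
      exact hB ⟨ha, h⟩
    have hmk : ∀ a : ↥(lvl1 f r),
        Cardinal.mk ↥(succs f (a : T)) =
          Cardinal.mk ↥(succs f ((σ a : ↥(lvl1 f r)) : T)) := by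
      intro a
      by_cases hacs : (a : T) ∈ (clPred f s)
      · by_cases haB : (a : T) ∈ Bad
        · have h1 := hσu a hacs
          have h2 := Hfix ⟨(a : T), hacs⟩ (Set.mem_insert_of_mem _ haB)
          rw [h1, h2]
        · have hσgood : ((σ a : ↥(lvl1 f r)) : T) ∉ Bad := by
            rw [hσu a hacs]
            exact hφgood ⟨(a : T), hacs⟩ haB
          rw [hgoodk _ a.2 haB, hgoodk _ (σ a).2 hσgood]
      · have haB : (a : T) ∉ Bad := fun h => hacs (hBadcs h)
        have hσB : ((σ a : ↥(lvl1 f r)) : T) ∉ Bad := fun h => (hσnot a hacs) (hBadct h)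
        rw [hgoodk _ a.2 haB, hgoodk _ (σ a).2 hσB]
    have hE : ∀ a : ↥(lvl1 f r),
        ∃ e : ↥(succs f (a : T)) ≃ ↥(succs f ((σ a : ↥(lvl1 f r)) : T)),
          ∀ (x : ↥(succs f (a : T))) (hx : (x : T) ∈ (clPred f s)),
            ((e x : ↥(succs f ((σ a : ↥(lvl1 f r)) : T))) : T) = ((φ ⟨(x : T), hx⟩ : ↥(clPred f t)) : T) := by
      intro a
      by_cases hacs : (a : T) ∈ (clPred f s)
      · have hσa := hσu a hacs
        have hσct : ((σ a : ↥(lvl1 f r)) : T) ∈ (clPred f t) := by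
          rw [hσa]; exact (φ ⟨(a : T), hacs⟩).2
        have hsymma : φ.symm ⟨((σ a : ↥(lvl1 f r)) : T), hσct⟩ = ⟨(a : T), hacs⟩ := by
          rw [show (⟨((σ a : ↥(lvl1 f r)) : T), hσct⟩ : ↥(clPred f t)) = φ ⟨(a : T), hacs⟩ from
            Subtype.ext hσa, Equiv.symm_apply_apply]
        have hPQ : ∀ x : ↥(clPred f s), (x : T) ∈ succs f (a : T) →
            ((φ x : ↥(clPred f t)) : T) ∈ succs f ((σ a : ↥(lvl1 f r)) : T) := by
          rintro x ⟨hx1, hx2⟩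
          constructor
          · intro h
            have h6 : φ x = φ ⟨(a : T), hacs⟩ := Subtype.ext (by rw [h, hσa])
            exact hx1 (congrArg Subtype.val (φ.injective h6))
          · have h3 := Hcomm x ⟨(a : T), hacs⟩ hx2.symm
            rw [hσa]
            exact h3.symm
        have hQP : ∀ y : ↥(clPred f t), (y : T) ∈ succs f ((σ a : ↥(lvl1 f r)) : T) →
            ((φ.symm y : ↥(clPred f s)) : T) ∈ succs f (a : T) := by
          rintro y ⟨hy1, hy2⟩
          constructor
          · intro h
            have h6 : φ.symm y = φ.symm ⟨((σ a : ↥(lvl1 f r)) : T), hσct⟩ :=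
              Subtype.ext (h.trans (congrArg Subtype.val hsymma).symm)
            exact hy1 (congrArg Subtype.val (φ.symm.injective h6))
          · have h3 := Hcomm' y ⟨((σ a : ↥(lvl1 f r)) : T), hσct⟩ hy2.symm
            rw [hsymma] at h3
            exact h3.symm
        obtain ⟨e', he'⟩ := transport_equiv φ (succs f (a : T))
          (succs f ((σ a : ↥(lvl1 f r)) : T)) hPQ hQP
        have hufin' : {x : ↥(succs f (a : T)) | (x : T) ∈ (clPred f s)}.Finite :=
          hcsfin.preimage Subtype.val_injective.injOn
        obtain ⟨g, hg1, _⟩ := extend_equiv (hmk a) _ _ hufin' e'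
        refine ⟨g, ?_⟩
        intro x hx
        rw [congrArg Subtype.val (hg1 ⟨x, hx⟩)]
        exact he' ⟨x, hx⟩
      · obtain ⟨e⟩ := Cardinal.eq.mp (hmk a)
        refine ⟨e, fun x hx => absurd (?_ : (a : T) ∈ (clPred f s)) hacs⟩
        rw [← x.2.2]
        exact hcsclos _ hx
    choose E hEx using hE
    obtain ⟨g, hgcomm, hgr, hgA, hgS⟩ := build_auto f r hr hff σ E
    refine ⟨g, hgcomm, ?_⟩
    intro x
    by_cases hxr : (x : T) = r
    · rw [hxr, hgr]
      have hx1 : x = ⟨r, hrs⟩ := Subtype.ext hxr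
      rw [hx1, hφr]
    · by_cases hfx : f (x : T) = r
      · have ha : (x : T) ∈ lvl1 f r := ⟨hfx, hxr⟩
        rw [hgA ⟨(x : T), ha⟩, hσu ⟨(x : T), ha⟩ x.2]
      · have ha : f (x : T) ∈ lvl1 f r := ⟨hff _, hfx⟩
        have hxs : (x : T) ∈ succs f ((⟨f (x : T), ha⟩ : ↥(lvl1 f r)) : T) :=
          ⟨fun h => hfx (by rw [show f (x : T) = f (f (x : T)) from congrArg f h]; exact hff _), rfl⟩
        rw [hgS ⟨f (x : T), ha⟩ ⟨(x : T), hxs⟩, hEx ⟨f (x : T), ha⟩ ⟨(x : T), hxs⟩ x.2]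
end
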